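/- arXiv:1810.03299 — 5 statements merged into one kernel-verified Lean document; each statement's English description precedes it below -/
import Mathlib

section
/- For all integers n, k > 2, every tree with n vertices either has at least n/(4k) leaves or contains a collection of at least n/(4k) pairwise vertex-disjoint bare paths, each of length k. -/
/-!
Let `L` be the number of leaves and `b` the number of vertices of degree at least `3`. As a tree
on `n` vertices has `n - 1` edges, the degrees of the latter add up to `2b + L - 2`; in particular
`b < L`. The vertices of degree at most `2` span a disjoint union of paths, whose subpaths are
bare. Each of these paths ends, at both of its ends, in a leaf or in an edge to a vertex of degree
at least `3`, so there are fewer than `L + b` of them. Cutting a path with `ℓ` vertices into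
consecutive pieces of `k + 1` vertices loses at most `k` of them, so the pieces, `m` disjoint bare
paths of length `k`, satisfy `n ≤ (k + 1) m + k (L + b) + b ≤ (k + 1) m + (2k + 1) L`. For `k ≥ 2`
this forces `m ≥ n / 4k` unless `L ≥ n / 4k`.
-/

/-- A path (walk) in `T` is *bare* if each of its interior vertices (vertices of its
support other than the two endvertices) has degree exactly `2` in `T`. -/
def IsBareWalk {V : Type*} (T : SimpleGraph V) {u v : V} (p : T.Walk u v) : Prop :=
  ∀ w ∈ p.support, w ≠ u → w ≠ v → (T.neighborSet w).ncard = 2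

open Finset

namespace SimpleGraph

variable {V : Type*} {G : SimpleGraph V}

lemma ncard_neighborSet_eq_degree (v : V) [Fintype (G.neighborSet v)] :
    (G.neighborSet v).ncard = G.degree v := by
  rw [Set.ncard_eq_toFinset_card']
  rfl

namespace Walk

variable {u v w : V} {p : G.Walk u v}

lemma IsPath.ncard_neighborSet_toSubgraph_eq_two (hp : p.IsPath) (hw : w ∈ p.support)
    (hwu : w ≠ u) (hwv : w ≠ v) : (p.toSubgraph.neighborSet w).ncard = 2 := by
  obtain ⟨i, rfl, hi⟩ := mem_support_iff_exists_getVert.mp hw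
  exact hp.ncard_neighborSet_toSubgraph_internal_eq_two (by rintro rfl; simp at hwu)
    (hi.lt_of_ne (by rintro rfl; simp at hwv))

lemma IsPath.neighborSet_eq_toSubgraph_of_degree_le_two [Fintype (G.neighborSet w)]
    (hp : p.IsPath) (hw : w ∈ p.support) (hwu : w ≠ u) (hwv : w ≠ v) (hdeg : G.degree w ≤ 2) :
    G.neighborSet w = p.toSubgraph.neighborSet w := by
  refine (Set.eq_of_subset_of_ncard_le (Subgraph.neighborSet_subset _ _) ?_).symm
  rwa [ncard_neighborSet_eq_degree, hp.ncard_neighborSet_toSubgraph_eq_two hw hwu hwv]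

lemma IsPath.mem_support_of_adj_of_degree_le_two [Fintype (G.neighborSet w)]
    (hp : p.IsPath) (hw : w ∈ p.support) (hwu : w ≠ u) (hwv : w ≠ v) (hdeg : G.degree w ≤ 2)
    {x : V} (hx : G.Adj w x) : x ∈ p.support := by
  rw [← mem_neighborSet, hp.neighborSet_eq_toSubgraph_of_degree_le_two hw hwu hwv hdeg] at hx
  exact p.mem_support_of_adj_toSubgraph hx.symm

lemma IsPath.isBareWalk [G.LocallyFinite] (hp : p.IsPath)
    (hdeg : ∀ w ∈ p.support, G.degree w ≤ 2) : IsBareWalk G p := fun w hw hwu hwv => by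
  rw [hp.neighborSet_eq_toSubgraph_of_degree_le_two hw hwu hwv (hdeg w hw)]
  exact hp.ncard_neighborSet_toSubgraph_eq_two hw hwu hwv

end Walk

variable (k : ℕ) (S : Set V)

structure IsPathPacking (l : List (Σ a b : V, G.Walk a b)) : Prop where
  isPath : ∀ s ∈ l, s.2.2.IsPath
  length_eq : ∀ s ∈ l, s.2.2.length = k
  support_subset : ∀ s ∈ l, ∀ w ∈ s.2.2.support, w ∈ S
  pairwise_disjoint : l.Pairwise fun s t => s.2.2.support.Disjoint t.2.2.support

namespace IsPathPacking

variable {k S} {l l₁ l₂ : List (Σ a b : V, G.Walk a b)}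

lemma nil : IsPathPacking k S ([] : List (Σ a b : V, G.Walk a b)) :=
  ⟨by simp, by simp, by simp, List.Pairwise.nil⟩

lemma singleton {u v : V} {p : G.Walk u v} (hp : p.IsPath) (hk : p.length = k) :
    IsPathPacking k {w | w ∈ p.support} [⟨u, v, p⟩] :=
  ⟨by simpa, by simpa, by simp, List.pairwise_singleton _ _⟩

lemma mono (h : IsPathPacking k S l) {S' : Set V} (hS : S ⊆ S') : IsPathPacking k S' l :=
  ⟨h.isPath, h.length_eq, fun s hs w hw => hS (h.support_subset s hs w hw), h.pairwise_disjoint⟩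

lemma append {S₁ S₂ : Set V} (h₁ : IsPathPacking k S₁ l₁) (h₂ : IsPathPacking k S₂ l₂)
    (hS : Disjoint S₁ S₂) : IsPathPacking k (S₁ ∪ S₂) (l₁ ++ l₂) where
  isPath s hs := (List.mem_append.mp hs).elim (h₁.isPath s) (h₂.isPath s)
  length_eq s hs := (List.mem_append.mp hs).elim (h₁.length_eq s) (h₂.length_eq s)
  support_subset s hs w hw := (List.mem_append.mp hs).elim
    (fun hs => Or.inl (h₁.support_subset s hs w hw))
    (fun hs => Or.inr (h₂.support_subset s hs w hw))
  pairwise_disjoint := List.pairwise_append.mpr ⟨h₁.pairwise_disjoint, h₂.pairwise_disjoint,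
    fun s hs t ht w hws hwt =>
      hS.notMem_of_mem_left (h₁.support_subset s hs w hws) (h₂.support_subset t ht w hwt)⟩

lemma exists_indexed (h : IsPathPacking k S l) :
    ∃ (u v : Fin l.length → V) (P : (i : Fin l.length) → G.Walk (u i) (v i)),
      (∀ i, (P i).IsPath) ∧ (∀ i, (P i).length = k) ∧ (∀ i, ∀ w ∈ (P i).support, w ∈ S) ∧
      (∀ i j, i ≠ j → (P i).support.Disjoint (P j).support) := by
  refine ⟨fun i => (l.get i).1, fun i => (l.get i).2.1, fun i => (l.get i).2.2,
    fun i => h.isPath _ (l.get_mem i), fun i => h.length_eq _ (l.get_mem i),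
    fun i => h.support_subset _ (l.get_mem i), fun i j hij => ?_⟩
  have hpw := List.pairwise_iff_get.mp h.pairwise_disjoint
  rcases hij.lt_or_gt with hij | hij
  · exact hpw i j hij
  · exact (hpw j i hij).symm

end IsPathPacking

/-- Cutting a path into consecutive pieces of `k + 1` vertices wastes at most `k` vertices. -/
theorem Walk.IsPath.exists_isPathPacking {u v : V} {p : G.Walk u v} (hp : p.IsPath) :
    ∃ l : List (Σ a b : V, G.Walk a b),
      IsPathPacking k {w | w ∈ p.support} l ∧ p.length + 1 ≤ (k + 1) * l.length + k := by
  by_cases hlen : p.length < k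
  · exact ⟨[], .nil, by simp; omega⟩
  obtain ⟨w, q, r, hqr, hq⟩ : ∃ (w : V) (q : G.Walk u w) (r : G.Walk w v),
      q.append r = p ∧ q.length = k :=
    ⟨_, p.take k, p.drop k, p.append_take_drop_eq k, by simp [Walk.take_length]; omega⟩
  cases r with
  | nil =>
    rw [append_nil] at hqr
    subst hqr
    exact ⟨[⟨u, _, q⟩], .singleton hp hq, by simp [hq]⟩
  | cons h r' =>
    have hsupp : p.support = q.support ++ r'.support := by simp [← hqr, Walk.support_append]
    have hnodup := hp.support_nodup
    rw [hsupp, List.nodup_append] at hnodup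
    obtain ⟨l, hl, hlen⟩ := (Walk.IsPath.mk' hnodup.2.1).exists_isPathPacking
    refine ⟨⟨u, w, q⟩ :: l, ?_, ?_⟩
    · have := ((IsPathPacking.singleton (Walk.IsPath.mk' hnodup.1) hq).append hl
        (Set.disjoint_left.mpr fun x hx hx' => hnodup.2.2 x hx x hx' rfl))
      refine this.mono fun x => ?_
      simp [hsupp]
    · simp [← hqr, Walk.length_append] at hlen ⊢
      rw [hq]; nlinarith
termination_by p.length
decreasing_by simp [← hqr]; omega

section Finite

variable [Fintype V] [DecidableRel G.Adj]

lemma IsTree.sum_degree_add_two [Nontrivial V] (hG : G.IsTree) :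
    ∑ x with 2 < G.degree x, G.degree x + 2 =
      2 * #{x | 2 < G.degree x} + #{v | G.degree v = 1} := by
  have hpos : ∀ v, 0 < G.degree v := fun v => hG.connected.preconnected.degree_pos_of_nontrivial v
  have htotal : ∑ v, G.degree v + 2 = 2 * Fintype.card V := by
    rw [sum_degrees_eq_twice_card_edges, ← hG.card_edgeFinset]
    ring
  have hleaves :
      #{v | G.degree v = 1} = ∑ v with G.degree v ≤ 2, if G.degree v = 1 then 1 else 0 := by
    rw [sum_boole, filter_filter, Nat.cast_id]
    congr 1
    ext v
    simp only [mem_filter, mem_univ, true_and]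
    omega
  have hlight : ∑ v with G.degree v ≤ 2, G.degree v + #{v | G.degree v = 1} =
      2 * #{v | G.degree v ≤ 2} := by
    rw [hleaves, ← sum_add_distrib, card_eq_sum_ones, mul_sum]
    refine sum_congr rfl fun v hv => ?_
    have := hpos v
    have := (mem_filter.mp hv).2
    split_ifs <;> omega
  have hsplit :=
    sum_filter_add_sum_filter_not univ (fun v => G.degree v ≤ 2) (fun v => G.degree v)
  have hcard := card_filter_add_card_filter_not (s := univ) (fun v => G.degree v ≤ 2)
  simp only [not_le, card_univ] at hsplit hcard
  omega

variable (G) in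
/-- The number of ways a maximal path through vertices of degree at most `2` can stop at `v`:
`v` may be a leaf, and each neighbour of degree at least `3` is an exit. -/
def endWeight (v : V) : ℕ :=
  (if G.degree v = 1 then 1 else 0) + #{x ∈ G.neighborFinset v | 2 < G.degree x}

lemma one_le_endWeight_of_isPath (hG : G.IsAcyclic) {u v : V} {p : G.Walk u v} (hp : p.IsPath)
    (hnil : ¬p.Nil) (hu : ∀ x, G.Adj u x → x ∈ p.support ∨ 2 < G.degree x) :
    1 ≤ endWeight G u := by
  unfold endWeight
  by_cases h1 : G.degree u = 1
  · simp [h1]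
  have hpos : 0 < G.degree u := G.degree_pos_iff_exists_adj u |>.mpr ⟨_, p.adj_snd hnil⟩
  obtain ⟨x, hx, hxsnd⟩ := exists_mem_ne
    (by rw [G.card_neighborFinset_eq_degree u]; omega) p.snd
  have hadj : G.Adj u x := (G.mem_neighborFinset u x).mp hx
  have hxheavy : 2 < G.degree x :=
    (hu x hadj).resolve_left fun hxp => hxsnd (hG.eq_snd_of_adj_start hp hadj hxp)
  have : 0 < #{x ∈ G.neighborFinset u | 2 < G.degree x} :=
    card_pos.mpr ⟨x, mem_filter.mpr ⟨hx, hxheavy⟩⟩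
  omega

lemma two_le_endWeight {u : V} (hpos : 0 < G.degree u) (hu : ∀ x, G.Adj u x → 2 < G.degree x) :
    2 ≤ endWeight G u := by
  unfold endWeight
  rw [filter_true_of_mem fun x hx => hu x ((mem_neighborFinset _ _ _).mp hx),
    card_neighborFinset_eq_degree]
  split_ifs <;> omega

lemma sum_endWeight_le (s : Finset V) :
    ∑ v ∈ s, endWeight G v ≤ #{v | G.degree v = 1} + ∑ x with 2 < G.degree x, G.degree x := by
  simp only [endWeight, sum_add_distrib, sum_boole, Nat.cast_id]
  gcongr ?_ + ?_
  · exact card_le_card (filter_subset_filter _ (subset_univ s))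
  calc ∑ v ∈ s, #{x ∈ G.neighborFinset v | 2 < G.degree x}
      = ∑ v ∈ s, #(({x | 2 < G.degree x} : Finset V).bipartiteAbove G.Adj v) := by
        refine sum_congr rfl fun v _ => congrArg card ?_
        ext x
        simp [bipartiteAbove, and_comm]
    _ = ∑ x with 2 < G.degree x, #(s.bipartiteBelow G.Adj x) :=
        sum_card_bipartiteAbove_eq_sum_card_bipartiteBelow _
    _ ≤ ∑ x with 2 < G.degree x, G.degree x := by
        refine sum_le_sum fun x _ => ?_
        rw [← card_neighborFinset_eq_degree]
        refine card_le_card fun v hv => ?_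
        simpa [bipartiteBelow, adj_comm] using (mem_filter.mp hv).2

variable [DecidableEq V]

/-- A longest path inside `S` cannot be prolonged within `S` at either end. -/
lemma exists_isPath_inextensible {S : Finset V} {x₀ : V} (hx₀ : x₀ ∈ S) :
    ∃ (u v : V) (p : G.Walk u v), p.IsPath ∧ (∀ w ∈ p.support, w ∈ S) ∧
      (∀ x ∈ S, G.Adj u x → x ∈ p.support) ∧ (∀ x ∈ S, G.Adj v x → x ∈ p.support) := by
  let paths : Finset (Σ a b : V, G.Path a b) := {q | ∀ w ∈ q.2.2.1.support, w ∈ S}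
  obtain ⟨⟨u, v, p, hp⟩, hpS, hmax⟩ := paths.exists_max_image (fun q => q.2.2.1.length)
    ⟨⟨x₀, x₀, Path.nil⟩, by simp [paths, hx₀]⟩
  simp only [paths, mem_filter, mem_univ, true_and] at hpS hmax
  have hend : ∀ {a b : V} (q : G.Walk a b), q.IsPath → (∀ w ∈ q.support, w ∈ S) →
      q.length = p.length → ∀ x ∈ S, G.Adj a x → x ∈ q.support := by
    intro a b q hq hqS hlen x hx hax
    by_contra hxq
    have := hmax ⟨x, b, ⟨Walk.cons hax.symm q, hq.cons hxq⟩⟩ (by simpa [hx] using hqS)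
    simp only [Walk.length_cons] at this
    omega
  exact ⟨u, v, p, hp, hpS, hend p hp hpS rfl,
    by simpa using hend p.reverse hp.reverse (by simpa using hpS) (by simp)⟩

lemma two_le_sum_endWeight_of_isPath (hG : G.IsAcyclic) {u v : V} {p : G.Walk u v}
    (hp : p.IsPath) (hpos : 0 < G.degree u)
    (hu : ∀ x, G.Adj u x → x ∈ p.support ∨ 2 < G.degree x)
    (hv : ∀ x, G.Adj v x → x ∈ p.support ∨ 2 < G.degree x) :
    2 ≤ ∑ w ∈ p.support.toFinset, endWeight G w := by
  by_cases hnil : p.Nil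
  · have hsupp := Walk.nil_iff_support_eq.mp hnil
    rw [hsupp, List.toFinset_cons, List.toFinset_nil, insert_empty_eq, sum_singleton]
    refine two_le_endWeight hpos fun x hx => (hu x hx).resolve_left fun hxp => ?_
    rw [hsupp, List.mem_singleton] at hxp
    exact G.loopless.irrefl u (hxp ▸ hx)
  have huv : u ≠ v := fun h => hnil (hp.nil_iff_eq.mpr h)
  calc 2 ≤ endWeight G u + endWeight G v :=
        add_le_add (one_le_endWeight_of_isPath hG hp hnil hu)
          (one_le_endWeight_of_isPath hG hp.reverse (by rwa [Walk.nil_reverse])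
            (by simpa using hv))
    _ = ∑ w ∈ {u, v}, endWeight G w := (sum_pair huv).symm
    _ ≤ ∑ w ∈ p.support.toFinset, endWeight G w :=
        sum_le_sum_of_subset (by simp [insert_subset_iff])

/-- Peel off a longest path of `S`, which is a whole component of the subgraph spanned by `S`,
cut it into pieces, and recurse: every peeled path carries end weight at least `2`, which pays
for the `k` vertices wasted in cutting it. -/
theorem exists_isPathPacking_of_degree_le_two (hG : G.IsAcyclic) (k : ℕ) (S : Finset V)
    (hpos : ∀ v ∈ S, 0 < G.degree v) (hle : ∀ v ∈ S, G.degree v ≤ 2)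
    (hclosed : ∀ v ∈ S, ∀ x, G.Adj v x → x ∈ S ∨ 2 < G.degree x) :
    ∃ l : List (Σ a b : V, G.Walk a b), IsPathPacking k S l ∧
      2 * #S ≤ 2 * (k + 1) * l.length + k * ∑ v ∈ S, endWeight G v := by
  induction S using Finset.strongInduction with
  | H S ih =>
  rcases S.eq_empty_or_nonempty with rfl | ⟨x₀, hx₀⟩
  · exact ⟨[], .nil, by simp⟩
  obtain ⟨u, v, p, hp, hpS, hu, hv⟩ := exists_isPath_inextensible (G := G) hx₀
  have hcomp : ∀ w ∈ p.support, ∀ x ∈ S, G.Adj w x → x ∈ p.support := by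
    intro w hw x hx hwx
    by_cases hwu : w = u
    · exact hu x hx (hwu ▸ hwx)
    by_cases hwv : w = v
    · exact hv x hx (hwv ▸ hwx)
    exact hp.mem_support_of_adj_of_degree_le_two hw hwu hwv (hle w (hpS w hw)) hwx
  have hexit : ∀ w ∈ p.support, ∀ x, G.Adj w x → x ∈ p.support ∨ 2 < G.degree x :=
    fun w hw x hwx => (hclosed w (hpS w hw) x hwx).imp_left (hcomp w hw x · hwx)
  set P := p.support.toFinset
  have hPS : P ⊆ S := fun w hw => hpS w (List.mem_toFinset.mp hw)
  have hcardP : #P = p.length + 1 := by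
    rw [List.toFinset_card_of_nodup hp.support_nodup, Walk.length_support]
  have hweightP : 2 ≤ ∑ w ∈ P, endWeight G w :=
    two_le_sum_endWeight_of_isPath hG hp (hpos u (hpS u p.start_mem_support))
      (hexit u p.start_mem_support) (hexit v p.end_mem_support)
  obtain ⟨l₁, hl₁, hlen₁⟩ := hp.exists_isPathPacking k
  obtain ⟨l₂, hl₂, hlen₂⟩ := ih (S \ P) (sdiff_ssubset hPS ⟨u, by simp [P]⟩)
    (fun w hw => hpos w (sdiff_subset hw)) (fun w hw => hle w (sdiff_subset hw))
    (fun w hw x hwx => by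
      simp only [mem_sdiff, P, List.mem_toFinset] at hw ⊢
      refine (hclosed w hw.1 x hwx).imp_left fun hx => ⟨hx, fun hxp => hw.2 ?_⟩
      exact hcomp x hxp w hw.1 hwx.symm)
  refine ⟨l₁ ++ l₂, (hl₁.append hl₂ ?_).mono ?_, ?_⟩
  · exact Set.disjoint_left.mpr fun x hx hx' => (mem_sdiff.mp hx').2 (List.mem_toFinset.mpr hx)
  · rintro x (hx | hx)
    · exact hpS x hx
    · exact sdiff_subset hx
  · have hcard : #S = #(S \ P) + #P := (card_sdiff_add_card_eq_card hPS).symm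
    have hsum := (sum_sdiff hPS (f := endWeight G)).symm
    rw [hcard, hsum, List.length_append]
    nlinarith

theorem IsTree.exists_isPathPacking [Nontrivial V] (hG : G.IsTree) (k : ℕ) :
    ∃ l : List (Σ a b : V, G.Walk a b), IsPathPacking k {v | G.degree v ≤ 2} l ∧
      Fintype.card V ≤ (k + 1) * l.length + (2 * k + 1) * #{v | G.degree v = 1} := by
  have hpos : ∀ v, 0 < G.degree v := fun v => hG.connected.preconnected.degree_pos_of_nontrivial v
  obtain ⟨l, hl, hlen⟩ := exists_isPathPacking_of_degree_le_two hG.isAcyclic k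
    {v | G.degree v ≤ 2} (fun v _ => hpos v) (fun v hv => (mem_filter.mp hv).2)
    (fun v _ x _ => by simpa using le_or_gt (G.degree x) 2)
  refine ⟨l, by simpa using hl, ?_⟩
  have hcard := card_filter_add_card_filter_not (s := univ) (fun v => G.degree v ≤ 2)
  simp only [not_le, card_univ] at hcard
  have hweight := sum_endWeight_le (G := G) {v | G.degree v ≤ 2}
  have hdeg := hG.sum_degree_add_two
  have hheavy : 3 * #{x | 2 < G.degree x} ≤ ∑ x with 2 < G.degree x, G.degree x := by
    simpa [mul_comm] using card_nsmul_le_sum {x | 2 < G.degree x} (fun x => G.degree x) 3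
      fun x hx => Nat.succ_le_of_lt (mem_filter.mp hx).2
  nlinarith

end Finite

end SimpleGraph

open SimpleGraph

/-- For all integers `n, k > 2`, every tree with `n` vertices either has at least
`n/(4k)` leaves, or contains at least `n/(4k)` pairwise vertex-disjoint bare paths,
each of length `k`. -/
theorem statement_1 (n k : ℕ) (hn : 2 < n) (hk : 2 < k)
    (T : SimpleGraph (Fin n)) (hT : T.IsTree) :
    (n : ℝ) / (4 * k) ≤ ({v : Fin n | (T.neighborSet v).ncard = 1}).ncard ∨
    ∃ m : ℕ, (n : ℝ) / (4 * k) ≤ m ∧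
      ∃ (u v : Fin m → Fin n) (P : (i : Fin m) → T.Walk (u i) (v i)),
        (∀ i, (P i).IsPath) ∧
        (∀ i, (P i).length = k) ∧
        (∀ i, IsBareWalk T (P i)) ∧
        (∀ i j, i ≠ j → List.Disjoint (P i).support (P j).support) := by
  classical
  have : Nontrivial (Fin n) := Fin.nontrivial_iff_two_le.mpr hn.le
  obtain ⟨l, hl, hcard⟩ := hT.exists_isPathPacking k
  have hleaves : ({v : Fin n | (T.neighborSet v).ncard = 1}).ncard = #{v | T.degree v = 1} := by
    simp [ncard_neighborSet_eq_degree, ← Set.ncard_coe_finset]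
  rw [Fintype.card_fin] at hcard
  have hk4 : (0 : ℝ) < 4 * k := by positivity
  simp_rw [hleaves, div_le_iff₀ hk4]
  by_cases hL : (n : ℝ) ≤ #{v | T.degree v = 1} * (4 * k)
  · exact .inl hL
  obtain ⟨u, v, P, hpath, hlen, hsupp, hdisj⟩ := hl.exists_indexed
  refine .inr ⟨l.length, ?_, u, v, P, hpath, hlen, fun i => (hpath i).isBareWalk (hsupp i), hdisj⟩
  have hkR : (3 : ℝ) ≤ k := by exact_mod_cast hk
  have hcardR : (n : ℝ) ≤ (k + 1) * l.length + (2 * k + 1) * #{v | T.degree v = 1} := by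
    exact_mod_cast hcard
  nlinarith
end

section
/- Let n, k, d be positive integers with n ≥ 60k and k ≥ 4d. If a tree T with n vertices has at most n/(5d) leaves, then T either contains a 2d-separated set of at least n/(40k) leaves, or a collection of at least n/(40k) pairwise vertex-disjoint bare paths of length k. -/
namespace TreeAux
open SimpleGraph Walk Finset

attribute [local instance] Classical.propDecidable

variable {n : ℕ} {T : SimpleGraph (Fin n)}

/-- the canonical path between two vertices of a tree -/
noncomputable def pb (hT : T.IsTree) (a b : Fin n) : T.Walk a b :=
  (hT.existsUnique_path a b).choose

lemma pb_isPath (hT : T.IsTree) (a b : Fin n) : (pb hT a b).IsPath :=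
  (hT.existsUnique_path a b).choose_spec.1

lemma pb_unique (hT : T.IsTree) {a b : Fin n} (p : T.Walk a b) (hp : p.IsPath) :
    p = pb hT a b :=
  (hT.existsUnique_path a b).choose_spec.2 p hp

lemma pb_length (hT : T.IsTree) (a b : Fin n) : (pb hT a b).length = T.dist a b := by
  obtain ⟨p, hp, hl⟩ := hT.isConnected.exists_path_of_dist a b
  rw [← pb_unique hT p hp] at *
  exact hl

lemma pb_nil (hT : T.IsTree) (a : Fin n) : pb hT a a = Walk.nil :=
  (pb_unique hT Walk.nil (IsPath.nil)).symm

lemma pb_reverse (hT : T.IsTree) (a b : Fin n) : (pb hT a b).reverse = pb hT b a :=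
  pb_unique hT _ ((pb_isPath hT a b).reverse)

lemma mem_pb_reverse (hT : T.IsTree) {a b v : Fin n} :
    v ∈ (pb hT a b).support ↔ v ∈ (pb hT b a).support := by
  rw [← pb_reverse hT a b, Walk.support_reverse, List.mem_reverse]

/-- prefix of canonical path is canonical -/
lemma pb_takeUntil (hT : T.IsTree) {a b v : Fin n} (hv : v ∈ (pb hT a b).support) :
    (pb hT a b).takeUntil v hv = pb hT a v :=
  pb_unique hT _ ((pb_isPath hT a b).takeUntil hv)

lemma pb_dropUntil (hT : T.IsTree) {a b v : Fin n} (hv : v ∈ (pb hT a b).support) :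
    (pb hT a b).dropUntil v hv = pb hT v b :=
  pb_unique hT _ ((pb_isPath hT a b).dropUntil hv)

/-- distance additivity along a path -/
lemma mem_pb_dist (hT : T.IsTree) {a b v : Fin n} (hv : v ∈ (pb hT a b).support) :
    T.dist a v + T.dist v b = T.dist a b := by
  have h := congrArg Walk.length ((pb hT a b).take_spec hv)
  rw [Walk.length_append, pb_takeUntil hT hv, pb_dropUntil hT hv,
    pb_length, pb_length, pb_length] at h
  exact h

lemma support_pb_takeUntil_subset (hT : T.IsTree) {a b v : Fin n}
    (hv : v ∈ (pb hT a b).support) : (pb hT a v).support ⊆ (pb hT a b).support := by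
  rw [← pb_takeUntil hT hv]
  exact Walk.support_takeUntil_subset _ hv

/-- position on a path is determined by distance from an end -/
lemma pb_position (hT : T.IsTree) {a b v w : Fin n} (hv : v ∈ (pb hT a b).support)
    (hw : w ∈ (pb hT a b).support) (hd : T.dist a v = T.dist a w) : v = w := by
  have hsplit := (pb hT a b).take_spec hw
  have : v ∈ ((pb hT a b).takeUntil w hw).support ∨
      v ∈ ((pb hT a b).dropUntil w hw).support := by
    rw [← Walk.mem_support_append_iff, hsplit]; exact hv
  have hzero : T.dist v w = 0 := by
    rcases this with h | h
    · rw [pb_takeUntil hT hw] at h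
      have h1 := mem_pb_dist hT h
      have : T.dist v w = T.dist w v := SimpleGraph.dist_comm
      omega
    · rw [pb_dropUntil hT hw] at h
      have h1 := mem_pb_dist hT h
      have h2 := mem_pb_dist hT hv
      have h3 := mem_pb_dist hT hw
      have : T.dist v w = T.dist w v := SimpleGraph.dist_comm
      omega
  have := hT.isConnected.dist_eq_zero_iff (u := v) (v := w)
  rw [this] at hzero; exact hzero


lemma dist_adj (hT : T.IsTree) {x y : Fin n} (h : T.Adj x y) : T.dist x y = 1 :=
  (SimpleGraph.dist_eq_one_iff_adj).2 h

/-- extending a geodesic by an edge going away from `a` gives the canonical path -/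
lemma pb_concat (hT : T.IsTree) {a x w : Fin n} (h : T.Adj x w)
    (hd : T.dist a w = T.dist a x + 1) :
    (pb hT a x).concat h = pb hT a w := by
  apply pb_unique
  have hnot : w ∉ (pb hT a x).support := by
    intro hw
    have := mem_pb_dist hT hw
    omega
  have : ((pb hT a x).concat h).reverse.IsPath := by
    rw [Walk.reverse_concat]
    exact ((pb_isPath hT a x).reverse).cons (by
      rwa [Walk.support_reverse, List.mem_reverse])
  rwa [Walk.isPath_reverse_iff] at this

/-- adjacent vertices have distance differing by exactly one from any root -/
lemma adj_dist_step (hT : T.IsTree) (a : Fin n) {x y : Fin n} (h : T.Adj x y) :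
    T.dist a y = T.dist a x + 1 ∨ T.dist a x = T.dist a y + 1 := by
  have h1 : T.dist a y ≤ T.dist a x + 1 := by
    have := hT.isConnected.dist_triangle (u := a) (v := x) (w := y)
    rwa [dist_adj hT h] at this
  have h2 : T.dist a x ≤ T.dist a y + 1 := by
    have := hT.isConnected.dist_triangle (u := a) (v := y) (w := x)
    rwa [dist_adj hT h.symm] at this
  rcases Nat.lt_trichotomy (T.dist a x) (T.dist a y) with hlt | heq | hgt
  · left; omega
  · exfalso
    have hnot : y ∉ (pb hT a x).support := by
      intro hy
      have h3 := mem_pb_dist hT hy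
      have h4 : T.dist y x = 1 := dist_adj hT h.symm
      omega
    have hpath : ((pb hT a x).concat h).reverse.IsPath := by
      rw [Walk.reverse_concat]
      exact ((pb_isPath hT a x).reverse).cons (by
        rwa [Walk.support_reverse, List.mem_reverse])
    rw [Walk.isPath_reverse_iff] at hpath
    have := congrArg Walk.length (pb_unique hT _ hpath)
    rw [Walk.length_concat, pb_length, pb_length] at this
    omega
  · right; omega

/-- the unique neighbour of `x` closer to `a` lies on the canonical path -/
lemma pred_mem_pb (hT : T.IsTree) {a x z : Fin n} (h : T.Adj z x)
    (hd : T.dist a z + 1 = T.dist a x) : z ∈ (pb hT a x).support := by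
  rw [← pb_concat hT h hd.symm]
  rw [Walk.support_concat, List.mem_append]
  left; exact Walk.end_mem_support _

lemma pred_unique (hT : T.IsTree) {a x z z' : Fin n} (hz : T.Adj z x) (hz' : T.Adj z' x)
    (hd : T.dist a z + 1 = T.dist a x) (hd' : T.dist a z' + 1 = T.dist a x) : z = z' :=
  pb_position hT (pred_mem_pb hT hz hd) (pred_mem_pb hT hz' hd') (by omega)

/-- a non-backtracking sequence in a tree is a geodesic -/
lemma geodesic_ray (hT : T.IsTree) (c : ℕ → Fin n) (t : ℕ)
    (hadj : ∀ i, i + 1 ≤ t → T.Adj (c i) (c (i + 1)))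
    (hnb : ∀ i, i + 2 ≤ t → c (i + 2) ≠ c i) :
    ∀ i, i ≤ t → T.dist (c 0) (c i) = i := by
  intro i
  induction i using Nat.strong_induction_on with
  | _ i ih =>
    intro hit
    match i, hit with
    | 0, _ => simp
    | 1, h1 => exact dist_adj hT (hadj 0 (by omega))
    | (j+2), hit =>
      have hd1 : T.dist (c 0) (c (j+1)) = j + 1 := ih (j+1) (by omega) (by omega)
      have hdj : T.dist (c 0) (c j) = j := ih j (by omega) (by omega)
      have e2 : j + 1 + 1 = j + 2 := by omega
      have hadj2 : T.Adj (c (j+1)) (c (j+2)) := by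
        rw [← e2]; exact hadj (j+1) (by omega)
      rcases adj_dist_step hT (c 0) hadj2 with h | h
      · omega
      · exfalso
        have heq : c (j + 2) = c j := by
          refine pred_unique hT (a := c 0) (x := c (j+1))
            hadj2.symm (hadj j (by omega)) ?_ ?_
          · omega
          · omega
        exact hnb j (by omega) heq

lemma geodesic_ray_ne (hT : T.IsTree) (c : ℕ → Fin n) (t : ℕ)
    (hadj : ∀ i, i + 1 ≤ t → T.Adj (c i) (c (i + 1)))
    (hnb : ∀ i, i + 2 ≤ t → c (i + 2) ≠ c i) :
    ∀ i j, i < j → j ≤ t → c i ≠ c j := by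
  intro i j hij hjt
  intro hceq
  have h := geodesic_ray hT (fun l => c (i + l)) (t - i)
    (fun l hl => by
      show T.Adj (c (i + l)) (c (i + (l + 1)))
      have e : i + (l + 1) = (i + l) + 1 := by omega
      rw [e]; exact hadj (i + l) (by omega))
    (fun l hl => by
      show c (i + (l + 2)) ≠ c (i + l)
      have e : i + (l + 2) = (i + l) + 2 := by omega
      rw [e]; exact hnb (i + l) (by omega)) (j - i) (by omega)
  have e1 : i + (j - i) = j := by omega
  simp only [Nat.add_zero, e1] at h
  rw [← hceq] at h
  simp [SimpleGraph.dist_self] at h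
  omega

/-- distance of the `j`-th vertex of a canonical path from its start -/
lemma pb_getVert_dist (hT : T.IsTree) (a b : Fin n) {j : ℕ}
    (hj : j ≤ (pb hT a b).length) : T.dist a ((pb hT a b).getVert j) = j := by
  have hup : ∀ i, i ≤ (pb hT a b).length → T.dist a ((pb hT a b).getVert i) ≤ i := by
    intro i
    induction i with
    | zero => intro _; simp [Walk.getVert_zero, SimpleGraph.dist_self]
    | succ i ih =>
      intro hi
      have h1 := ih (by omega)
      have hadj := (pb hT a b).adj_getVert_succ (i := i) (by omega)
      have := hT.isConnected.dist_triangle (u := a) (v := (pb hT a b).getVert i)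
        (w := (pb hT a b).getVert (i+1))
      rw [dist_adj hT hadj] at this
      omega
  have hdown : ∀ i, ∀ j, j + i = (pb hT a b).length →
      (pb hT a b).length - i ≤ T.dist a ((pb hT a b).getVert j) := by
    intro i
    induction i with
    | zero =>
      intro j hj
      have : (pb hT a b).getVert j = b := by
        have : j = (pb hT a b).length := by omega
        rw [this, Walk.getVert_length]
      rw [this]; rw [← pb_length hT a b]; omega
    | succ i ih =>
      intro j hj
      have h1 := ih (j+1) (by omega)
      have hadj := (pb hT a b).adj_getVert_succ (i := j) (by omega)
      have := hT.isConnected.dist_triangle (u := a) (v := (pb hT a b).getVert j)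
        (w := (pb hT a b).getVert (j+1))
      rw [dist_adj hT hadj] at this
      omega
  have h1 := hup j hj
  have h2 := hdown ((pb hT a b).length - j) j (by omega)
  omega

lemma pb_getVert_mem (hT : T.IsTree) (a b : Fin n) {j : ℕ} (hj : j ≤ (pb hT a b).length) :
    (pb hT a b).getVert j ∈ (pb hT a b).support :=
  Walk.mem_support_iff_exists_getVert.2 ⟨j, rfl, hj⟩

/-- Y-lemma: the path from `a` to `c` is contained in the union of paths through `b`. -/
lemma pb_Y (hT : T.IsTree) (a b c : Fin n) {v : Fin n} (hv : v ∈ (pb hT a c).support) :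
    v ∈ (pb hT a b).support ∨ v ∈ (pb hT b c).support := by
  have hb : ((pb hT a b).append (pb hT b c)).bypass.IsPath := Walk.bypass_isPath _
  have := pb_unique hT _ hb
  rw [← this] at hv
  have := Walk.support_bypass_subset _ hv
  rwa [Walk.mem_support_append_iff] at this


/-- degree as used in the problem statement -/
noncomputable def dg (T : SimpleGraph (Fin n)) (x : Fin n) : ℕ := (T.neighborSet x).ncard

lemma dg_eq_card (T : SimpleGraph (Fin n)) (x : Fin n) :
    dg T x = (univ.filter (fun y => T.Adj x y)).card := by
  rw [dg, show T.neighborSet x = ↑(univ.filter (fun y => T.Adj x y)) from by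
    ext y; simp [SimpleGraph.mem_neighborSet], Set.ncard_coe_finset]

lemma exists_adj (hT : T.IsTree) (h2 : 2 ≤ n) (x : Fin n) : ∃ y, T.Adj x y := by
  have hne : ∃ z : Fin n, z ≠ x := by
    by_cases hx : x = ⟨0, by omega⟩
    · exact ⟨⟨1, by omega⟩, by subst hx; intro h; simp [Fin.ext_iff] at h⟩
    · exact ⟨⟨0, by omega⟩, fun h => hx h.symm⟩
  obtain ⟨z, hz⟩ := hne
  obtain ⟨p⟩ := hT.isConnected.preconnected x z
  have hlen : 0 < p.length := by
    rcases Nat.eq_zero_or_pos p.length with h | h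
    · exact absurd (Walk.eq_of_length_eq_zero h).symm hz.elim
    · exact h
  have := p.adj_getVert_succ (i := 0) hlen
  rw [Walk.getVert_zero] at this
  exact ⟨_, this⟩

lemma ext_to_leaf (hT : T.IsTree) (h2 : 2 ≤ n) (r v : Fin n) :
    ∃ u, dg T u = 1 ∧ v ∈ (pb hT r u).support := by
  classical
  set F : Finset (Fin n) := univ.filter (fun u => v ∈ (pb hT r u).support) with hF
  have hvF : v ∈ F := by
    simp only [hF, mem_filter, mem_univ, true_and]
    exact Walk.end_mem_support _
  obtain ⟨u, huF, hmax⟩ := F.exists_max_image (fun u => T.dist r u) ⟨v, hvF⟩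
  have huv : v ∈ (pb hT r u).support := by
    simpa only [hF, mem_filter, mem_univ, true_and] using huF
  have hur : u ≠ r := by
    intro hur
    subst hur
    have hvr : v = u := by
      have := huv
      rw [pb_nil hT u] at this
      simpa [Walk.support_nil] using this
    obtain ⟨y, hy⟩ := exists_adj hT h2 u
    have hyF : y ∈ F := by
      simp only [hF, mem_filter, mem_univ, true_and]
      rw [hvr]
      exact Walk.start_mem_support _
    have := hmax y hyF
    rw [SimpleGraph.dist_self] at this
    have h1 : T.dist u y = 1 := dist_adj hT hy
    omega
  have hpred : ∀ w, T.Adj u w → T.dist r w + 1 = T.dist r u := by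
    intro w hw
    rcases adj_dist_step hT r hw with h | h
    · exfalso
      have hcc := pb_concat hT hw h
      have hvw : v ∈ (pb hT r w).support := by
        rw [← hcc, Walk.support_concat, List.mem_append]
        left; exact huv
      have hwF : w ∈ F := by simp only [hF, mem_filter, mem_univ, true_and]; exact hvw
      have := hmax w hwF
      omega
    · omega
  obtain ⟨y, hy⟩ := exists_adj hT h2 u
  refine ⟨u, ?_, huv⟩
  have : T.neighborSet u = {y} := by
    ext z
    simp only [SimpleGraph.mem_neighborSet, Set.mem_singleton_iff]
    constructor
    · intro hz
      exact pred_unique hT (hz.symm) (hy.symm) (hpred z hz) (hpred y hy)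
    · intro hz; subst hz; exact hy
  rw [dg, this, Set.ncard_singleton]

lemma exists_leaf (hT : T.IsTree) (h2 : 2 ≤ n) : ∃ u, dg T u = 1 := by
  obtain ⟨u, hu, _⟩ := ext_to_leaf hT h2 ⟨0, by omega⟩ ⟨0, by omega⟩
  exact ⟨u, hu⟩

/-- building an actual walk from a non-backtracking chain -/
lemma exists_chain_walk (hT : T.IsTree) (c : ℕ → Fin n) (t : ℕ)
    (hadj : ∀ i, i + 1 ≤ t → T.Adj (c i) (c (i + 1)))
    (hnb : ∀ i, i + 2 ≤ t → c (i + 2) ≠ c i) :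
    ∃ p : T.Walk (c 0) (c t), p.IsPath ∧ p.length = t ∧
      (∀ w, w ∈ p.support ↔ ∃ i, i ≤ t ∧ w = c i) := by
  have main : ∀ r j, j + r = t → ∃ p : T.Walk (c j) (c t), p.length = r ∧
      (∀ w, w ∈ p.support ↔ ∃ i, j ≤ i ∧ i ≤ t ∧ w = c i) ∧ p.IsPath := by
    intro r
    induction r with
    | zero =>
      intro j hj
      have hjt : j = t := by omega
      subst hjt
      refine ⟨Walk.nil, rfl, ?_, IsPath.nil⟩
      intro w
      simp only [Walk.support_nil, List.mem_singleton]
      constructor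
      · intro h; exact ⟨j, le_refl _, le_refl _, h⟩
      · rintro ⟨i, h1, h2, rfl⟩; congr 1; omega
    | succ r ih =>
      intro j hj
      obtain ⟨p', hl', hs', hp'⟩ := ih (j+1) (by omega)
      have hja : T.Adj (c j) (c (j+1)) := hadj j (by omega)
      have hnotmem : c j ∉ p'.support := by
        intro hmem
        rw [hs' (c j)] at hmem
        obtain ⟨i, hi1, hi2, hi3⟩ := hmem
        exact geodesic_ray_ne hT c t hadj hnb j i (by omega) hi2 hi3
      refine ⟨Walk.cons hja p', by simp [Walk.length_cons, hl'], ?_, hp'.cons hnotmem⟩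
      intro w
      simp only [Walk.support_cons, List.mem_cons, hs']
      constructor
      · rintro (rfl | ⟨i, h1, h2, rfl⟩)
        · exact ⟨j, le_refl _, by omega, rfl⟩
        · exact ⟨i, by omega, h2, rfl⟩
      · rintro ⟨i, h1, h2, rfl⟩
        rcases Nat.eq_or_lt_of_le h1 with h | h
        · left; rw [← h]
        · right; exact ⟨i, by omega, h2, rfl⟩
  obtain ⟨p, h1, h2, h3⟩ := main t 0 (by omega)
  refine ⟨p, h3, h1, fun w => ?_⟩
  rw [h2 w]
  constructor
  · rintro ⟨i, _, h4, h5⟩; exact ⟨i, h4, h5⟩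
  · rintro ⟨i, h4, h5⟩; exact ⟨i, by omega, h4, h5⟩


/-! ## Main construction -/

section Main

variable (hT : T.IsTree) (Q : Finset (Fin n)) (q₀ : Fin n)

/-- the skeleton: union of the canonical paths from `q₀` to members of `Q` -/
noncomputable def SS : Finset (Fin n) :=
  univ.filter (fun x => ∃ q' ∈ Q, x ∈ (pb hT q₀ q').support)

lemma mem_SS_iff {x : Fin n} : x ∈ SS hT Q q₀ ↔ ∃ q' ∈ Q, x ∈ (pb hT q₀ q').support := by
  simp [SS]

lemma q0_mem_SS (hq₀ : q₀ ∈ Q) : q₀ ∈ SS hT Q q₀ :=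
  (mem_SS_iff hT Q q₀).2 ⟨q₀, hq₀, Walk.start_mem_support _⟩

lemma Q_subset_SS : Q ⊆ SS hT Q q₀ := by
  intro q hq
  exact (mem_SS_iff hT Q q₀).2 ⟨q, hq, Walk.end_mem_support _⟩

lemma pb_from_root_subset_SS {x : Fin n} (hx : x ∈ SS hT Q q₀) :
    ∀ w ∈ (pb hT q₀ x).support, w ∈ SS hT Q q₀ := by
  obtain ⟨q', hq', hxq⟩ := (mem_SS_iff hT Q q₀).1 hx
  intro w hw
  refine (mem_SS_iff hT Q q₀).2 ⟨q', hq', ?_⟩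
  exact support_pb_takeUntil_subset hT hxq (by exact hw)

lemma pb_to_Q_subset_SS {x q' : Fin n} (hx : x ∈ SS hT Q q₀) (hq' : q' ∈ Q) :
    ∀ w ∈ (pb hT x q').support, w ∈ SS hT Q q₀ := by
  intro w hw
  rcases pb_Y hT x q₀ q' hw with h | h
  · exact pb_from_root_subset_SS hT Q q₀ hx w ((mem_pb_reverse hT).1 h)
  · exact (mem_SS_iff hT Q q₀).2 ⟨q', hq', h⟩

/-- every vertex off the skeleton is close to a leaf on a short leaf-to-`Q` path -/
lemma off_SS_near_leaf (h2 : 2 ≤ n) (d : ℕ)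
    (hnear : ∀ u, dg T u = 1 → ∃ q' ∈ Q, T.dist u q' < 2 * d)
    {v : Fin n} (hv : v ∉ SS hT Q q₀) :
    ∃ u q', dg T u = 1 ∧ q' ∈ Q ∧ v ∈ (pb hT u q').support ∧ T.dist u q' < 2 * d := by
  obtain ⟨u, hu, hvu⟩ := ext_to_leaf hT h2 q₀ v
  obtain ⟨q', hq', hdq⟩ := hnear u hu
  rcases pb_Y hT q₀ q' u hvu with h | h
  · exact absurd ((mem_SS_iff hT Q q₀).2 ⟨q', hq', h⟩) hv
  · exact ⟨u, q', hu, hq', (mem_pb_reverse hT).1 h, hdq⟩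

/-- counting the complement of the skeleton -/
lemma card_compl_SS (h2 : 2 ≤ n) (d : ℕ)
    (hnear : ∀ u, dg T u = 1 → ∃ q' ∈ Q, T.dist u q' < 2 * d) :
    (univ \ SS hT Q q₀).card ≤ (univ.filter (fun x => dg T x = 1)).card * (2 * d) := by
  classical
  have hcand : ∀ v, v ∈ univ \ SS hT Q q₀ → ∃ u, dg T u = 1 ∧
      ∃ q' ∈ Q, v ∈ (pb hT u q').support ∧ T.dist u q' < 2 * d := by
    intro v hv
    rw [mem_sdiff] at hv
    obtain ⟨u, q', h1, h2', h3, h4⟩ := off_SS_near_leaf hT Q q₀ h2 d hnear hv.2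
    exact ⟨u, h1, q', h2', h3, h4⟩
  set P : Fin n → Prop :=
    fun v => ∃ u, dg T u = 1 ∧ ∃ q' ∈ Q, v ∈ (pb hT u q').support ∧ T.dist u q' < 2 * d
    with hP
  set uv : Fin n → Fin n := fun v => if h : P v then h.choose else v with huv
  have huvspec : ∀ v, (h : P v) → dg T (uv v) = 1 ∧
      ∃ q' ∈ Q, v ∈ (pb hT (uv v) q').support ∧ T.dist (uv v) q' < 2 * d := by
    intro v h
    have he : uv v = h.choose := dif_pos h
    rw [he]
    exact h.choose_spec
  have hmain := Finset.card_le_card_of_injOn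
    (fun v => ((uv v, T.dist (uv v) v) : Fin n × ℕ))
    (s := univ \ SS hT Q q₀)
    (t := (univ.filter (fun x => dg T x = 1)) ×ˢ (Finset.range (2 * d)))
    (by
      intro v hv
      obtain ⟨h1, q', hq', h3, h4⟩ := huvspec v (hcand v hv)
      simp only [Finset.mem_coe, Finset.mem_product, Finset.mem_filter, Finset.mem_range]
      refine ⟨⟨mem_univ _, h1⟩, ?_⟩
      have := mem_pb_dist hT h3
      omega)
    (by
      intro v hv w hw heq
      have hv' := Finset.mem_coe.1 hv
      have hw' := Finset.mem_coe.1 hw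
      simp only [Prod.mk.injEq] at heq
      obtain ⟨heu, hed⟩ := heq
      obtain ⟨h1, q1, hq1, h3, h4⟩ := huvspec v (hcand v hv')
      obtain ⟨h1', q2, hq2, h3', h4'⟩ := huvspec w (hcand w hw')
      rw [← heu] at h3'
      have hw3 : w ∈ (pb hT (uv v) q1).support := by
        rcases pb_Y hT (uv v) q1 q2 h3' with h | h
        · exact h
        · exfalso
          have hsub := pb_to_Q_subset_SS hT Q q₀ (Q_subset_SS hT Q q₀ hq1) hq2 w h
          rw [mem_sdiff] at hw'
          exact hw'.2 hsub
      exact pb_position hT h3 hw3 (by rw [heu] at hed ⊢; exact hed))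
  rwa [Finset.card_product, Finset.card_range] at hmain

/-- the parent of a vertex (towards `q₀`) -/
noncomputable def par (x : Fin n) : Fin n := (pb hT q₀ x).getVert (T.dist q₀ x - 1)

lemma one_le_dist (hTc : T.Connected) {x y : Fin n} (hx : x ≠ y) : 1 ≤ T.dist y x :=
  hTc.pos_dist_of_ne (fun h => hx h.symm)

lemma par_adj {x : Fin n} (hx : x ≠ q₀) : T.Adj (par hT q₀ x) x := by
  have hl : (pb hT q₀ x).length = T.dist q₀ x := pb_length hT q₀ x
  have h1 : 1 ≤ T.dist q₀ x := one_le_dist hT.isConnected hx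
  have := (pb hT q₀ x).adj_getVert_succ (i := T.dist q₀ x - 1) (by omega)
  have e : T.dist q₀ x - 1 + 1 = T.dist q₀ x := by omega
  rw [e] at this
  rw [par]
  have e2 : (pb hT q₀ x).getVert (T.dist q₀ x) = x := by
    rw [← hl, Walk.getVert_length]
  rwa [e2] at this

lemma par_dist {x : Fin n} (hx : x ≠ q₀) :
    T.dist q₀ (par hT q₀ x) + 1 = T.dist q₀ x := by
  have hl : (pb hT q₀ x).length = T.dist q₀ x := pb_length hT q₀ x
  have h1 : 1 ≤ T.dist q₀ x := one_le_dist hT.isConnected hx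
  rw [par, pb_getVert_dist hT q₀ x (by omega)]
  omega

lemma par_unique {x z : Fin n} (hx : x ≠ q₀) (hz : T.Adj z x)
    (hd : T.dist q₀ z + 1 = T.dist q₀ x) : z = par hT q₀ x :=
  pred_unique hT hz (par_adj hT q₀ hx) hd (par_dist hT q₀ hx)

lemma par_mem_SS {x : Fin n} (hx : x ∈ SS hT Q q₀) (hxq : x ≠ q₀) :
    par hT q₀ x ∈ SS hT Q q₀ := by
  refine pb_from_root_subset_SS hT Q q₀ hx _ ?_
  exact pred_mem_pb hT (par_adj hT q₀ hxq) (par_dist hT q₀ hxq)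

/-- children of a vertex in the skeleton -/
noncomputable def children (x : Fin n) : Finset (Fin n) :=
  (SS hT Q q₀).filter (fun w => w ≠ q₀ ∧ par hT q₀ w = x)

/-- skeleton neighbours -/
noncomputable def nbS (x : Fin n) : Finset (Fin n) :=
  (SS hT Q q₀).filter (fun y => T.Adj x y)

lemma nbS_mem_iff {x y : Fin n} : y ∈ nbS hT Q q₀ x ↔ y ∈ SS hT Q q₀ ∧ T.Adj x y := by
  simp [nbS]

lemma nbS_card_le_dg (x : Fin n) : (nbS hT Q q₀ x).card ≤ dg T x := by
  rw [dg_eq_card]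
  apply Finset.card_le_card
  intro y hy
  rw [nbS_mem_iff] at hy
  simp [hy.2]

lemma sum_children_card (hq₀ : q₀ ∈ Q) :
    ∑ x ∈ SS hT Q q₀, (children hT Q q₀ x).card + 1 = (SS hT Q q₀).card := by
  classical
  have hfib := Finset.card_eq_sum_card_fiberwise
    (s := (SS hT Q q₀).erase q₀) (t := SS hT Q q₀) (f := par hT q₀)
    (by
      intro w hw
      rw [Finset.mem_coe, Finset.mem_erase] at hw
      exact par_mem_SS hT Q q₀ hw.2 hw.1)
  have heq : ∀ x, ((SS hT Q q₀).erase q₀).filter (fun w => par hT q₀ w = x)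
      = children hT Q q₀ x := by
    intro x
    ext w
    simp only [children, Finset.mem_filter, Finset.mem_erase]
    tauto
  simp only [heq] at hfib
  rw [← hfib, Finset.card_erase_of_mem (q0_mem_SS hT Q q₀ hq₀)]
  have : 1 ≤ (SS hT Q q₀).card :=
    Finset.card_pos.2 ⟨q₀, q0_mem_SS hT Q q₀ hq₀⟩
  omega

lemma childless_mem_Q {x : Fin n} (hx : x ∈ SS hT Q q₀)
    (hc : children hT Q q₀ x = ∅) : x ∈ Q := by
  obtain ⟨q', hq', hxq⟩ := (mem_SS_iff hT Q q₀).1 hx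
  by_cases hxq' : x = q'
  · subst hxq'; exact hq'
  obtain ⟨j, hj1, hj2⟩ := Walk.mem_support_iff_exists_getVert.1 hxq
  have hl : (pb hT q₀ q').length = T.dist q₀ q' := pb_length hT q₀ q'
  have hjl : j < (pb hT q₀ q').length := by
    rcases Nat.eq_or_lt_of_le hj2 with h | h
    · exfalso; rw [h, Walk.getVert_length] at hj1; exact hxq' hj1.symm
    · exact h
  set w := (pb hT q₀ q').getVert (j+1) with hw
  have hadj : T.Adj x w := by
    have := (pb hT q₀ q').adj_getVert_succ hjl
    rwa [hj1] at this
  have hdx : T.dist q₀ x = j := by rw [← hj1]; exact pb_getVert_dist hT q₀ q' (by omega)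
  have hdw : T.dist q₀ w = j + 1 := pb_getVert_dist hT q₀ q' (by omega)
  have hwS : w ∈ SS hT Q q₀ :=
    (mem_SS_iff hT Q q₀).2 ⟨q', hq', pb_getVert_mem hT q₀ q' (by omega)⟩
  have hwq0 : w ≠ q₀ := by
    intro h
    rw [h, SimpleGraph.dist_self] at hdw
    omega
  have : w ∈ children hT Q q₀ x := by
    rw [children, Finset.mem_filter]
    exact ⟨hwS, hwq0, (par_unique hT q₀ hwq0 hadj (by omega)).symm⟩
  rw [hc] at this
  exact absurd this (Finset.notMem_empty _)

lemma nbS_subset_insert {x : Fin n} (hx : x ∈ SS hT Q q₀) :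
    nbS hT Q q₀ x ⊆ insert (par hT q₀ x) (children hT Q q₀ x) := by
  intro w hw
  rw [nbS_mem_iff] at hw
  obtain ⟨hwS, hadj⟩ := hw
  rcases adj_dist_step hT q₀ hadj with h | h
  · -- w is a child
    have hwq0 : w ≠ q₀ := by
      intro hq
      rw [hq, SimpleGraph.dist_self] at h
      omega
    rw [Finset.mem_insert]
    right
    rw [children, Finset.mem_filter]
    exact ⟨hwS, hwq0, (par_unique hT q₀ hwq0 hadj (by omega)).symm⟩
  · -- w is the parent
    have hxq0 : x ≠ q₀ := by
      intro hq
      rw [hq, SimpleGraph.dist_self] at h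
      omega
    rw [Finset.mem_insert]
    left
    exact par_unique hT q₀ hxq0 hadj.symm (by omega)

/-- bounds on the branching structure of the skeleton -/
lemma branching_bounds (hq₀ : q₀ ∈ Q) :
    ((SS hT Q q₀).filter (fun x => 3 ≤ (nbS hT Q q₀ x).card)).card ≤ Q.card ∧
    ∑ x ∈ (SS hT Q q₀).filter (fun x => 3 ≤ (nbS hT Q q₀ x).card),
      (nbS hT Q q₀ x).card ≤ 3 * Q.card := by
  classical
  set B := (SS hT Q q₀).filter (fun x => 3 ≤ (nbS hT Q q₀ x).card) with hB
  set W := (SS hT Q q₀).filter (fun x => (children hT Q q₀ x).card ≠ 0) with hW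
  set CL := (SS hT Q q₀).filter (fun x => ¬ (children hT Q q₀ x).card ≠ 0) with hCL
  have hCLQ : CL ⊆ Q := by
    intro x hx
    rw [hCL, Finset.mem_filter] at hx
    exact childless_mem_Q hT Q q₀ hx.1 (Finset.card_eq_zero.1 (by omega))
  have hkey : ∀ x ∈ B, 2 ≤ (children hT Q q₀ x).card := by
    intro x hx
    rw [hB, Finset.mem_filter] at hx
    have := Finset.card_le_card (nbS_subset_insert hT Q q₀ hx.1)
    have hins := Finset.card_insert_le (par hT q₀ x) (children hT Q q₀ x)
    omega
  have hBW : B ⊆ W := by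
    intro x hx
    have h2 := hkey x hx
    rw [hB, Finset.mem_filter] at hx
    rw [hW, Finset.mem_filter]
    exact ⟨hx.1, by omega⟩
  have hsplit : ∑ x ∈ W, (children hT Q q₀ x).card + ∑ x ∈ CL, (children hT Q q₀ x).card
      = ∑ x ∈ SS hT Q q₀, (children hT Q q₀ x).card :=
    Finset.sum_filter_add_sum_filter_not _ _ _
  have hCL0 : ∑ x ∈ CL, (children hT Q q₀ x).card = 0 := by
    apply Finset.sum_eq_zero
    intro x hx
    rw [hCL, Finset.mem_filter] at hx
    omega
  have hWsum : ∑ x ∈ W \ B, (children hT Q q₀ x).card + ∑ x ∈ B, (children hT Q q₀ x).card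
      = ∑ x ∈ W, (children hT Q q₀ x).card := Finset.sum_sdiff hBW
  have h1 : (W \ B).card ≤ ∑ x ∈ W \ B, (children hT Q q₀ x).card := by
    calc (W \ B).card = ∑ _x ∈ W \ B, 1 := Finset.card_eq_sum_ones _
    _ ≤ _ := by
        apply Finset.sum_le_sum
        intro x hx
        have := Finset.mem_sdiff.1 hx
        have hx1 := this.1
        rw [hW, Finset.mem_filter] at hx1
        omega
  have h2 : 2 * B.card ≤ ∑ x ∈ B, (children hT Q q₀ x).card := by
    calc 2 * B.card = ∑ _x ∈ B, 2 := by rw [Finset.sum_const, smul_eq_mul, mul_comm]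
    _ ≤ _ := Finset.sum_le_sum hkey
  have hSScard : (SS hT Q q₀).card = W.card + CL.card := by
    rw [hW, hCL]
    exact (Finset.card_filter_add_card_filter_not _).symm
  have hWB : (W \ B).card = W.card - B.card := Finset.card_sdiff_of_subset hBW
  have hBGW : B.card ≤ W.card := Finset.card_le_card hBW
  have htot := sum_children_card hT Q q₀ hq₀
  have hCLcard : CL.card ≤ Q.card := Finset.card_le_card hCLQ
  constructor
  · omega
  · -- bound the sum of skeleton degrees over branching vertices
    have hdegsum : ∑ x ∈ B, (nbS hT Q q₀ x).card ≤
        ∑ x ∈ B, ((children hT Q q₀ x).card + 1) := by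
      apply Finset.sum_le_sum
      intro x hx
      rw [hB, Finset.mem_filter] at hx
      have := Finset.card_le_card (nbS_subset_insert hT Q q₀ hx.1)
      have hins := Finset.card_insert_le (par hT q₀ x) (children hT Q q₀ x)
      omega
    rw [Finset.sum_add_distrib, Finset.sum_const, smul_eq_mul, mul_one] at hdegsum
    omega

variable {m : ℕ} {uM vM : Fin m → Fin n}

/-- vertices used by the path collection -/
noncomputable def VMv (PM : ∀ i, T.Walk (uM i) (vM i)) : Finset (Fin n) :=
  univ.biUnion (fun i => (PM i).support.toFinset)

/-- stoppers: branching vertices, `Q`, and vertices of the path collection -/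
noncomputable def stp (PM : ∀ i, T.Walk (uM i) (vM i)) : Finset (Fin n) :=
  ((SS hT Q q₀).filter (fun x => 3 ≤ (nbS hT Q q₀ x).card)) ∪ Q ∪
    ((SS hT Q q₀).filter (fun x => x ∈ VMv PM))

/-- free vertices of the skeleton -/
noncomputable def fre (PM : ∀ i, T.Walk (uM i) (vM i)) : Finset (Fin n) :=
  SS hT Q q₀ \ stp hT Q q₀ PM

lemma fre_mem_SS {PM : ∀ i, T.Walk (uM i) (vM i)} {v : Fin n}
    (hv : v ∈ fre hT Q q₀ PM) : v ∈ SS hT Q q₀ := (Finset.mem_sdiff.1 hv).1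

lemma fre_not_stp {PM : ∀ i, T.Walk (uM i) (vM i)} {v : Fin n}
    (hv : v ∈ fre hT Q q₀ PM) : v ∉ stp hT Q q₀ PM := (Finset.mem_sdiff.1 hv).2

lemma fre_not_Q {PM : ∀ i, T.Walk (uM i) (vM i)} {v : Fin n}
    (hv : v ∈ fre hT Q q₀ PM) : v ∉ Q := by
  intro h
  exact fre_not_stp hT Q q₀ hv (by rw [stp]; rw [Finset.mem_union, Finset.mem_union]; tauto)

lemma fre_not_branching {PM : ∀ i, T.Walk (uM i) (vM i)} {v : Fin n}
    (hv : v ∈ fre hT Q q₀ PM) : (nbS hT Q q₀ v).card ≤ 2 := by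
  by_contra h
  refine fre_not_stp hT Q q₀ hv ?_
  rw [stp, Finset.mem_union, Finset.mem_union]
  left; left
  rw [Finset.mem_filter]
  exact ⟨fre_mem_SS hT Q q₀ hv, by omega⟩

lemma fre_not_VM {PM : ∀ i, T.Walk (uM i) (vM i)} {v : Fin n}
    (hv : v ∈ fre hT Q q₀ PM) : v ∉ VMv PM := by
  intro h
  refine fre_not_stp hT Q q₀ hv ?_
  rw [stp, Finset.mem_union, Finset.mem_union]
  right
  rw [Finset.mem_filter]
  exact ⟨fre_mem_SS hT Q q₀ hv, h⟩

/-- a free vertex has exactly two skeleton neighbours -/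
lemma fre_two_nbrs (hq₀ : q₀ ∈ Q) {PM : ∀ i, T.Walk (uM i) (vM i)} {v : Fin n}
    (hv : v ∈ fre hT Q q₀ PM) :
    ∃ y z, y ≠ z ∧ nbS hT Q q₀ v = {y, z} := by
  obtain ⟨q', hq', hvq⟩ := (mem_SS_iff hT Q q₀).1 (fre_mem_SS hT Q q₀ hv)
  have hvQ := fre_not_Q hT Q q₀ hv
  have hvq' : v ≠ q' := fun h => hvQ (h ▸ hq')
  have hvq0 : v ≠ q₀ := fun h => hvQ (h ▸ hq₀)
  obtain ⟨j, hj1, hj2⟩ := Walk.mem_support_iff_exists_getVert.1 hvq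
  have hl : (pb hT q₀ q').length = T.dist q₀ q' := pb_length hT q₀ q'
  have hdv : T.dist q₀ v = j := by rw [← hj1]; exact pb_getVert_dist hT q₀ q' hj2
  have hj0 : 1 ≤ j := by
    have := one_le_dist hT.isConnected hvq0
    omega
  have hjl : j < (pb hT q₀ q').length := by
    rcases Nat.eq_or_lt_of_le hj2 with h | h
    · exfalso; rw [h, Walk.getVert_length] at hj1; exact hvq' hj1.symm
    · exact h
  set y := (pb hT q₀ q').getVert (j-1) with hy
  set z := (pb hT q₀ q').getVert (j+1) with hz
  have hyd : T.dist q₀ y = j - 1 := pb_getVert_dist hT q₀ q' (by omega)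
  have hzd : T.dist q₀ z = j + 1 := pb_getVert_dist hT q₀ q' (by omega)
  have hyz : y ≠ z := by
    intro h
    rw [h, hzd] at hyd
    omega
  have hyadj : T.Adj v y := by
    have := (pb hT q₀ q').adj_getVert_succ (i := j-1) (by omega)
    have e : j - 1 + 1 = j := by omega
    rw [e, hj1] at this
    exact this.symm
  have hzadj : T.Adj v z := by
    have := (pb hT q₀ q').adj_getVert_succ (i := j) hjl
    rwa [hj1] at this
  have hyS : y ∈ SS hT Q q₀ :=
    (mem_SS_iff hT Q q₀).2 ⟨q', hq', pb_getVert_mem hT q₀ q' (by omega)⟩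
  have hzS : z ∈ SS hT Q q₀ :=
    (mem_SS_iff hT Q q₀).2 ⟨q', hq', pb_getVert_mem hT q₀ q' (by omega)⟩
  have hsub : ({y, z} : Finset (Fin n)) ⊆ nbS hT Q q₀ v := by
    intro w hw
    rw [Finset.mem_insert, Finset.mem_singleton] at hw
    rcases hw with rfl | rfl
    · exact (nbS_mem_iff hT Q q₀).2 ⟨hyS, hyadj⟩
    · exact (nbS_mem_iff hT Q q₀).2 ⟨hzS, hzadj⟩
  have hcard : ({y, z} : Finset (Fin n)).card = 2 := by
    rw [Finset.card_insert_of_notMem (by simp [hyz]), Finset.card_singleton]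
  refine ⟨y, z, hyz, ?_⟩
  exact (Finset.eq_of_subset_of_card_le hsub
    (by rw [hcard]; exact fre_not_branching hT Q q₀ hv)).symm

/-- along a free stretch, skeleton neighbourhoods are the two chain neighbours -/
lemma stretch_pair (hq₀ : q₀ ∈ Q) {PM : ∀ i, T.Walk (uM i) (vM i)} (t : ℕ) (c : ℕ → Fin n)
    (hadj : ∀ j, j + 1 ≤ t → T.Adj (c j) (c (j+1)))
    (hne : ∀ i j, i < j → j ≤ t → c i ≠ c j)
    (hfree : ∀ j, j ≤ t → c j ∈ fre hT Q q₀ PM) :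
    ∀ j, 1 ≤ j → j + 1 ≤ t → nbS hT Q q₀ (c j) = {c (j-1), c (j+1)} := by
  intro j hj1 hjt
  have hadjprev : T.Adj (c j) (c (j-1)) := by
    have := hadj (j-1) (by omega)
    have e : j - 1 + 1 = j := by omega
    rw [e] at this
    exact this.symm
  have hadjnext : T.Adj (c j) (c (j+1)) := hadj j hjt
  have hne' : c (j-1) ≠ c (j+1) := hne (j-1) (j+1) (by omega) (by omega)
  have hsub : ({c (j-1), c (j+1)} : Finset (Fin n)) ⊆ nbS hT Q q₀ (c j) := by
    intro w hw
    rw [Finset.mem_insert, Finset.mem_singleton] at hw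
    rcases hw with rfl | rfl
    · exact (nbS_mem_iff hT Q q₀).2 ⟨fre_mem_SS hT Q q₀ (hfree _ (by omega)), hadjprev⟩
    · exact (nbS_mem_iff hT Q q₀).2 ⟨fre_mem_SS hT Q q₀ (hfree _ (by omega)), hadjnext⟩
  have hcard : ({c (j-1), c (j+1)} : Finset (Fin n)).card = 2 := by
    rw [Finset.card_insert_of_notMem (by simp [hne']), Finset.card_singleton]
  exact (Finset.eq_of_subset_of_card_le hsub (by
    rw [hcard]; exact fre_not_branching hT Q q₀ (hfree j (by omega)))).symm

/-- escape lemma: a short path from a free stretch to `Q` cannot exist -/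
lemma esc_up (hq₀ : q₀ ∈ Q) {PM : ∀ i, T.Walk (uM i) (vM i)} (t : ℕ) (c : ℕ → Fin n)
    (hadj : ∀ j, j + 1 ≤ t → T.Adj (c j) (c (j+1)))
    (hne : ∀ i j, i < j → j ≤ t → c i ≠ c j)
    (hfree : ∀ j, j ≤ t → c j ∈ fre hT Q q₀ PM)
    (j r : ℕ) (hj1 : 1 ≤ j) (hjr : j + r ≤ t) (hr1 : 1 ≤ r)
    (q' : Fin n) (hq' : q' ∈ Q) (hr : T.dist (c j) q' = r)
    (hσ1 : (pb hT (c j) q').getVert 1 = c (j+1)) : False := by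
  have hpair := stretch_pair hT Q q₀ hq₀ t c hadj hne hfree
  have hlen : (pb hT (c j) q').length = r := by rw [pb_length, hr]
  have hsuppS : ∀ i, i ≤ r → (pb hT (c j) q').getVert i ∈ SS hT Q q₀ := by
    intro i hi
    exact pb_to_Q_subset_SS hT Q q₀ (fre_mem_SS hT Q q₀ (hfree j (by omega))) hq' _
      (pb_getVert_mem hT _ _ (by omega))
  have hσd : ∀ i, i ≤ r → T.dist (c j) ((pb hT (c j) q').getVert i) = i := by
    intro i hi
    exact pb_getVert_dist hT _ _ (by omega)
  have main : ∀ i, i ≤ r → (pb hT (c j) q').getVert i = c (j + i) := by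
    intro i
    induction i using Nat.strong_induction_on with
    | _ i ih =>
      intro hir
      match i, hir with
      | 0, _ => simp [Walk.getVert_zero]
      | 1, h1 => rw [hσ1]
      | (i+2), hir =>
        have h0 : (pb hT (c j) q').getVert i = c (j + i) := ih i (by omega) (by omega)
        have h1 : (pb hT (c j) q').getVert (i+1) = c (j + i + 1) :=
          ih (i+1) (by omega) (by omega)
        have hadj2 : T.Adj (c (j+i+1)) ((pb hT (c j) q').getVert (i+2)) := by
          have := (pb hT (c j) q').adj_getVert_succ (i := i+1) (by omega)
          rw [h1] at this
          have e : i + 1 + 1 = i + 2 := by omega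
          rwa [e] at this
        have hmem : (pb hT (c j) q').getVert (i+2) ∈ nbS hT Q q₀ (c (j+i+1)) :=
          (nbS_mem_iff hT Q q₀).2 ⟨hsuppS (i+2) hir, hadj2⟩
        rw [hpair (j+i+1) (by omega) (by omega)] at hmem
        rw [Finset.mem_insert, Finset.mem_singleton] at hmem
        have e1 : j + i + 1 - 1 = j + i := by omega
        have e2 : j + i + 1 + 1 = j + (i + 2) := by omega
        rw [e1, e2] at hmem
        rcases hmem with h | h
        · exfalso
          rw [← h0] at h
          have d1 := hσd (i+2) hir
          have d2 := hσd i (by omega)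
          rw [h] at d1
          omega
        · exact h
  have hend : (pb hT (c j) q').getVert r = q' := by
    rw [← hlen, Walk.getVert_length]
  have := main r (le_refl r)
  rw [hend] at this
  have : q' ∈ fre hT Q q₀ PM := this ▸ hfree (j + r) hjr
  exact fre_not_Q hT Q q₀ this hq'

/-- there is no free stretch of length `2k` -/
lemma no_stretch (hq₀ : q₀ ∈ Q) (h2 : 2 ≤ n) (d k : ℕ) (hd : 0 < d) (hkd : 4*d ≤ k)
    (hnear : ∀ u, dg T u = 1 → ∃ q' ∈ Q, T.dist u q' < 2 * d)
    {PM : ∀ i, T.Walk (uM i) (vM i)}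
    (hMmax : ∀ (a b : Fin n) (W : T.Walk a b), W.IsPath → W.length = k →
      IsBareWalk T W → (∀ x ∈ W.support, x ∉ VMv PM) → False)
    (c : ℕ → Fin n)
    (hadj : ∀ j, j + 1 ≤ 2*k → T.Adj (c j) (c (j+1)))
    (hnb : ∀ j, j + 2 ≤ 2*k → c (j+2) ≠ c j)
    (hfree : ∀ j, j ≤ 2*k → c j ∈ fre hT Q q₀ PM) : False := by
  have hne : ∀ i j, i < j → j ≤ 2*k → c i ≠ c j := geodesic_ray_ne hT c (2*k) hadj hnb
  have hpair := stretch_pair hT Q q₀ hq₀ (2*k) c hadj hne hfree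
  -- reversed chain
  set c' : ℕ → Fin n := fun l => c (2*k - l) with hc'
  have hadj' : ∀ j, j + 1 ≤ 2*k → T.Adj (c' j) (c' (j+1)) := by
    intro j hj
    have := hadj (2*k - j - 1) (by omega)
    have e : 2*k - j - 1 + 1 = 2*k - j := by omega
    rw [e] at this
    show T.Adj (c (2*k - j)) (c (2*k - (j+1)))
    have e2 : 2*k - (j+1) = 2*k - j - 1 := by omega
    rw [e2]
    exact this.symm
  have hne' : ∀ i j, i < j → j ≤ 2*k → c' i ≠ c' j := by
    intro i j hij hj
    show c (2*k - i) ≠ c (2*k - j)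
    exact (hne (2*k - j) (2*k - i) (by omega) (by omega)).symm
  have hfree' : ∀ j, j ≤ 2*k → c' j ∈ fre hT Q q₀ PM := by
    intro j hj
    exact hfree (2*k - j) (by omega)
  -- middle vertices have degree 2 in T
  have hdeg2 : ∀ j, 2*d ≤ j → j + 2*d ≤ 2*k → dg T (c j) = 2 := by
    intro j hjd hjk
    have hk1 : 1 ≤ k := by omega
    have hjp := hpair j (by omega) (by omega)
    have hne2 : c (j-1) ≠ c (j+1) := hne (j-1) (j+1) (by omega) (by omega)
    have hcard2 : (nbS hT Q q₀ (c j)).card = 2 := by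
      rw [hjp, Finset.card_insert_of_notMem (by simp [hne2]), Finset.card_singleton]
    have hge : 2 ≤ dg T (c j) := by
      have := nbS_card_le_dg hT Q q₀ (c j)
      omega
    by_contra hdg
    have hdg3 : 3 ≤ dg T (c j) := by omega
    -- find a neighbour off the skeleton
    have hw : ∃ w, T.Adj (c j) w ∧ w ∉ SS hT Q q₀ := by
      by_contra hall
      push_neg at hall
      have hsub : univ.filter (fun y => T.Adj (c j) y) ⊆ nbS hT Q q₀ (c j) := by
        intro w hwmem
        rw [Finset.mem_filter] at hwmem
        exact (nbS_mem_iff hT Q q₀).2 ⟨hall w hwmem.2, hwmem.2⟩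
      have := Finset.card_le_card hsub
      rw [← dg_eq_card] at this
      omega
    obtain ⟨w, hwadj, hwS⟩ := hw
    obtain ⟨u, q'', hu, hq'', hwmem, hdq⟩ := off_SS_near_leaf hT Q q₀ h2 d hnear hwS
    have hwq : T.dist w q'' < 2*d := by
      have := mem_pb_dist hT hwmem
      omega
    have hcjq : T.dist (c j) q'' ≤ 2*d := by
      have htri := hT.isConnected.dist_triangle (u := c j) (v := w) (w := q'')
      rw [dist_adj hT hwadj] at htri
      omega
    have hcjfre := hfree j (by omega)
    have hcjne : c j ≠ q'' := fun h => fre_not_Q hT Q q₀ hcjfre (h ▸ hq'')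
    set r := T.dist (c j) q'' with hrdef
    have hr1 : 1 ≤ r := one_le_dist hT.isConnected (fun h => hcjne h.symm)
    have hlen : (pb hT (c j) q'').length = r := by rw [pb_length]
    have hσ1mem : (pb hT (c j) q'').getVert 1 ∈ nbS hT Q q₀ (c j) := by
      refine (nbS_mem_iff hT Q q₀).2 ⟨?_, ?_⟩
      · exact pb_to_Q_subset_SS hT Q q₀ (fre_mem_SS hT Q q₀ hcjfre) hq'' _
          (pb_getVert_mem hT _ _ (by omega))
      · have := (pb hT (c j) q'').adj_getVert_succ (i := 0) (by omega)
        rwa [Walk.getVert_zero] at this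
    rw [hjp, Finset.mem_insert, Finset.mem_singleton] at hσ1mem
    rcases hσ1mem with h | h
    · -- downward direction: use the reversed chain
      have e : 2*k - (2*k - j) = j := by omega
      refine esc_up hT Q q₀ hq₀ (2*k) c' hadj' hne' hfree' (2*k - j) r
        (by omega) (by omega) hr1 q'' hq'' ?_ ?_
      · show T.dist (c (2*k - (2*k - j))) q'' = r
        rw [e]
      · show (pb hT (c (2*k - (2*k - j))) q'').getVert 1 = c (2*k - (2*k - j + 1))
        have e2 : 2*k - (2*k - j + 1) = j - 1 := by omega
        rw [e2]
        -- rewriting the base point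
        have e3 : c (2*k - (2*k - j)) = c j := by rw [e]
        rw [show (2*k - (2*k - j)) = j from e]
        exact h
    · -- upward direction
      exact esc_up hT Q q₀ hq₀ (2*k) c hadj hne hfree j r (by omega) (by omega)
        hr1 q'' hq'' rfl h
  -- now build a bare path of length k in the middle of the stretch
  have hadj'' : ∀ i, i + 1 ≤ k → T.Adj (c (2*d + i)) (c (2*d + (i+1))) := by
    intro i hi
    have := hadj (2*d + i) (by omega)
    have e : 2*d + (i+1) = (2*d + i) + 1 := by omega
    rw [e]
    exact this
  have hnb'' : ∀ i, i + 2 ≤ k → c (2*d + (i+2)) ≠ c (2*d + i) := by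
    intro i hi
    have := hnb (2*d + i) (by omega)
    have e : 2*d + (i+2) = (2*d + i) + 2 := by omega
    rw [e]
    exact this
  obtain ⟨p, hppath, hplen, hpsupp⟩ :=
    exists_chain_walk hT (fun i => c (2*d + i)) k hadj'' hnb''
  refine hMmax _ _ p hppath hplen ?_ ?_
  · intro x hx _ _
    obtain ⟨i, hik, rfl⟩ := (hpsupp x).1 hx
    exact hdeg2 (2*d + i) (by omega) (by omega)
  · intro x hx
    obtain ⟨i, hik, rfl⟩ := (hpsupp x).1 hx
    exact fre_not_VM hT Q q₀ (hfree (2*d + i) (by omega))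

/-- the other skeleton-neighbour -/
noncomputable def oN (prev cur : Fin n) : Fin n :=
  if h : ((nbS hT Q q₀ cur).erase prev).Nonempty
  then ((nbS hT Q q₀ cur).erase prev).min' h else cur

lemma oN_spec {a b cur : Fin n} (hp : nbS hT Q q₀ cur = {a, b}) (hab : a ≠ b) :
    oN hT Q q₀ a cur = b := by
  have he : (nbS hT Q q₀ cur).erase a = {b} := by
    rw [hp]
    rw [show ({a, b} : Finset (Fin n)) = insert a {b} from rfl]
    rw [Finset.erase_insert (by simp [hab])]
  have hne : ((nbS hT Q q₀ cur).erase a).Nonempty := by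
    rw [he]; exact ⟨b, Finset.mem_singleton_self b⟩
  rw [oN, dif_pos hne]
  have hb : ∀ w ∈ (nbS hT Q q₀ cur).erase a, w = b := by
    intro w hw
    rw [he] at hw
    exact Finset.mem_singleton.1 hw
  exact hb _ (Finset.min'_mem _ hne)

/-- deterministic walk iteration -/
noncomputable def wseq (x y : Fin n) : ℕ → Fin n × Fin n :=
  fun t => Nat.rec (x, y) (fun _ p => (p.2, oN hT Q q₀ p.1 p.2)) t

noncomputable def wb (x y : Fin n) (t : ℕ) : Fin n := (wseq hT Q q₀ x y t).1

lemma wb_zero (x y : Fin n) : wb hT Q q₀ x y 0 = x := rfl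
lemma wb_one (x y : Fin n) : wb hT Q q₀ x y 1 = y := rfl
lemma wb_step (x y : Fin n) (t : ℕ) :
    wb hT Q q₀ x y (t+2) = oN hT Q q₀ (wb hT Q q₀ x y t) (wb hT Q q₀ x y (t+1)) := rfl

lemma pair_ne (hq₀ : q₀ ∈ Q) {PM : ∀ i, T.Walk (uM i) (vM i)} {x a b : Fin n}
    (hx : x ∈ fre hT Q q₀ PM) (hp : nbS hT Q q₀ x = {a, b}) : a ≠ b := by
  obtain ⟨y, z, hyz, hyz2⟩ := fre_two_nbrs hT Q q₀ hq₀ hx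
  intro hab
  subst hab
  rw [hp] at hyz2
  have h2 : ({y, z} : Finset (Fin n)).card = 2 := by
    rw [Finset.card_insert_of_notMem (by simp [hyz]), Finset.card_singleton]
  rw [← hyz2] at h2
  simp at h2

/-- the invariant of the deterministic walk through free vertices -/
lemma wb_inv (hq₀ : q₀ ∈ Q) {PM : ∀ i, T.Walk (uM i) (vM i)} {v y : Fin n}
    (hy : y ∈ nbS hT Q q₀ v) :
    ∀ j, (∀ i, i ≤ j → wb hT Q q₀ v y i ∈ fre hT Q q₀ PM) →
      (wb hT Q q₀ v y (j+1) ∈ nbS hT Q q₀ (wb hT Q q₀ v y j) ∧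
       (1 ≤ j → nbS hT Q q₀ (wb hT Q q₀ v y j) =
          {wb hT Q q₀ v y (j-1), wb hT Q q₀ v y (j+1)})) := by
  intro j
  induction j with
  | zero =>
    intro _
    refine ⟨?_, by omega⟩
    rw [wb_zero, wb_one]
    exact hy
  | succ j ih =>
    intro hfree
    obtain ⟨hA, _⟩ := ih (fun i hi => hfree i (by omega))
    have hcur : wb hT Q q₀ v y (j+1) ∈ fre hT Q q₀ PM := hfree (j+1) (le_refl _)
    obtain ⟨a, b, hab, hpair⟩ := fre_two_nbrs hT Q q₀ hq₀ hcur
    have hprev : wb hT Q q₀ v y j ∈ nbS hT Q q₀ (wb hT Q q₀ v y (j+1)) := by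
      rw [nbS_mem_iff]
      rw [nbS_mem_iff] at hA
      exact ⟨fre_mem_SS hT Q q₀ (hfree j (by omega)), hA.2.symm⟩
    rw [hpair, Finset.mem_insert, Finset.mem_singleton] at hprev
    rcases hprev with h | h
    · have hnext : wb hT Q q₀ v y (j+2) = b := by
        rw [wb_step, h]
        exact oN_spec hT Q q₀ hpair hab
      constructor
      · rw [show j + 1 + 1 = j + 2 from by omega, hnext, hpair]
        simp
      · intro _
        rw [show j + 1 - 1 = j from by omega, show j + 1 + 1 = j + 2 from by omega,
          hpair, hnext, h]
    · have hnext : wb hT Q q₀ v y (j+2) = a := by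
        rw [wb_step, h]
        exact oN_spec hT Q q₀ (by rw [hpair, Finset.pair_comm]) hab.symm
      constructor
      · rw [show j + 1 + 1 = j + 2 from by omega, hnext, hpair]
        simp
      · intro _
        rw [show j + 1 - 1 = j from by omega, show j + 1 + 1 = j + 2 from by omega,
          hpair, hnext, h, Finset.pair_comm]

lemma mem_stp_of {PM : ∀ i, T.Walk (uM i) (vM i)} {x : Fin n}
    (hx : x ∈ SS hT Q q₀) (hnf : x ∉ fre hT Q q₀ PM) : x ∈ stp hT Q q₀ PM := by
  by_contra h
  exact hnf (Finset.mem_sdiff.2 ⟨hx, h⟩)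

/-- every free vertex admits a short chain leading to a stopper -/
lemma charge_exists (hq₀ : q₀ ∈ Q) (h2 : 2 ≤ n) (d k : ℕ) (hd : 0 < d) (hkd : 4*d ≤ k)
    (hnear : ∀ u, dg T u = 1 → ∃ q' ∈ Q, T.dist u q' < 2 * d)
    {PM : ∀ i, T.Walk (uM i) (vM i)}
    (hMmax : ∀ (a b : Fin n) (W : T.Walk a b), W.IsPath → W.length = k →
      IsBareWalk T W → (∀ x ∈ W.support, x ∉ VMv PM) → False) :
    ∀ v ∈ fre hT Q q₀ PM, ∃ (c : ℕ → Fin n) (t : ℕ), 1 ≤ t ∧ t ≤ k ∧ c 0 = v ∧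
      (∀ j, j < t → c j ∈ fre hT Q q₀ PM) ∧ c t ∈ stp hT Q q₀ PM ∧
      (∀ j, j + 1 ≤ t → T.Adj (c j) (c (j+1))) ∧
      (∀ j, j + 2 ≤ t → nbS hT Q q₀ (c (j+1)) = {c j, c (j+2)}) := by
  intro v hv
  obtain ⟨y, z, hyz, hnbs⟩ := fre_two_nbrs hT Q q₀ hq₀ hv
  have hyv : y ∈ nbS hT Q q₀ v := by rw [hnbs]; simp
  have hzv : z ∈ nbS hT Q q₀ v := by rw [hnbs]; simp
  have build : ∀ w, w ∈ nbS hT Q q₀ v →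
      (∃ t, 1 ≤ t ∧ t ≤ k ∧ wb hT Q q₀ v w t ∉ fre hT Q q₀ PM) →
      ∃ (c : ℕ → Fin n) (t : ℕ), 1 ≤ t ∧ t ≤ k ∧ c 0 = v ∧
        (∀ j, j < t → c j ∈ fre hT Q q₀ PM) ∧ c t ∈ stp hT Q q₀ PM ∧
        (∀ j, j + 1 ≤ t → T.Adj (c j) (c (j+1))) ∧
        (∀ j, j + 2 ≤ t → nbS hT Q q₀ (c (j+1)) = {c j, c (j+2)}) := by
    intro w hw hstop
    obtain ⟨tw, htw1, htwk, htwf⟩ := hstop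
    have hex : ∃ t, wb hT Q q₀ v w t ∉ fre hT Q q₀ PM := ⟨tw, htwf⟩
    set t₀ := Nat.find hex with ht₀
    have hspec : wb hT Q q₀ v w t₀ ∉ fre hT Q q₀ PM := Nat.find_spec hex
    have hmin : ∀ i, i < t₀ → wb hT Q q₀ v w i ∈ fre hT Q q₀ PM := by
      intro i hi
      by_contra h
      exact absurd (Nat.find_min' hex h) (by rw [← ht₀]; omega)
    have ht01 : 1 ≤ t₀ := by
      rcases Nat.eq_zero_or_pos t₀ with h | h
      · exfalso; rw [h, wb_zero] at hspec; exact hspec hv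
      · exact h
    have ht0k : t₀ ≤ k := le_trans (Nat.find_le htwf) htwk
    have hInv := wb_inv hT Q q₀ hq₀ (PM := PM) hw
    refine ⟨wb hT Q q₀ v w, t₀, ht01, ht0k, wb_zero hT Q q₀ v w, hmin, ?_, ?_, ?_⟩
    · -- the endpoint is a stopper
      have hA := (hInv (t₀ - 1) (fun i hi => hmin i (by omega))).1
      have e : t₀ - 1 + 1 = t₀ := by omega
      rw [e] at hA
      exact mem_stp_of hT Q q₀ ((nbS_mem_iff hT Q q₀).1 hA).1 hspec
    · intro j hj
      have hA := (hInv j (fun i hi => hmin i (by omega))).1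
      exact ((nbS_mem_iff hT Q q₀).1 hA).2
    · intro j hj
      have hB := (hInv (j+1) (fun i hi => hmin i (by omega))).2 (by omega)
      rw [show j + 1 - 1 = j from by omega, show j + 1 + 1 = j + 2 from by omega] at hB
      exact hB
  by_cases hyc : ∃ t, 1 ≤ t ∧ t ≤ k ∧ wb hT Q q₀ v y t ∉ fre hT Q q₀ PM
  · exact build y hyv hyc
  by_cases hzc : ∃ t, 1 ≤ t ∧ t ≤ k ∧ wb hT Q q₀ v z t ∉ fre hT Q q₀ PM
  · exact build z hzv hzc
  -- both directions stay free: contradiction with no_stretch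
  exfalso
  push_neg at hyc hzc
  have hfy : ∀ i, i ≤ k → wb hT Q q₀ v y i ∈ fre hT Q q₀ PM := by
    intro i hi
    rcases Nat.eq_zero_or_pos i with h | h
    · rw [h, wb_zero]; exact hv
    · by_contra hcon
      exact hcon (by
        by_contra hcon2
        exact hcon2 (hyc i h hi) |>.elim)
  have hfz : ∀ i, i ≤ k → wb hT Q q₀ v z i ∈ fre hT Q q₀ PM := by
    intro i hi
    rcases Nat.eq_zero_or_pos i with h | h
    · rw [h, wb_zero]; exact hv
    · exact hzc i h hi
  have hInvy := wb_inv hT Q q₀ hq₀ (PM := PM) hyv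
  have hInvz := wb_inv hT Q q₀ hq₀ (PM := PM) hzv
  have hk4 : 4 ≤ k := by omega
  set c : ℕ → Fin n :=
    fun l => if l ≤ k then wb hT Q q₀ v z (k - l) else wb hT Q q₀ v y (l - k) with hc
  have hcz : ∀ l, l ≤ k → c l = wb hT Q q₀ v z (k - l) := by
    intro l hl; rw [hc]; simp only [if_pos hl]
  have hcy : ∀ l, k < l → c l = wb hT Q q₀ v y (l - k) := by
    intro l hl; rw [hc]; simp only [if_neg (by omega : ¬ l ≤ k)]
  have hfree : ∀ l, l ≤ 2*k → c l ∈ fre hT Q q₀ PM := by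
    intro l hl
    by_cases h : l ≤ k
    · rw [hcz l h]; exact hfz _ (by omega)
    · rw [hcy l (by omega)]; exact hfy _ (by omega)
  have hadjc : ∀ l, l + 1 ≤ 2*k → T.Adj (c l) (c (l+1)) := by
    intro l hl
    rcases Nat.lt_trichotomy l k with h | h | h
    · rw [hcz l (by omega), hcz (l+1) (by omega)]
      have hA := (hInvz (k - l - 1) (fun i hi => hfz i (by omega))).1
      have e : k - l - 1 + 1 = k - l := by omega
      rw [e] at hA
      have := ((nbS_mem_iff hT Q q₀).1 hA).2
      have e2 : k - (l + 1) = k - l - 1 := by omega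
      rw [e2]
      exact this.symm
    · subst h
      rw [hcz l (le_refl _), hcy (l+1) (by omega)]
      simp only [Nat.sub_self, Nat.add_sub_cancel_left]
      rw [wb_zero, wb_one]
      exact ((nbS_mem_iff hT Q q₀).1 hyv).2
    · rw [hcy l (by omega), hcy (l+1) (by omega)]
      have hA := (hInvy (l - k) (fun i hi => hfy i (by omega))).1
      have e : l + 1 - k = l - k + 1 := by omega
      rw [e]
      exact ((nbS_mem_iff hT Q q₀).1 hA).2
  have hnbc : ∀ l, l + 2 ≤ 2*k → c (l+2) ≠ c l := by
    intro l hl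
    rcases Nat.lt_trichotomy (l+1) k with h | h | h
    · -- both on the z side
      rw [hcz l (by omega), hcz (l+2) (by omega)]
      have hB := (hInvz (k - l - 1) (fun i hi => hfz i (by omega))).2 (by omega)
      rw [show k - l - 1 - 1 = k - (l+2) from by omega,
        show k - l - 1 + 1 = k - l from by omega] at hB
      exact pair_ne hT Q q₀ hq₀ (hfz (k - l - 1) (by omega)) hB
    · -- l + 1 = k : endpoints y and z
      have hlk : l = k - 1 := by omega
      rw [hcz l (by omega), hcy (l+2) (by omega)]
      rw [show l + 2 - k = 1 from by omega, show k - l = 1 from by omega]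
      rw [wb_one, wb_one]
      exact hyz
    · rcases Nat.eq_or_lt_of_le h with h2' | h2'
      · -- l = k : v and wb y 2
        have hlk : l = k := by omega
        subst hlk
        rw [hcz l (le_refl _), hcy (l+2) (by omega)]
        rw [Nat.sub_self, wb_zero, show l + 2 - l = 2 from by omega]
        have hB := (hInvy 1 (fun i hi => hfy i (by omega))).2 (le_refl _)
        rw [show (1:ℕ) - 1 = 0 from rfl, wb_zero] at hB
        exact pair_ne hT Q q₀ hq₀ (hfy 1 (by omega)) hB |>.symm
      · -- both on the y side
        rw [hcy l (by omega), hcy (l+2) (by omega)]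
        have hB := (hInvy (l - k + 1) (fun i hi => hfy i (by omega))).2 (by omega)
        rw [show l - k + 1 - 1 = l - k from by omega,
          show l - k + 1 + 1 = l + 2 - k from by omega] at hB
        exact pair_ne hT Q q₀ hq₀ (hfy (l - k + 1) (by omega)) hB |>.symm
  exact no_stretch hT Q q₀ hq₀ h2 d k hd hkd hnear hMmax c hadjc hnbc hfree

/-- chains are determined by their final pair -/
lemma charge_inj (hq₀ : q₀ ∈ Q) {PM : ∀ i, T.Walk (uM i) (vM i)} (t : ℕ) (c c' : ℕ → Fin n)
    (hfr : ∀ j, j < t → c j ∈ fre hT Q q₀ PM)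
    (hpa : ∀ j, j + 2 ≤ t → nbS hT Q q₀ (c (j+1)) = {c j, c (j+2)})
    (hpa' : ∀ j, j + 2 ≤ t → nbS hT Q q₀ (c' (j+1)) = {c' j, c' (j+2)})
    (hend : c t = c' t) (hpen : c (t-1) = c' (t-1)) :
    ∀ j, j ≤ t → c (t - j) = c' (t - j) := by
  intro j
  induction j using Nat.strong_induction_on with
  | _ j ih =>
    intro hjt
    match j, hjt with
    | 0, _ => simpa using hend
    | 1, _ => simpa using hpen
    | (j+2), hjt =>
      have h0 : c (t - j) = c' (t - j) := ih j (by omega) (by omega)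
      have h1 : c (t - j - 1) = c' (t - j - 1) := by
        have := ih (j+1) (by omega) (by omega)
        rwa [show t - (j+1) = t - j - 1 from by omega] at this
      have hp1 : nbS hT Q q₀ (c (t - j - 1)) = {c (t - (j+2)), c (t - j)} := by
        have := hpa (t - (j+2)) (by omega)
        rwa [show t - (j+2) + 1 = t - j - 1 from by omega,
          show t - (j+2) + 2 = t - j from by omega] at this
      have hp2 : nbS hT Q q₀ (c' (t - j - 1)) = {c' (t - (j+2)), c' (t - j)} := by
        have := hpa' (t - (j+2)) (by omega)
        rwa [show t - (j+2) + 1 = t - j - 1 from by omega,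
          show t - (j+2) + 2 = t - j from by omega] at this
      have hne := pair_ne hT Q q₀ hq₀ (hfr (t - j - 1) (by omega)) hp1
      have hmem : c (t - (j+2)) ∈ ({c' (t - (j+2)), c' (t - j)} : Finset (Fin n)) := by
        rw [← hp2, ← h1, hp1]
        simp
      rw [Finset.mem_insert, Finset.mem_singleton] at hmem
      rcases hmem with h | h
      · exact h
      · exfalso
        rw [← h0] at h
        exact hne (by rw [h])
  
/-- the number of free vertices is at most `k` times the number of entry pairs -/
lemma fre_card_le (hq₀ : q₀ ∈ Q) (h2 : 2 ≤ n) (d k : ℕ) (hd : 0 < d) (hkd : 4*d ≤ k)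
    (hnear : ∀ u, dg T u = 1 → ∃ q' ∈ Q, T.dist u q' < 2 * d)
    {PM : ∀ i, T.Walk (uM i) (vM i)}
    (hMmax : ∀ (a b : Fin n) (W : T.Walk a b), W.IsPath → W.length = k →
      IsBareWalk T W → (∀ x ∈ W.support, x ∉ VMv PM) → False) :
    (fre hT Q q₀ PM).card ≤
      (((stp hT Q q₀ PM) ×ˢ (fre hT Q q₀ PM)).filter (fun p => T.Adj p.1 p.2)).card * k := by
  classical
  set P : Fin n → Prop := fun v => ∃ (c : ℕ → Fin n) (t : ℕ), 1 ≤ t ∧ t ≤ k ∧ c 0 = v ∧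
      (∀ j, j < t → c j ∈ fre hT Q q₀ PM) ∧ c t ∈ stp hT Q q₀ PM ∧
      (∀ j, j + 1 ≤ t → T.Adj (c j) (c (j+1))) ∧
      (∀ j, j + 2 ≤ t → nbS hT Q q₀ (c (j+1)) = {c j, c (j+2)}) with hP
  have hPall : ∀ v ∈ fre hT Q q₀ PM, P v :=
    charge_exists hT Q q₀ hq₀ h2 d k hd hkd hnear hMmax
  set cv : Fin n → (ℕ → Fin n) := fun v => if h : P v then h.choose else (fun _ => v)
    with hcv
  set tv : Fin n → ℕ := fun v => if h : P v then h.choose_spec.choose else 0 with htv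
  have hspec : ∀ v, (h : P v) → 1 ≤ tv v ∧ tv v ≤ k ∧ cv v 0 = v ∧
      (∀ j, j < tv v → cv v j ∈ fre hT Q q₀ PM) ∧ cv v (tv v) ∈ stp hT Q q₀ PM ∧
      (∀ j, j + 1 ≤ tv v → T.Adj (cv v j) (cv v (j+1))) ∧
      (∀ j, j + 2 ≤ tv v → nbS hT Q q₀ (cv v (j+1)) = {cv v j, cv v (j+2)}) := by
    intro v h
    have e1 : cv v = h.choose := dif_pos h
    have e2 : tv v = h.choose_spec.choose := dif_pos h
    rw [e1, e2]
    exact h.choose_spec.choose_spec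
  have hmain := Finset.card_le_card_of_injOn
    (fun v => ((cv v (tv v), cv v (tv v - 1)), tv v - 1))
    (s := fre hT Q q₀ PM)
    (t := (((stp hT Q q₀ PM) ×ˢ (fre hT Q q₀ PM)).filter (fun p => T.Adj p.1 p.2))
      ×ˢ Finset.range k)
    (by
      intro v hv
      obtain ⟨h1, h2', h3, h4, h5, h6, h7⟩ := hspec v (hPall v hv)
      simp only [Finset.mem_coe, Finset.mem_product, Finset.mem_filter, Finset.mem_range]
      refine ⟨⟨⟨h5, h4 _ (by omega)⟩, ?_⟩, by omega⟩
      have := h6 (tv v - 1) (by omega)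
      rw [show tv v - 1 + 1 = tv v from by omega] at this
      exact this.symm)
    (by
      intro v hv w hw heq
      have hv' := Finset.mem_coe.1 hv
      have hw' := Finset.mem_coe.1 hw
      obtain ⟨hv1, hv2, hv3, hv4, hv5, hv6, hv7⟩ := hspec v (hPall v hv')
      obtain ⟨hw1, hw2, hw3, hw4, hw5, hw6, hw7⟩ := hspec w (hPall w hw')
      simp only [Prod.mk.injEq] at heq
      obtain ⟨⟨he1, he2⟩, he3⟩ := heq
      have htt : tv v = tv w := by omega
      rw [← htt] at he1 he2 hw7
      have hinj := charge_inj hT Q q₀ hq₀ (tv v) (cv v) (cv w) hv4 hv7 hw7 he1 he2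
        (tv v) (le_refl _)
      rw [Nat.sub_self, hv3, hw3] at hinj
      exact hinj)
  rwa [Finset.card_product, Finset.card_range] at hmain

/-- an interior vertex of a collection path has both neighbours inside the collection -/
lemma vm_interior {PM : ∀ i, T.Walk (uM i) (vM i)} (k : ℕ) (hk1 : 1 ≤ k)
    (hMpath : ∀ i, (PM i).IsPath) (hMlen : ∀ i, (PM i).length = k)
    (hMbare : ∀ i, IsBareWalk T (PM i)) {x y : Fin n} (hx : x ∈ VMv PM)
    (hxE : x ∉ (univ.image uM) ∪ (univ.image vM))
    (hyadj : T.Adj x y) (hyfre : y ∈ fre hT Q q₀ PM) : False := by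
  rw [VMv, Finset.mem_biUnion] at hx
  obtain ⟨i, -, hxi⟩ := hx
  rw [List.mem_toFinset] at hxi
  rw [Finset.mem_union, Finset.mem_image, Finset.mem_image] at hxE
  push_neg at hxE
  obtain ⟨hxu, hxv⟩ := hxE
  have hxu' : x ≠ uM i := fun h => (hxu i (mem_univ i) h.symm).elim
  have hxv' : x ≠ vM i := fun h => (hxv i (mem_univ i) h.symm).elim
  have heq : PM i = pb hT (uM i) (vM i) := pb_unique hT _ (hMpath i)
  have hdg : dg T x = 2 := hMbare i x hxi hxu' hxv'
  rw [heq] at hxi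
  obtain ⟨j, hj1, hj2⟩ := Walk.mem_support_iff_exists_getVert.1 hxi
  have hj0 : 1 ≤ j := by
    rcases Nat.eq_zero_or_pos j with h | h
    · exfalso; rw [h, Walk.getVert_zero] at hj1; exact hxu' hj1.symm
    · exact h
  have hjl : j < (pb hT (uM i) (vM i)).length := by
    rcases Nat.eq_or_lt_of_le hj2 with h | h
    · exfalso; rw [h, Walk.getVert_length] at hj1; exact hxv' hj1.symm
    · exact h
  set n1 := (pb hT (uM i) (vM i)).getVert (j-1) with hn1
  set n2 := (pb hT (uM i) (vM i)).getVert (j+1) with hn2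
  have hd1 : T.dist (uM i) n1 = j - 1 := pb_getVert_dist hT _ _ (by omega)
  have hd2 : T.dist (uM i) n2 = j + 1 := pb_getVert_dist hT _ _ (by omega)
  have hne12 : n1 ≠ n2 := by intro h; rw [h, hd2] at hd1; omega
  have ha1 : T.Adj x n1 := by
    have := (pb hT (uM i) (vM i)).adj_getVert_succ (i := j-1) (by omega)
    rw [show j - 1 + 1 = j from by omega, hj1] at this
    exact this.symm
  have ha2 : T.Adj x n2 := by
    have := (pb hT (uM i) (vM i)).adj_getVert_succ (i := j) hjl
    rwa [hj1] at this
  have hsub : ({n1, n2} : Set (Fin n)) ⊆ T.neighborSet x := by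
    intro w hw
    rcases hw with rfl | hw
    · exact ha1
    · rw [Set.mem_singleton_iff] at hw; subst hw; exact ha2
  have hset : ({n1, n2} : Set (Fin n)) = T.neighborSet x :=
    Set.eq_of_subset_of_ncard_le hsub
      (by rw [Set.ncard_pair hne12]; exact le_of_eq hdg) (Set.toFinite _)
  have hyn : y ∈ ({n1, n2} : Set (Fin n)) := by rw [hset]; exact hyadj
  have hyVM : y ∈ VMv PM := by
    have hmem : ∀ l, l ≤ (pb hT (uM i) (vM i)).length → (pb hT (uM i) (vM i)).getVert l ∈ VMv PM := by
      intro l hll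
      rw [VMv, Finset.mem_biUnion]
      exact ⟨i, mem_univ i, by
        rw [List.mem_toFinset, heq]
        exact pb_getVert_mem hT _ _ hll⟩
    rcases hyn with rfl | hy2
    · exact hmem (j-1) (by omega)
    · rw [Set.mem_singleton_iff] at hy2; subst hy2; exact hmem (j+1) (by omega)
  exact fre_not_VM hT Q q₀ hyfre hyVM

/-- counting the entry pairs -/
lemma pairs_card_le (hq₀ : q₀ ∈ Q) (hQleaf : ∀ x ∈ Q, dg T x = 1) (k : ℕ) (hk1 : 1 ≤ k)
    {PM : ∀ i, T.Walk (uM i) (vM i)}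
    (hMpath : ∀ i, (PM i).IsPath) (hMlen : ∀ i, (PM i).length = k)
    (hMbare : ∀ i, IsBareWalk T (PM i)) :
    (((stp hT Q q₀ PM) ×ˢ (fre hT Q q₀ PM)).filter (fun p => T.Adj p.1 p.2)).card ≤
      4 * Q.card + 4 * m := by
  classical
  set B := (SS hT Q q₀).filter (fun x => 3 ≤ (nbS hT Q q₀ x).card) with hB
  set ENDS := ((univ.image uM) ∪ (univ.image vM)).filter
    (fun x => (nbS hT Q q₀ x).card ≤ 2) with hENDS
  have hsub : ((stp hT Q q₀ PM) ×ˢ (fre hT Q q₀ PM)).filter (fun p => T.Adj p.1 p.2) ⊆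
      (B.biUnion (fun x => {x} ×ˢ nbS hT Q q₀ x)) ∪
      (Q.biUnion (fun x => {x} ×ˢ nbS hT Q q₀ x)) ∪
      (ENDS.biUnion (fun x => {x} ×ˢ nbS hT Q q₀ x)) := by
    rintro ⟨x, y⟩ hp
    rw [Finset.mem_filter, Finset.mem_product] at hp
    obtain ⟨⟨hx, hy⟩, hadj⟩ := hp
    have hynb : y ∈ nbS hT Q q₀ x :=
      (nbS_mem_iff hT Q q₀).2 ⟨fre_mem_SS hT Q q₀ hy, hadj⟩
    have hmem : ∀ s : Finset (Fin n), x ∈ s →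
        (x, y) ∈ s.biUnion (fun x => {x} ×ˢ nbS hT Q q₀ x) := by
      intro s hs
      rw [Finset.mem_biUnion]
      exact ⟨x, hs, by rw [Finset.mem_product]; exact ⟨Finset.mem_singleton_self x, hynb⟩⟩
    rw [Finset.mem_union, Finset.mem_union]
    rw [stp, Finset.mem_union, Finset.mem_union] at hx
    by_cases hxB : x ∈ B
    · exact Or.inl (Or.inl (hmem B hxB))
    rcases hx with (hx | hx) | hx
    · exact absurd hx hxB
    · exact Or.inl (Or.inr (hmem Q hx))
    · -- x is in the collection but not branching: must be an endpoint
      rw [Finset.mem_filter] at hx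
      have hxnb : (nbS hT Q q₀ x).card ≤ 2 := by
        by_contra hc
        exact hxB (by rw [hB, Finset.mem_filter]; exact ⟨hx.1, by omega⟩)
      have hxE : x ∈ (univ.image uM) ∪ (univ.image vM) := by
        by_contra hc
        exact vm_interior hT Q q₀ k hk1 hMpath hMlen hMbare hx.2 hc hadj hy
      exact Or.inr (hmem ENDS (by rw [hENDS, Finset.mem_filter]; exact ⟨hxE, hxnb⟩))
  have hcard := Finset.card_le_card hsub
  have hu1 := Finset.card_union_le
    ((B.biUnion (fun x => {x} ×ˢ nbS hT Q q₀ x)) ∪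
      (Q.biUnion (fun x => {x} ×ˢ nbS hT Q q₀ x)))
    (ENDS.biUnion (fun x => {x} ×ˢ nbS hT Q q₀ x))
  have hu2 := Finset.card_union_le (B.biUnion (fun x => {x} ×ˢ nbS hT Q q₀ x))
    (Q.biUnion (fun x => {x} ×ˢ nbS hT Q q₀ x))
  have hsq : ∀ (x : Fin n), ({x} ×ˢ nbS hT Q q₀ x).card = (nbS hT Q q₀ x).card := by
    intro x
    rw [Finset.card_product, Finset.card_singleton, one_mul]
  have hb1 : (B.biUnion (fun x => {x} ×ˢ nbS hT Q q₀ x)).card ≤ 3 * Q.card := by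
    calc (B.biUnion (fun x => {x} ×ˢ nbS hT Q q₀ x)).card
        ≤ ∑ x ∈ B, ({x} ×ˢ nbS hT Q q₀ x).card := Finset.card_biUnion_le
      _ = ∑ x ∈ B, (nbS hT Q q₀ x).card := by
          apply Finset.sum_congr rfl; intro x _; exact hsq x
      _ ≤ 3 * Q.card := (branching_bounds hT Q q₀ hq₀).2
  have hb2 : (Q.biUnion (fun x => {x} ×ˢ nbS hT Q q₀ x)).card ≤ Q.card := by
    calc (Q.biUnion (fun x => {x} ×ˢ nbS hT Q q₀ x)).card
        ≤ ∑ x ∈ Q, ({x} ×ˢ nbS hT Q q₀ x).card := Finset.card_biUnion_le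
      _ ≤ ∑ x ∈ Q, 1 := by
          apply Finset.sum_le_sum
          intro x hx
          rw [hsq x]
          have := nbS_card_le_dg hT Q q₀ x
          rw [hQleaf x hx] at this
          exact this
      _ = Q.card := by rw [Finset.sum_const, smul_eq_mul, mul_one]
  have hb3 : (ENDS.biUnion (fun x => {x} ×ˢ nbS hT Q q₀ x)).card ≤ 4 * m := by
    calc (ENDS.biUnion (fun x => {x} ×ˢ nbS hT Q q₀ x)).card
        ≤ ∑ x ∈ ENDS, ({x} ×ˢ nbS hT Q q₀ x).card := Finset.card_biUnion_le
      _ ≤ ∑ _x ∈ ENDS, 2 := by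
          apply Finset.sum_le_sum
          intro x hx
          rw [hsq x]
          rw [hENDS, Finset.mem_filter] at hx
          exact hx.2
      _ = 2 * ENDS.card := by rw [Finset.sum_const, smul_eq_mul, mul_comm]
      _ ≤ 4 * m := by
          have h1 : ENDS.card ≤ ((univ.image uM) ∪ (univ.image vM)).card :=
            Finset.card_le_card (Finset.filter_subset _ _)
          have h2 := Finset.card_union_le (univ.image uM) (univ.image vM)
          have h3 : (univ.image uM).card ≤ m := by
            calc (univ.image uM).card ≤ (univ : Finset (Fin m)).card :=
                Finset.card_image_le
              _ = m := by rw [Finset.card_univ, Fintype.card_fin]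
          have h4 : (univ.image vM).card ≤ m := by
            calc (univ.image vM).card ≤ (univ : Finset (Fin m)).card :=
                Finset.card_image_le
              _ = m := by rw [Finset.card_univ, Fintype.card_fin]
          omega
  omega

lemma vm_card_le {PM : ∀ i, T.Walk (uM i) (vM i)} (k : ℕ)
    (hMlen : ∀ i, (PM i).length = k) : (VMv PM).card ≤ (k+1) * m := by
  calc (VMv PM).card ≤ ∑ i : Fin m, (PM i).support.toFinset.card :=
      Finset.card_biUnion_le
    _ ≤ ∑ _i : Fin m, (k+1) := by
        apply Finset.sum_le_sum
        intro i _
        calc (PM i).support.toFinset.card ≤ (PM i).support.length :=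
            (PM i).support.toFinset_card_le
          _ = k + 1 := by rw [Walk.length_support, hMlen i]
    _ = (k+1) * m := by rw [Finset.sum_const, smul_eq_mul, mul_comm, Finset.card_univ,
        Fintype.card_fin]

include hT in
/-- the master inequality -/
lemma master_count (hq₀ : q₀ ∈ Q) (hQleaf : ∀ x ∈ Q, dg T x = 1) (h2 : 2 ≤ n)
    (d k : ℕ) (hd : 0 < d) (hkd : 4*d ≤ k)
    (hnear : ∀ u, dg T u = 1 → ∃ q' ∈ Q, T.dist u q' < 2 * d)
    {PM : ∀ i, T.Walk (uM i) (vM i)}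
    (hMpath : ∀ i, (PM i).IsPath) (hMlen : ∀ i, (PM i).length = k)
    (hMbare : ∀ i, IsBareWalk T (PM i))
    (hMmax : ∀ (a b : Fin n) (W : T.Walk a b), W.IsPath → W.length = k →
      IsBareWalk T W → (∀ x ∈ W.support, x ∉ VMv PM) → False) :
    n ≤ (univ.filter (fun x => dg T x = 1)).card * (2 * d) + 2 * Q.card + (k+1) * m +
      (4 * Q.card + 4 * m) * k := by
  classical
  have hk1 : 1 ≤ k := by omega
  have hn : n = (univ \ SS hT Q q₀).card + (SS hT Q q₀).card := by
    rw [Finset.card_sdiff_add_card_eq_card (Finset.subset_univ _), Finset.card_univ,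
      Fintype.card_fin]
  have hSS : (SS hT Q q₀).card ≤ (stp hT Q q₀ PM).card + (fre hT Q q₀ PM).card := by
    have hsub2 : SS hT Q q₀ ⊆ (stp hT Q q₀ PM) ∪ (fre hT Q q₀ PM) := by
      intro x hx
      rw [Finset.mem_union]
      by_cases h : x ∈ stp hT Q q₀ PM
      · exact Or.inl h
      · exact Or.inr (Finset.mem_sdiff.2 ⟨hx, h⟩)
    exact le_trans (Finset.card_le_card hsub2) (Finset.card_union_le _ _)
  have hstp : (stp hT Q q₀ PM).card ≤ Q.card + Q.card + (k+1)*m := by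
    have h1 := Finset.card_union_le
      (((SS hT Q q₀).filter (fun x => 3 ≤ (nbS hT Q q₀ x).card)) ∪ Q)
      ((SS hT Q q₀).filter (fun x => x ∈ VMv PM))
    have h2' := Finset.card_union_le
      ((SS hT Q q₀).filter (fun x => 3 ≤ (nbS hT Q q₀ x).card)) Q
    have h3 := (branching_bounds hT Q q₀ hq₀).1
    have h4a : (SS hT Q q₀).filter (fun x => x ∈ VMv PM) ⊆ VMv PM :=
      fun x hx => (Finset.mem_filter.1 hx).2
    have h4 : ((SS hT Q q₀).filter (fun x => x ∈ VMv PM)).card ≤ (k+1)*m :=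
      le_trans (Finset.card_le_card h4a) (vm_card_le k hMlen)
    rw [stp]
    omega
  have hfre := fre_card_le hT Q q₀ hq₀ h2 d k hd hkd hnear hMmax
  have hpairs := pairs_card_le hT Q q₀ hq₀ hQleaf k hk1 hMpath hMlen hMbare
  have hcompl := card_compl_SS hT Q q₀ h2 d hnear
  have hfre2 : (fre hT Q q₀ PM).card ≤ (4 * Q.card + 4 * m) * k :=
    le_trans hfre (Nat.mul_le_mul_right k hpairs)
  omega

end Main

/-- witness for a collection of `m` disjoint bare paths of length `k` -/
def Wit (T : SimpleGraph (Fin n)) (k m : ℕ) : Prop :=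
  ∃ (u v : Fin m → Fin n) (P : (i : Fin m) → T.Walk (u i) (v i)),
    (∀ i, (P i).IsPath) ∧ (∀ i, (P i).length = k) ∧ (∀ i, IsBareWalk T (P i)) ∧
    (∀ i j, i ≠ j → List.Disjoint (P i).support (P j).support)

lemma wit_zero (T : SimpleGraph (Fin n)) (k : ℕ) : Wit T k 0 :=
  ⟨Fin.elim0, Fin.elim0, fun i => i.elim0, fun i => i.elim0, fun i => i.elim0,
    fun i => i.elim0, fun i => i.elim0⟩

lemma wit_le (T : SimpleGraph (Fin n)) (k m : ℕ) (h : Wit T k m) : m ≤ n := by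
  obtain ⟨u, v, P, h1, h2, h3, h4⟩ := h
  have hinj : Function.Injective u := by
    intro i j hij
    by_contra hne
    exact h4 i j hne (hij ▸ Walk.start_mem_support (P i)) (Walk.start_mem_support (P j))
  have := Fintype.card_le_of_injective u hinj
  simpa using this

lemma wit_succ (T : SimpleGraph (Fin n)) (k m : ℕ)
    (u v : Fin m → Fin n) (P : (i : Fin m) → T.Walk (u i) (v i))
    (h1 : ∀ i, (P i).IsPath) (h2 : ∀ i, (P i).length = k) (h3 : ∀ i, IsBareWalk T (P i))
    (h4 : ∀ i j, i ≠ j → List.Disjoint (P i).support (P j).support)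
    (a b : Fin n) (W : T.Walk a b) (hp : W.IsPath) (hl : W.length = k)
    (hb : IsBareWalk T W)
    (hdis : ∀ i, List.Disjoint W.support (P i).support) : Wit T k (m+1) := by
  classical
  refine ⟨fun i => if h : (i : ℕ) < m then u ⟨i, h⟩ else a,
    fun i => if h : (i : ℕ) < m then v ⟨i, h⟩ else b,
    fun i => if h : (i : ℕ) < m
      then (P ⟨i, h⟩).copy (by simp only [dif_pos h]) (by simp only [dif_pos h])
      else W.copy (by simp only [dif_neg h]) (by simp only [dif_neg h]), ?_, ?_, ?_, ?_⟩
  · intro i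
    by_cases h : (i : ℕ) < m
    · simp only [dif_pos h, Walk.isPath_copy]; exact h1 _
    · simp only [dif_neg h, Walk.isPath_copy]; exact hp
  · intro i
    by_cases h : (i : ℕ) < m
    · simp only [dif_pos h, Walk.length_copy]; exact h2 _
    · simp only [dif_neg h, Walk.length_copy]; exact hl
  · intro i
    by_cases h : (i : ℕ) < m
    · simp only [dif_pos h]
      intro w hw hw1 hw2
      rw [Walk.support_copy] at hw
      rw [dif_pos h] at hw1
      rw [dif_pos h] at hw2
      exact h3 ⟨i, h⟩ w hw hw1 hw2
    · simp only [dif_neg h]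
      intro w hw hw1 hw2
      rw [Walk.support_copy] at hw
      rw [dif_neg h] at hw1
      rw [dif_neg h] at hw2
      exact hb w hw hw1 hw2
  · intro i j hij
    by_cases hi : (i : ℕ) < m <;> by_cases hj : (j : ℕ) < m
    · simp only [dif_pos hi, dif_pos hj, Walk.support_copy]
      refine h4 ⟨i, hi⟩ ⟨j, hj⟩ ?_
      intro hc
      have : (i : ℕ) = (j : ℕ) := by simpa using congrArg Fin.val hc
      exact hij (Fin.ext this)
    · simp only [dif_pos hi, dif_neg hj, Walk.support_copy]
      intro x hx hx'
      exact hdis ⟨i, hi⟩ hx' hx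
    · simp only [dif_neg hi, dif_pos hj, Walk.support_copy]
      intro x hx hx'
      exact hdis ⟨j, hj⟩ hx hx'
    · exfalso
      apply hij
      have hi' : (i : ℕ) = m := by omega
      have hj' : (j : ℕ) = m := by omega
      exact Fin.ext (by omega)

end TreeAux


open TreeAux

/-- Let `n, k, d` be positive integers with `n ≥ 60k` and `k ≥ 4d`.  If a tree `T` with
`n` vertices has at most `n/(5d)` leaves, then `T` either contains a `2d`-separated set
of at least `n/(40k)` leaves, or a collection of at least `n/(40k)` pairwise
vertex-disjoint bare paths of length `k`. -/
theorem statement_2 (n k d : ℕ) (hn : 0 < n) (hk : 0 < k) (hd : 0 < d)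
    (hnk : 60 * k ≤ n) (hkd : 4 * d ≤ k)
    (T : SimpleGraph (Fin n)) (hT : T.IsTree)
    (hleaves : (({v : Fin n | (T.neighborSet v).ncard = 1}).ncard : ℝ) ≤ n / (5 * d)) :
    (∃ Q : Set (Fin n),
        (n : ℝ) / (40 * k) ≤ Q.ncard ∧
        (∀ v ∈ Q, (T.neighborSet v).ncard = 1) ∧
        Q.Pairwise fun u v => 2 * d ≤ T.dist u v) ∨
    (∃ m : ℕ, (n : ℝ) / (40 * k) ≤ m ∧
      ∃ (u v : Fin m → Fin n) (P : (i : Fin m) → T.Walk (u i) (v i)),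
        (∀ i, (P i).IsPath) ∧
        (∀ i, (P i).length = k) ∧
        (∀ i, IsBareWalk T (P i)) ∧
        (∀ i j, i ≠ j → List.Disjoint (P i).support (P j).support)) := by
  classical
  by_contra hcon
  push_neg at hcon
  obtain ⟨hA, hB⟩ := hcon
  have hk4 : 4 ≤ k := by omega
  have h2 : 2 ≤ n := by omega
  -- the leaf set as a finset
  set L := Finset.univ.filter (fun x => dg T x = 1) with hLdef
  have hsetL : {v : Fin n | (T.neighborSet v).ncard = 1} = ↑L := by
    ext v
    simp [hLdef, dg]
  rw [hsetL, Set.ncard_coe_finset] at hleaves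
  have hld : 5 * (d * L.card) ≤ n := by
    rw [le_div_iff₀ (by positivity : (0:ℝ) < 5 * d)] at hleaves
    have h1 : ((5 * (d * L.card) : ℕ) : ℝ) ≤ (n : ℝ) := by push_cast; linarith
    exact_mod_cast h1
  -- construct a maximum 2d-separated set of leaves
  set good : Finset (Fin n) → Prop := fun F =>
    (∀ x ∈ F, dg T x = 1) ∧ (∀ x ∈ F, ∀ y ∈ F, x ≠ y → 2 * d ≤ T.dist x y) with hgood
  obtain ⟨u₀, hu₀⟩ := exists_leaf hT h2
  have hsing : good {u₀} := by
    constructor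
    · intro x hx
      rw [Finset.mem_singleton] at hx
      subst hx; exact hu₀
    · intro x hx y hy hxy
      rw [Finset.mem_singleton] at hx hy
      exact absurd (hx.trans hy.symm) hxy
  have hsingmem : {u₀} ∈ Finset.univ.powerset.filter good := by
    rw [Finset.mem_filter]
    exact ⟨Finset.mem_powerset.2 (Finset.subset_univ _), hsing⟩
  have hne : (Finset.univ.powerset.filter good).Nonempty := ⟨{u₀}, hsingmem⟩
  obtain ⟨Q, hQmem, hQmax⟩ := Finset.exists_max_image
    (Finset.univ.powerset.filter good) (fun F => F.card) hne
  have hQgood : good Q := (Finset.mem_filter.1 hQmem).2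
  have hQleaf : ∀ x ∈ Q, dg T x = 1 := hQgood.1
  have hQcard1 : 1 ≤ Q.card := by
    have := hQmax {u₀} hsingmem
    rwa [Finset.card_singleton] at this
  have hQpos : 0 < Q.card := by omega
  obtain ⟨q₀, hq₀⟩ := Finset.card_pos.1 hQpos
  -- Q is small
  have hQlt : (Q.card : ℝ) < n / (40 * k) := by
    by_contra hge
    push_neg at hge
    refine hA ↑Q (by rw [Set.ncard_coe_finset]; exact hge) ?_ ?_
    · intro v hv
      have := hQleaf v (Finset.mem_coe.1 hv)
      rwa [dg] at this
    · intro x hx y hy hxy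
      exact hQgood.2 x (Finset.mem_coe.1 hx) y (Finset.mem_coe.1 hy) hxy
  have hq : 40 * (k * Q.card) < n := by
    rw [lt_div_iff₀ (by positivity : (0:ℝ) < 40 * k)] at hQlt
    have h1 : ((40 * (k * Q.card) : ℕ) : ℝ) < (n : ℝ) := by push_cast; linarith
    exact_mod_cast h1
  -- nearness of all leaves to Q
  have hnear : ∀ u, dg T u = 1 → ∃ q' ∈ Q, T.dist u q' < 2 * d := by
    intro u hu
    by_cases huQ : u ∈ Q
    · exact ⟨u, huQ, by rw [SimpleGraph.dist_self]; omega⟩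
    by_contra hc
    push_neg at hc
    have hgood2 : good (insert u Q) := by
      constructor
      · intro x hx
        rw [Finset.mem_insert] at hx
        rcases hx with rfl | hx
        · exact hu
        · exact hQleaf x hx
      · intro x hx y hy hxy
        rw [Finset.mem_insert] at hx hy
        rcases hx with rfl | hx <;> rcases hy with rfl | hy
        · exact absurd rfl hxy
        · exact hc y hy
        · rw [SimpleGraph.dist_comm]; exact hc x hx
        · exact hQgood.2 x hx y hy hxy
    have hinsmem : insert u Q ∈ Finset.univ.powerset.filter good := by
      rw [Finset.mem_filter]
      exact ⟨Finset.mem_powerset.2 (Finset.subset_univ _), hgood2⟩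
    have := hQmax (insert u Q) hinsmem
    rw [Finset.card_insert_of_notMem huQ] at this
    omega
  -- the maximum collection of disjoint bare paths
  have hWne : (setOf (Wit T k)).Nonempty := ⟨0, wit_zero T k⟩
  have hWbdd : BddAbove (setOf (Wit T k)) := ⟨n, fun m' hm' => wit_le T k m' hm'⟩
  set mM := sSup (setOf (Wit T k)) with hmM
  have hWit : Wit T k mM := Nat.sSup_mem hWne hWbdd
  obtain ⟨uM, vM, PM, hMpath, hMlen, hMbare, hMdisj⟩ := hWit
  have hmlt : (mM : ℝ) < n / (40 * k) := by
    by_contra hge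
    push_neg at hge
    obtain ⟨i, j, hij, hnd⟩ := hB mM hge uM vM PM hMpath hMlen hMbare
    exact hnd (hMdisj i j hij)
  have hm : 40 * (k * mM) < n := by
    rw [lt_div_iff₀ (by positivity : (0:ℝ) < 40 * k)] at hmlt
    have h1 : ((40 * (k * mM) : ℕ) : ℝ) < (n : ℝ) := by push_cast; linarith
    exact_mod_cast h1
  -- maximality of the collection
  have hMmax : ∀ (a b : Fin n) (W : T.Walk a b), W.IsPath → W.length = k →
      IsBareWalk T W → (∀ x ∈ W.support, x ∉ VMv PM) → False := by
    intro a b W hp hl hb hdis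
    have hdis' : ∀ i, List.Disjoint W.support (PM i).support := by
      intro i x hxW hxP
      exact hdis x hxW (by
        rw [VMv, Finset.mem_biUnion]
        exact ⟨i, Finset.mem_univ i, List.mem_toFinset.2 hxP⟩)
    have hnew : Wit T k (mM + 1) :=
      wit_succ T k mM uM vM PM hMpath hMlen hMbare hMdisj a b W hp hl hb hdis'
    have : mM + 1 ≤ mM := by
      rw [hmM]
      exact le_csSup hWbdd hnew
    omega
  -- the master inequality
  have hmaster := master_count hT Q q₀ hq₀ hQleaf h2 d k hd hkd hnear
    hMpath hMlen hMbare hMmax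
  -- numerics
  have c1 : (n : ℝ) ≤ (L.card : ℝ) * (2 * d) + 2 * Q.card + (k + 1) * mM +
      (4 * Q.card + 4 * mM) * k := by exact_mod_cast hmaster
  have c2 : 5 * ((d:ℝ) * L.card) ≤ n := by exact_mod_cast hld
  have c3 : 40 * ((k:ℝ) * Q.card) < n := by exact_mod_cast hq
  have c4 : 40 * ((k:ℝ) * mM) < n := by exact_mod_cast hm
  have hk4' : (4:ℝ) ≤ k := by exact_mod_cast hk4
  have hp1 : 4 * (Q.card : ℝ) ≤ (k:ℝ) * Q.card :=
    mul_le_mul_of_nonneg_right hk4' (by positivity)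
  have hp2 : 4 * (mM : ℝ) ≤ (k:ℝ) * mM :=
    mul_le_mul_of_nonneg_right hk4' (by positivity)
  have hn' : (0:ℝ) < n := by exact_mod_cast hn
  nlinarith [c1, c2, c3, c4, hp1, hp2, hn']
end

section
/- Let k ≥ 0 and Δ ≥ 2 be integers, and let T be a tree with maximum degree at most Δ and at least 3·Δ^k vertices. Then there exists a set Q ⊆ V(T) which is (2k+2)-separated in T, with |Q| ≥ |T|/((8k+8)·Δ^k), such that every vertex of Q is either a leaf of T or an interior vertex of a bare path of T (equivalently, has degree exactly 2 in T). -/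
open Finset SimpleGraph Function

namespace TreeSep3

variable {V : Type*} {T : SimpleGraph V}

/-- There is a walk from the start of `p` to `p.getVert t` of length at most `t`. -/
lemma exists_walk_getVert {a b : V} (p : T.Walk a b) (t : ℕ) :
    ∃ q : T.Walk a (p.getVert t), q.length ≤ t := by
  induction p generalizing t with
  | nil => exact ⟨Walk.nil, by simp⟩
  | cons h q ih =>
    cases t with
    | zero => exact ⟨Walk.nil, by simp; rfl⟩
    | succ t =>
      obtain ⟨w, hw⟩ := ih t
      exact ⟨Walk.cons h w, by simpa using Nat.succ_le_succ hw⟩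

lemma dist_getVert_le {a b : V} (p : T.Walk a b) (t : ℕ) :
    T.dist a (p.getVert t) ≤ t := by
  obtain ⟨q, hq⟩ := exists_walk_getVert p t
  exact le_trans (SimpleGraph.dist_le q) hq

open scoped Classical in
/-- Parent of `x` towards root `r` : a neighbor strictly closer to `r`. -/
noncomputable def par (T : SimpleGraph V) (r x : V) : V :=
  if h : ∃ y, T.Adj x y ∧ T.dist r y + 1 = T.dist r x then h.choose else x

lemma par_spec (hc : T.Connected) {r x : V} (hx : x ≠ r) :
    T.Adj x (par T r x) ∧ T.dist r (par T r x) + 1 = T.dist r x := by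
  have hd : T.dist r x ≠ 0 := fun h0 => hx (hc.dist_eq_zero_iff.mp h0).symm
  obtain ⟨p, hp, hlen⟩ := hc.exists_path_of_dist r x
  set d := T.dist r x with hdd
  have hd1 : d - 1 < p.length := by omega
  have hadj := p.adj_getVert_succ hd1
  have he : d - 1 + 1 = d := by omega
  rw [he] at hadj
  have hx2 : p.getVert d = x := by
    have := p.getVert_length
    rwa [hlen] at this
  rw [hx2] at hadj
  have hle : T.dist r (p.getVert (d - 1)) ≤ d - 1 := dist_getVert_le p (d - 1)
  have hge : d ≤ T.dist r (p.getVert (d - 1)) + 1 := by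
    have h1 : T.dist r x ≤ T.dist r (p.getVert (d - 1)) + T.dist (p.getVert (d - 1)) x :=
      hc.dist_triangle
    have h2 : T.dist (p.getVert (d - 1)) x ≤ 1 := SimpleGraph.dist_le (Walk.cons hadj Walk.nil)
    omega
  have hex : ∃ y, T.Adj x y ∧ T.dist r y + 1 = T.dist r x :=
    ⟨p.getVert (d - 1), hadj.symm, by omega⟩
  rw [par, dif_pos hex]
  exact ⟨hex.choose_spec.1, hex.choose_spec.2⟩


noncomputable def pit (T : SimpleGraph V) (r : V) (t : ℕ) (x : V) : V := (par T r)^[t] x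

lemma pit_zero (r x : V) : pit T r 0 x = x := rfl

lemma pit_succ_left (r x : V) (t : ℕ) : pit T r (t+1) x = pit T r t (par T r x) :=
  Function.iterate_succ_apply _ _ _

lemma pit_succ_right (r x : V) (t : ℕ) : pit T r (t+1) x = par T r (pit T r t x) :=
  Function.iterate_succ_apply' _ _ _

lemma dist_root_pit (hc : T.Connected) {r x : V} {t : ℕ} (ht : t ≤ T.dist r x) :
    T.dist r (pit T r t x) + t = T.dist r x := by
  induction t with
  | zero => simp [pit_zero]
  | succ t ih =>
    have ih' := ih (by omega)
    have hw : pit T r t x ≠ r := by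
      intro h
      rw [h, SimpleGraph.dist_self] at ih'
      omega
    have hp := (par_spec hc hw).2
    rw [pit_succ_right]
    omega

lemma pit_depth (hc : T.Connected) (r x : V) : pit T r (T.dist r x) x = r := by
  have := dist_root_pit hc (le_refl (T.dist r x)) (x := x)
  have h0 : T.dist r (pit T r (T.dist r x) x) = 0 := by omega
  exact (hc.dist_eq_zero_iff.mp h0).symm

lemma exists_chain_walk (hc : T.Connected) {r : V} :
    ∀ (t : ℕ) (x : V), t ≤ T.dist r x →
    ∃ p : T.Walk x (pit T r t x), p.length = t ∧
      p.support = (List.range (t+1)).map (fun a => pit T r a x) := by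
  intro t
  induction t with
  | zero => intro x _; exact ⟨Walk.nil, rfl, by simp [List.range_succ, pit_zero]⟩
  | succ t ih =>
    intro x ht
    have hx : x ≠ r := by
      intro h
      rw [h] at ht
      rw [SimpleGraph.dist_self] at ht
      omega
    obtain ⟨hadj, hdd⟩ := par_spec hc hx
    obtain ⟨q, hlen, hsup⟩ := ih (par T r x) (by omega)
    refine ⟨(Walk.cons hadj q).copy rfl (pit_succ_left r x t).symm, by simp [hlen], ?_⟩
    rw [Walk.support_copy, Walk.support_cons, hsup]
    conv_rhs => rw [List.range_succ_eq_map]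
    rw [List.map_cons, List.map_map]
    congr 1

lemma isPath_length_eq (hT : T.IsTree) {a b : V} (p : T.Walk a b) (hp : p.IsPath) :
    p.length = T.dist a b := by
  obtain ⟨q, hq, hqlen⟩ := hT.isConnected.exists_path_of_dist a b
  rw [(hT.existsUnique_path a b).unique hp hq, hqlen]

lemma pit_inj (hc : T.Connected) {r x : V} {a b : ℕ} (ha : a ≤ T.dist r x)
    (hb : b ≤ T.dist r x) (h : pit T r a x = pit T r b x) : a = b := by
  have h1 := dist_root_pit hc ha (x := x)
  have h2 := dist_root_pit hc hb (x := x)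
  rw [h] at h1
  omega

lemma dist_pit (hT : T.IsTree) {r x : V} {t : ℕ} (ht : t ≤ T.dist r x) :
    T.dist x (pit T r t x) = t := by
  have hc := hT.isConnected
  obtain ⟨p, hlen, hsup⟩ := exists_chain_walk hc t x ht
  have hpath : p.IsPath := by
    rw [Walk.isPath_def, hsup]
    refine List.Nodup.map_on ?_ List.nodup_range
    intro a ha b hb hab
    rw [List.mem_range] at ha hb
    exact pit_inj hc (by omega) (by omega) hab
  rw [← isPath_length_eq hT p hpath, hlen]

lemma tripod (hT : T.IsTree) (r u v : V) :
    ∃ j i : ℕ, j ≤ T.dist r u ∧ i ≤ T.dist r v ∧ pit T r j u = pit T r i v ∧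
      T.dist u v = j + i ∧ T.dist u (pit T r j u) = j ∧ T.dist v (pit T r i v) = i ∧
      T.dist r u + i = T.dist r v + j := by
  classical
  have hc := hT.isConnected
  have hP : ∃ j, j ≤ T.dist r u ∧ ∃ i, i ≤ T.dist r v ∧ pit T r j u = pit T r i v :=
    ⟨T.dist r u, le_rfl, T.dist r v, le_rfl, by rw [pit_depth hc, pit_depth hc]⟩
  obtain ⟨hj0le, hPi⟩ := Nat.find_spec hP
  set j0 := Nat.find hP with hj0def
  obtain ⟨hi0le, heq⟩ := Nat.find_spec hPi
  set i0 := Nat.find hPi with hi0def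
  obtain ⟨p1, hl1, hs1⟩ := exists_chain_walk hc j0 u hj0le
  obtain ⟨p2, hl2, hs2⟩ := exists_chain_walk hc i0 v hi0le
  let q : T.Walk u v := p1.append ((p2.reverse).copy heq.symm rfl)
  have hql : q.length = j0 + i0 := by
    simp [q, Walk.length_append, Walk.length_copy, Walk.length_reverse, hl1, hl2]
  have hqsup : q.support =
      ((List.range (j0+1)).map (fun a => pit T r a u)) ++
        ((List.range i0).map (fun a => pit T r a v)).reverse := by
    rw [Walk.support_append, Walk.support_copy, Walk.support_reverse, hs1, hs2]
    congr 1
    rw [List.range_succ, List.map_append, List.reverse_append]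
    simp
  have hqpath : q.IsPath := by
    rw [Walk.isPath_def, hqsup]
    apply List.Nodup.append
    · refine List.Nodup.map_on ?_ List.nodup_range
      intro a ha b hb hab
      rw [List.mem_range] at ha hb
      exact pit_inj hc (by omega) (by omega) hab
    · rw [List.nodup_reverse]
      refine List.Nodup.map_on ?_ List.nodup_range
      intro a ha b hb hab
      rw [List.mem_range] at ha hb
      exact pit_inj hc (by omega) (by omega) hab
    · intro z hz1 hz2
      rw [List.mem_reverse] at hz2
      obtain ⟨a, ha, rfl⟩ := List.mem_map.mp hz1
      obtain ⟨b, hb, hab⟩ := List.mem_map.mp hz2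
      rw [List.mem_range] at ha hb
      -- pit a u = pit b v with a ≤ j0, b < i0
      rcases Nat.lt_or_ge a j0 with hlt | hge
      · exact Nat.find_min hP hlt ⟨by omega, b, by omega, hab.symm⟩
      · have haj : a = j0 := by omega
        subst haj
        exact Nat.find_min hPi hb ⟨by omega, hab.symm⟩
  have hduv : T.dist u v = j0 + i0 := by
    rw [← isPath_length_eq hT q hqpath, hql]
  have hd1 := dist_root_pit hc hj0le (x := u)
  have hd2 := dist_root_pit hc hi0le (x := v)
  refine ⟨j0, i0, hj0le, hi0le, heq, hduv, dist_pit hT hj0le, dist_pit hT hi0le, ?_⟩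
  rw [heq] at hd1
  omega


section Counting

variable [Fintype V] [DecidableEq V] [DecidableRel T.Adj]

lemma geom_nat {x : ℕ} (hx : 1 ≤ x) (m : ℕ) :
    1 + (x - 1) * ∑ s ∈ range m, x ^ s = x ^ m := by
  induction m with
  | zero => simp
  | succ m ih =>
    rw [sum_range_succ, Nat.mul_add, ← Nat.add_assoc, ih, pow_succ]
    have : x - 1 + 1 = x := by omega
    calc x ^ m + (x - 1) * x ^ m = (x - 1 + 1) * x ^ m := by ring
      _ = x ^ m * x := by rw [this]; ring

lemma dirball_card_le (hT : T.IsTree) {Δ : ℕ} (hΔ : 2 ≤ Δ) (hdeg : ∀ w, T.degree w ≤ Δ)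
    (c : V) (X : Finset V) (hX : ∀ x ∈ X, T.Adj c x) (m : ℕ) :
    (univ.filter (fun v => T.dist c v ≤ m ∧ ∀ x ∈ X, T.dist x v = T.dist c v + 1)).card
      ≤ 1 + (T.degree c - X.card) * ∑ s ∈ range m, (Δ - 1) ^ s := by
  classical
  have hc := hT.isConnected
  set B := T.degree c - X.card with hB
  set Ns : ℕ → Finset V := fun t =>
    univ.filter (fun v => T.dist c v = t ∧ ∀ x ∈ X, T.dist x v = t + 1) with hNs
  have h0 : (Ns 0).card ≤ 1 := by
    refine le_trans (card_le_card ?_) (card_singleton c).le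
    intro v hv
    rw [hNs, mem_filter] at hv
    rw [mem_singleton]
    exact (hc.dist_eq_zero_iff.mp hv.2.1).symm
  have hXsub : X ⊆ T.neighborFinset c := by
    intro x hx
    rw [SimpleGraph.mem_neighborFinset]
    exact hX x hx
  have h1 : (Ns 1).card ≤ B := by
    have hsub : Ns 1 ⊆ T.neighborFinset c \ X := by
      intro v hv
      rw [hNs, mem_filter] at hv
      obtain ⟨-, hd, hall⟩ := hv
      rw [mem_sdiff, SimpleGraph.mem_neighborFinset]
      constructor
      · exact SimpleGraph.dist_eq_one_iff_adj.mp hd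
      · intro hvX
        have := hall v hvX
        rw [SimpleGraph.dist_self] at this
        omega
    calc (Ns 1).card ≤ (T.neighborFinset c \ X).card := card_le_card hsub
      _ = T.degree c - X.card := by rw [card_sdiff_of_subset hXsub, SimpleGraph.card_neighborFinset_eq_degree]
  have hstep : ∀ t, 1 ≤ t → (Ns (t+1)).card ≤ (Δ - 1) * (Ns t).card := by
    intro t ht
    have hmem : ∀ v ∈ Ns (t+1), par T c v ∈ Ns t ∧ T.Adj v (par T c v) := by
      intro v hv
      rw [hNs, mem_filter] at hv
      obtain ⟨-, hd, hall⟩ := hv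
      have hvc : v ≠ c := by
        intro h
        rw [h, SimpleGraph.dist_self] at hd
        omega
      obtain ⟨hadj, hpd⟩ := par_spec hc hvc (r := c)
      rw [hd] at hpd
      refine ⟨?_, hadj⟩
      rw [hNs, mem_filter]
      refine ⟨mem_univ _, by omega, ?_⟩
      intro x hx
      have hub : T.dist x (par T c v) ≤ 1 + T.dist c (par T c v) :=
        le_trans hc.dist_triangle (by
          rw [SimpleGraph.dist_eq_one_iff_adj.mpr (hX x hx).symm])
      have hlb : T.dist x v ≤ T.dist x (par T c v) + 1 := by
        have h2 : T.dist (par T c v) v ≤ 1 :=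
          SimpleGraph.dist_le (Walk.cons hadj.symm Walk.nil)
        have h3 : T.dist x v ≤ T.dist x (par T c v) + T.dist (par T c v) v :=
          hc.dist_triangle
        omega
      have := hall x hx
      omega
    have himg : (Ns (t+1)).image (par T c) ⊆ Ns t := by
      intro w hw
      rw [mem_image] at hw
      obtain ⟨v, hv, rfl⟩ := hw
      exact (hmem v hv).1
    calc (Ns (t+1)).card ≤ (Δ - 1) * ((Ns (t+1)).image (par T c)).card := by
          apply Finset.card_le_mul_card_image
          intro w hw
          obtain ⟨v0, hv0, hv0w⟩ := mem_image.mp hw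
          have hwNs : w ∈ Ns t := himg hw
          rw [hNs, mem_filter] at hwNs
          have hwc : w ≠ c := by
            intro h
            rw [h, SimpleGraph.dist_self] at hwNs
            omega
          obtain ⟨hwadj, hwd⟩ := par_spec hc hwc (r := c)
          have hsub : (Ns (t+1)).filter (fun v => par T c v = w) ⊆
              (T.neighborFinset w).erase (par T c w) := by
            intro v hv
            rw [mem_filter] at hv
            obtain ⟨hv1, hv2⟩ := hv
            obtain ⟨hvNs, hvadj⟩ := hmem v hv1
            rw [mem_erase, SimpleGraph.mem_neighborFinset]
            constructor
            · intro hvpw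
              rw [hNs, mem_filter] at hv1
              have hdv : T.dist c v = t + 1 := hv1.2.1
              have hdw : T.dist c w = t := hwNs.2.1
              rw [hvpw] at hdv
              omega
            · rw [← hv2]
              exact hvadj.symm
          calc ((Ns (t+1)).filter (fun v => par T c v = w)).card
              ≤ ((T.neighborFinset w).erase (par T c w)).card := card_le_card hsub
            _ = T.degree w - 1 := by
                rw [card_erase_of_mem, SimpleGraph.card_neighborFinset_eq_degree]
                rw [SimpleGraph.mem_neighborFinset]
                exact hwadj
            _ ≤ Δ - 1 := by have := hdeg w; omega
      _ ≤ (Δ - 1) * (Ns t).card := by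
          exact Nat.mul_le_mul_left _ (card_le_card himg)
  have hpow : ∀ t, (Ns (t+1)).card ≤ B * (Δ - 1) ^ t := by
    intro t
    induction t with
    | zero => simpa using h1
    | succ t ih =>
      calc (Ns (t+2)).card ≤ (Δ - 1) * (Ns (t+1)).card := hstep (t+1) (by omega)
        _ ≤ (Δ - 1) * (B * (Δ - 1) ^ t) := Nat.mul_le_mul_left _ ih
        _ = B * (Δ - 1) ^ (t+1) := by ring
  set D := univ.filter (fun v => T.dist c v ≤ m ∧ ∀ x ∈ X, T.dist x v = T.dist c v + 1) with hD
  have hfib : ∀ v ∈ D, T.dist c v ∈ range (m+1) := by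
    intro v hv
    rw [hD, mem_filter] at hv
    rw [mem_range]
    omega
  rw [Finset.card_eq_sum_card_fiberwise hfib]
  have hDsub : ∀ t, D.filter (fun v => T.dist c v = t) ⊆ Ns t := by
    intro t v hv
    rw [mem_filter] at hv
    obtain ⟨hv1, hv2⟩ := hv
    rw [hD, mem_filter] at hv1
    rw [hNs, mem_filter]
    refine ⟨mem_univ _, hv2, ?_⟩
    intro x hx
    rw [← hv2]
    exact hv1.2.2 x hx
  calc ∑ t ∈ range (m+1), (D.filter (fun v => T.dist c v = t)).card
      ≤ ∑ t ∈ range (m+1), (Ns t).card :=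
        Finset.sum_le_sum (fun t _ => card_le_card (hDsub t))
    _ = (∑ t ∈ range m, (Ns (t+1)).card) + (Ns 0).card := Finset.sum_range_succ' _ _
    _ ≤ (∑ t ∈ range m, B * (Δ - 1) ^ t) + 1 :=
        Nat.add_le_add (Finset.sum_le_sum (fun t _ => hpow t)) h0
    _ = 1 + B * ∑ s ∈ range m, (Δ - 1) ^ s := by rw [Finset.mul_sum]; ring

end Counting

section Kill

variable [Fintype V] [DecidableEq V] [DecidableRel T.Adj]

lemma sum_min_pow (x k : ℕ) :
    ∑ j ∈ range (2*k+2), x ^ (min j (2*k+1-j)) = 2 * ∑ j ∈ range (k+1), x ^ j := by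
  rw [Finset.range_eq_Ico,
    ← Finset.sum_Ico_consecutive _ (Nat.zero_le (k+1)) (by omega : k+1 ≤ 2*k+2)]
  have h1 : ∑ j ∈ Ico 0 (k+1), x ^ (min j (2*k+1-j)) = ∑ j ∈ range (k+1), x ^ j := by
    rw [← Finset.range_eq_Ico]
    apply Finset.sum_congr rfl
    intro j hj
    rw [mem_range] at hj
    congr 1
    omega
  have h2 : ∑ j ∈ Ico (k+1) (2*k+2), x ^ (min j (2*k+1-j)) = ∑ j ∈ range (k+1), x ^ j := by
    refine Finset.sum_nbij' (fun j => 2*k+1-j) (fun a => 2*k+1-a) ?_ ?_ ?_ ?_ ?_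
    · intro a ha
      rw [mem_Ico] at ha
      rw [mem_range]
      omega
    · intro a ha
      rw [mem_range] at ha
      rw [mem_Ico]
      omega
    · intro a ha
      rw [mem_Ico] at ha
      omega
    · intro a ha
      rw [mem_range] at ha
      omega
    · intro a ha
      rw [mem_Ico] at ha
      congr 1
      omega
  rw [h1, h2]
  ring

lemma kill_bound (hT : T.IsTree) {Δ : ℕ} (hΔ : 2 ≤ Δ) (hdeg : ∀ w, T.degree w ≤ Δ)
    {r : V} (hr : T.degree r = 1) (k : ℕ) (u : V) (F : Finset V)
    (hF : ∀ v ∈ F, T.dist r v ≤ T.dist r u) :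
    (F.filter (fun v => T.dist u v ≤ 2*k+1)).card ≤ 2 * ∑ j ∈ range (k+1), (Δ-1)^j := by
  classical
  have hc := hT.isConnected
  set K := F.filter (fun v => T.dist u v ≤ 2*k+1) with hK
  have hKmem : ∀ v ∈ K, T.dist u v ≤ 2*k+1 ∧ T.dist r v ≤ T.dist r u := by
    intro v hv
    rw [hK, mem_filter] at hv
    exact ⟨hv.2, hF v hv.1⟩
  have hfib : ∀ v ∈ K, (tripod hT r u v).choose ∈ range (2*k+2) := by
    intro v hv
    obtain ⟨i, h1, h2, h3, h4, h5, h6, h7⟩ := (tripod hT r u v).choose_spec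
    rw [mem_range]
    have := (hKmem v hv).1
    omega
  rw [Finset.card_eq_sum_card_fiberwise hfib]
  have hper : ∀ j ∈ range (2*k+2),
      (K.filter (fun v => (tripod hT r u v).choose = j)).card
        ≤ (Δ-1) ^ (min j (2*k+1-j)) := by
    intro j hj
    rw [mem_range] at hj
    rcases Finset.eq_empty_or_nonempty
      (K.filter (fun v => (tripod hT r u v).choose = j)) with he | hne
    · rw [he, card_empty]
      exact Nat.zero_le _
    obtain ⟨v0, hv0⟩ := hne
    rw [mem_filter] at hv0
    obtain ⟨hv0K, hv0j⟩ := hv0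
    have hjDu : j ≤ T.dist r u := by
      obtain ⟨i, h1, -⟩ := (tripod hT r u v0).choose_spec
      rwa [hv0j] at h1
    -- generic member facts
    have hmemfacts : ∀ v ∈ K.filter (fun v => (tripod hT r u v).choose = j),
        T.dist (pit T r j u) v ≤ min j (2*k+1-j) ∧
        T.dist (pit T r j u) v + j = T.dist u v ∧
        T.dist r u + T.dist (pit T r j u) v = T.dist r v + j := by
      intro v hv
      rw [mem_filter] at hv
      obtain ⟨hvK, hvj⟩ := hv
      obtain ⟨i, h1, h2, h3, h4, h5, h6, h7⟩ := (tripod hT r u v).choose_spec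
      rw [hvj] at h1 h3 h4 h5 h7
      have hdcv : T.dist (pit T r j u) v = i := by
        rw [h3, SimpleGraph.dist_comm]
        exact h6
      obtain ⟨hduv, hdrv⟩ := hKmem v hvK
      rw [hdcv]
      omega
    cases' Nat.eq_zero_or_pos j with hj0 hjpos
    · -- j = 0 : everything equals u
      subst hj0
      have hsub : K.filter (fun v => (tripod hT r u v).choose = 0) ⊆ {u} := by
        intro v hv
        have hz := (hmemfacts v hv).1
        simp only [Nat.zero_min, Nat.le_zero] at hz
        have h2 := (hmemfacts v hv).2.1
        rw [hz] at h2
        rw [mem_singleton]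
        exact (hc.dist_eq_zero_iff.mp h2.symm).symm
      calc _ ≤ ({u} : Finset V).card := card_le_card hsub
        _ = 1 := card_singleton u
        _ ≤ _ := Nat.one_le_pow _ _ (by omega)
    -- j ≥ 1
    obtain ⟨j', rfl⟩ : ∃ j', j = j' + 1 := ⟨j - 1, by omega⟩
    set c := pit T r (j'+1) u with hcdef
    set xm := pit T r j' u with hxmdef
    have dxm : T.dist r xm + j' = T.dist r u := dist_root_pit hc (by omega)
    have dc : T.dist r c + (j'+1) = T.dist r u := dist_root_pit hc (by omega)
    have hxm_ne_r : xm ≠ r := by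
      intro h
      rw [h, SimpleGraph.dist_self] at dxm
      omega
    have hadj_cm : T.Adj c xm := by
      have := (par_spec hc hxm_ne_r (r := r)).1
      rw [hcdef, pit_succ_right]
      exact this.symm
    have hdist_u_xm : T.dist u xm = j' := dist_pit hT (by omega)
    have hxm_c : T.dist xm c = 1 := SimpleGraph.dist_eq_one_iff_adj.mpr hadj_cm.symm
    rcases Nat.lt_or_ge (j'+1) (T.dist r u) with hcase | hcase
    · -- two banned neighbors
      set xp := pit T r (j'+2) u with hxpdef
      have dxp : T.dist r xp + (j'+2) = T.dist r u := dist_root_pit hc (by omega)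
      have hc_ne_r : c ≠ r := by
        intro h
        rw [h, SimpleGraph.dist_self] at dc
        omega
      have hadj_cp : T.Adj c xp := by
        have := (par_spec hc hc_ne_r (r := r)).1
        rw [hxpdef, pit_succ_right]
        exact this
      have hxp_c : T.dist xp c = 1 := SimpleGraph.dist_eq_one_iff_adj.mpr hadj_cp.symm
      have hne : xm ≠ xp := by
        intro h
        rw [h] at dxm
        omega
      set X : Finset V := {xm, xp} with hXdef
      have hXcard : X.card = 2 := by
        rw [hXdef, card_insert_of_notMem (by simpa using hne), card_singleton]
      have hXadj : ∀ x ∈ X, T.Adj c x := by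
        intro x hx
        rw [hXdef, mem_insert, mem_singleton] at hx
        rcases hx with rfl | rfl
        · exact hadj_cm
        · exact hadj_cp
      have hsub : K.filter (fun v => (tripod hT r u v).choose = j'+1) ⊆
          univ.filter (fun v => T.dist c v ≤ min (j'+1) (2*k+1-(j'+1)) ∧
            ∀ x ∈ X, T.dist x v = T.dist c v + 1) := by
        intro v hv
        obtain ⟨hm1, hm2, hm3⟩ := hmemfacts v hv
        rw [mem_filter]
        refine ⟨mem_univ _, hm1, ?_⟩
        intro x hx
        rw [hXdef, mem_insert, mem_singleton] at hx
        rcases hx with rfl | rfl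
        · -- x = xm
          have hub : T.dist xm v ≤ T.dist xm c + T.dist c v := hc.dist_triangle
          have hlb : T.dist u v ≤ T.dist u xm + T.dist xm v := hc.dist_triangle
          omega
        · -- x = xp
          have hub : T.dist xp v ≤ T.dist xp c + T.dist c v := hc.dist_triangle
          have hlb : T.dist r v ≤ T.dist r xp + T.dist xp v := hc.dist_triangle
          omega
      calc _ ≤ _ := card_le_card hsub
        _ ≤ 1 + (T.degree c - X.card) * ∑ s ∈ range (min (j'+1) (2*k+1-(j'+1))), (Δ-1)^s :=
            dirball_card_le hT hΔ hdeg c X hXadj _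
        _ ≤ 1 + ((Δ-1) - 1) * ∑ s ∈ range (min (j'+1) (2*k+1-(j'+1))), (Δ-1)^s := by
            have : T.degree c - X.card ≤ (Δ-1) - 1 := by
              have := hdeg c
              rw [hXcard]
              omega
            exact Nat.add_le_add_left (Nat.mul_le_mul_right _ this) _
        _ = (Δ-1) ^ (min (j'+1) (2*k+1-(j'+1))) := geom_nat (by omega) _
    · -- j = depth u : c = r
      have hjeq : j' + 1 = T.dist r u := by omega
      have hcr : c = r := by
        rw [hcdef, hjeq]
        exact pit_depth hc r u
      set X : Finset V := {xm} with hXdef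
      have hXadj : ∀ x ∈ X, T.Adj c x := by
        intro x hx
        rw [hXdef, mem_singleton] at hx
        subst hx
        exact hadj_cm
      have hsub : K.filter (fun v => (tripod hT r u v).choose = j'+1) ⊆
          univ.filter (fun v => T.dist c v ≤ min (j'+1) (2*k+1-(j'+1)) ∧
            ∀ x ∈ X, T.dist x v = T.dist c v + 1) := by
        intro v hv
        obtain ⟨hm1, hm2, hm3⟩ := hmemfacts v hv
        rw [mem_filter]
        refine ⟨mem_univ _, hm1, ?_⟩
        intro x hx
        rw [hXdef, mem_singleton] at hx
        subst hx
        have hub : T.dist xm v ≤ T.dist xm c + T.dist c v := hc.dist_triangle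
        have hlb : T.dist u v ≤ T.dist u xm + T.dist xm v := hc.dist_triangle
        omega
      calc _ ≤ _ := card_le_card hsub
        _ ≤ 1 + (T.degree c - X.card) * ∑ s ∈ range (min (j'+1) (2*k+1-(j'+1))), (Δ-1)^s :=
            dirball_card_le hT hΔ hdeg c X hXadj _
        _ ≤ 1 + 0 * ∑ s ∈ range (min (j'+1) (2*k+1-(j'+1))), (Δ-1)^s := by
            have : T.degree c - X.card = 0 := by
              rw [hXdef, card_singleton, hcr, hr]
            rw [this]
        _ ≤ (Δ-1) ^ (min (j'+1) (2*k+1-(j'+1))) := by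
            simpa using Nat.one_le_pow _ _ (by omega : 0 < Δ - 1)
  calc ∑ j ∈ range (2*k+2), (K.filter (fun v => (tripod hT r u v).choose = j)).card
      ≤ ∑ j ∈ range (2*k+2), (Δ-1) ^ (min j (2*k+1-j)) := Finset.sum_le_sum hper
    _ = 2 * ∑ j ∈ range (k+1), (Δ-1)^j := sum_min_pow _ _

end Kill


section Greedy

variable [Fintype V] [DecidableEq V] [DecidableRel T.Adj]

lemma greedy (hT : T.IsTree) (k g2 : ℕ) (r : V)
    (hkill : ∀ (u : V) (F : Finset V), (∀ v ∈ F, T.dist r v ≤ T.dist r u) →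
      (F.filter (fun v => T.dist u v ≤ 2*k+1)).card ≤ g2) :
    ∀ F : Finset V, ∃ Q : Finset V, Q ⊆ F ∧
      ((Q : Set V)).Pairwise (fun a b => 2*k+2 ≤ T.dist a b) ∧ F.card ≤ g2 * Q.card := by
  intro F
  induction F using Finset.strongInduction with
  | _ F ih =>
    rcases Finset.eq_empty_or_nonempty F with rfl | hne
    · exact ⟨∅, Finset.Subset.refl _, by simp, by simp⟩
    obtain ⟨u, huF, hmax⟩ := Finset.exists_max_image F (fun v => T.dist r v) hne
    set F' := F.filter (fun v => ¬ T.dist u v ≤ 2*k+1) with hF'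
    have hss : F' ⊂ F := by
      refine (Finset.ssubset_iff_of_subset (filter_subset _ _)).mpr ?_
      refine ⟨u, huF, ?_⟩
      rw [mem_filter]
      push_neg
      intro _
      rw [SimpleGraph.dist_self]
      omega
    obtain ⟨Q', hQ'sub, hQ'pair, hQ'card⟩ := ih F' hss
    have hQ'far : ∀ b ∈ Q', 2*k+2 ≤ T.dist u b := by
      intro b hb
      have := hQ'sub hb
      rw [hF', mem_filter] at this
      omega
    have huQ' : u ∉ Q' := by
      intro h
      have := hQ'far u h
      rw [SimpleGraph.dist_self] at this
      omega
    refine ⟨insert u Q', ?_, ?_, ?_⟩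
    · intro v hv
      rw [mem_insert] at hv
      rcases hv with rfl | hv
      · exact huF
      · exact (filter_subset _ _) (hQ'sub hv)
    · rw [coe_insert]
      haveI : Std.Symm (fun a b => 2*k+2 ≤ T.dist a b) := ⟨fun a b h => by rwa [SimpleGraph.dist_comm]⟩
      rw [Set.pairwise_insert_of_symmetric]
      refine ⟨hQ'pair, ?_⟩
      intro b hb _
      exact hQ'far b hb
    · have hsplit := Finset.card_filter_add_card_filter_not
        (s := F) (p := fun v => T.dist u v ≤ 2*k+1)
      rw [← hF'] at hsplit
      have hKillcard : (F.filter (fun v => T.dist u v ≤ 2*k+1)).card ≤ g2 :=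
        hkill u F (fun v hv => hmax v hv)
      rw [card_insert_of_notMem huQ']
      have hmul : g2 * (Q'.card + 1) = g2 * Q'.card + g2 := by ring
      omega

lemma min_degree_ge (hT : T.IsTree) (hn : 2 ≤ Fintype.card V) (v : V) : 1 ≤ T.degree v := by
  obtain ⟨w, hw⟩ := Fintype.exists_ne_of_one_lt_card (by omega) v
  obtain ⟨p⟩ := hT.isConnected v w
  have hlen : p.length ≠ 0 := by
    intro h0
    exact hw (Walk.eq_of_length_eq_zero h0).symm
  have hpos : 0 < T.degree v := by
    rw [SimpleGraph.degree_pos_iff_exists_adj]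
    refine ⟨p.getVert 1, Walk.adj_snd ?_⟩
    rw [Walk.not_nil_iff_lt_length]
    omega
  omega

lemma exists_leaf (hT : T.IsTree) (hn : 2 ≤ Fintype.card V) : ∃ r, T.degree r = 1 := by
  by_contra h
  push_neg at h
  have h2 : ∀ v : V, 2 ≤ T.degree v := by
    intro v
    have h1 := min_degree_ge hT hn v
    have := h v
    omega
  have hsum : 2 * Fintype.card V ≤ ∑ v, T.degree v := by
    calc 2 * Fintype.card V = ∑ _v : V, 2 := by rw [Finset.sum_const, card_univ]; ring
      _ ≤ ∑ v, T.degree v := Finset.sum_le_sum (fun v _ => h2 v)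
  rw [SimpleGraph.sum_degrees_eq_twice_card_edges] at hsum
  have hedge := hT.card_edgeFinset
  omega

lemma many_small_degree (hT : T.IsTree) (hn : 2 ≤ Fintype.card V) :
    Fintype.card V + 2 ≤ 2 * (univ.filter (fun v => T.degree v ≤ 2)).card := by
  have hsum := SimpleGraph.sum_degrees_eq_twice_card_edges T
  have hedge := hT.card_edgeFinset
  have hsplit := Finset.sum_filter_add_sum_filter_not univ (fun v => T.degree v ≤ 2)
    (fun v => T.degree v)
  have hM : (univ.filter (fun v => T.degree v ≤ 2)).card ≤
      ∑ v ∈ univ.filter (fun v => T.degree v ≤ 2), T.degree v := by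
    rw [Finset.card_eq_sum_ones]
    exact Finset.sum_le_sum (fun v _ => min_degree_ge hT hn v)
  have hH : 3 * (univ.filter (fun v => ¬ T.degree v ≤ 2)).card ≤
      ∑ v ∈ univ.filter (fun v => ¬ T.degree v ≤ 2), T.degree v := by
    rw [mul_comm, ← smul_eq_mul]
    refine Finset.card_nsmul_le_sum _ _ _ ?_
    intro v hv
    rw [mem_filter] at hv
    omega
  have hcards := Finset.card_filter_add_card_filter_not
    (s := univ) (p := fun v => T.degree v ≤ 2)
  rw [card_univ] at hcards
  omega

lemma g_le_pow {Δ : ℕ} (hΔ : 2 ≤ Δ) (k : ℕ) : ∑ j ∈ range (k+1), (Δ-1)^j ≤ Δ^k := by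
  induction k with
  | zero => simp
  | succ k ih =>
    rw [Finset.sum_range_succ']
    have h1 : ∑ i ∈ range (k+1), (Δ-1)^(i+1) = (Δ-1) * ∑ j ∈ range (k+1), (Δ-1)^j := by
      rw [Finset.mul_sum]
      apply sum_congr rfl
      intro i _
      ring
    rw [h1, pow_zero]
    have h2 : (Δ-1) * ∑ j ∈ range (k+1), (Δ-1)^j ≤ (Δ-1) * Δ^k := Nat.mul_le_mul_left _ ih
    have hp : 1 ≤ Δ^k := Nat.one_le_pow _ _ (by omega)
    have h3 : Δ^(k+1) = (Δ-1) * Δ^k + Δ^k := by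
      have hΔ1 : Δ = (Δ-1) + 1 := by omega
      calc Δ^(k+1) = Δ^k * Δ := pow_succ _ _
        _ = Δ^k * ((Δ-1) + 1) := by rw [← hΔ1]
        _ = (Δ-1) * Δ^k + Δ^k := by ring
    omega

lemma ncard_neighborSet_eq_degree (v : V) : (T.neighborSet v).ncard = T.degree v := by
  rw [Set.ncard_eq_toFinset_card']
  rfl

end Greedy

end TreeSep3

/-- Let `k ≥ 0` and `Δ ≥ 2` be integers, and let `T` be a tree with maximum degree at
most `Δ` and at least `3·Δ^k` vertices.  Then there exists a set `Q ⊆ V(T)` which is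
`(2k+2)`-separated in `T`, with `|Q| ≥ |T|/((8k+8)·Δ^k)`, such that every vertex of `Q`
has degree exactly `1` (a leaf) or exactly `2` (an interior vertex of a bare path). -/
theorem statement_3 {V : Type*} [Fintype V] (k Δ : ℕ) (hΔ : 2 ≤ Δ)
    (T : SimpleGraph V) (hT : T.IsTree)
    (hdeg : ∀ v, (T.neighborSet v).ncard ≤ Δ)
    (hcard : 3 * Δ ^ k ≤ Fintype.card V) :
    ∃ Q : Set V,
      (Fintype.card V : ℝ) / ((8 * k + 8) * Δ ^ k) ≤ Q.ncard ∧
      (Q.Pairwise fun u v => 2 * k + 2 ≤ T.dist u v) ∧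
      ∀ v ∈ Q, (T.neighborSet v).ncard = 1 ∨ (T.neighborSet v).ncard = 2 := by
  classical
  have hpk : 1 ≤ Δ ^ k := Nat.one_le_pow _ _ (by omega)
  have hn2 : 2 ≤ Fintype.card V := by omega
  have hdeg' : ∀ v, T.degree v ≤ Δ := fun v => by
    rw [← TreeSep3.ncard_neighborSet_eq_degree]
    exact hdeg v
  obtain ⟨r, hr⟩ := TreeSep3.exists_leaf hT hn2
  set g := ∑ j ∈ Finset.range (k+1), (Δ-1)^j with hg
  obtain ⟨Qf, hQsub, hQpair, hQcard⟩ := TreeSep3.greedy hT k (2*g) r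
    (fun u F hF => TreeSep3.kill_bound hT hΔ hdeg' hr k u F hF)
    (Finset.univ.filter (fun v => T.degree v ≤ 2))
  have hM := TreeSep3.many_small_degree hT hn2
  have hgle : g ≤ Δ^k := TreeSep3.g_le_pow hΔ k
  have hN : Fintype.card V ≤ (8*k+8) * Δ^k * Qf.card := by
    have h1 : Fintype.card V ≤ 2 * (Finset.univ.filter (fun v => T.degree v ≤ 2)).card := by
      omega
    have h2 : 4 * g ≤ (8*k+8) * Δ^k := by
      calc 4 * g ≤ 4 * Δ^k := Nat.mul_le_mul_left _ hgle
        _ ≤ (8*k+8) * Δ^k := Nat.mul_le_mul_right _ (by omega)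
    calc Fintype.card V
        ≤ 2 * (Finset.univ.filter (fun v => T.degree v ≤ 2)).card := h1
      _ ≤ 2 * (2 * g * Qf.card) := Nat.mul_le_mul_left _ hQcard
      _ = (4 * g) * Qf.card := by ring
      _ ≤ ((8*k+8) * Δ^k) * Qf.card := Nat.mul_le_mul_right _ h2
  refine ⟨(↑Qf : Set V), ?_, ?_, ?_⟩
  · rw [Set.ncard_coe_finset]
    have hpos : (0:ℝ) < (8 * (k:ℝ) + 8) * (Δ:ℝ) ^ k := by
      have hΔR : (0:ℝ) < (Δ:ℝ) := by
        have : (0:ℕ) < Δ := by omega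
        exact_mod_cast this
      have := pow_pos hΔR k
      nlinarith
    rw [div_le_iff₀ hpos]
    have hcast : ((Fintype.card V : ℕ) : ℝ) ≤ (((8*k+8) * Δ^k * Qf.card : ℕ) : ℝ) :=
      Nat.cast_le.mpr hN
    push_cast at hcast
    nlinarith
  · exact hQpair
  · intro v hv
    rw [Finset.mem_coe] at hv
    have hvF := hQsub hv
    rw [Finset.mem_filter] at hvF
    have hge := TreeSep3.min_degree_ge hT hn2 v
    rw [TreeSep3.ncard_neighborSet_eq_degree]
    omega
end

section
/- Let k, l be positive integers, let T be a tree containing a vertex t, and let Q ⊆ V(T) with |Q| = l be a 2k-separated set in T. Then there is an ordering q₁,…,q_l of Q and subtrees T₁ ⊆ T₂ ⊆ ⋯ ⊆ T_l of T such that t, q₁ ∈ V(T₁), Q ∩ V(T_i) = {q₁,…,q_i} for each i ∈ [l], and for each 1 < i ≤ l the tree T_i is obtained from T_{i−1} by adding a bare path of length at least k: a path of length at least k with one endpoint in V(T_{i−1}), internally vertex-disjoint from T_{i−1}, whose other endpoint is q_i, where q_i is a leaf of T_i. -/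
/-!
Greedy construction. Start with a shortest path from `t` to a nearest vertex of `Q`, then
repeatedly attach a shortest path from the current subgraph `S` to a nearest vertex `q` of `Q`
outside it. By minimality this path meets `S` and `Q` only in its endpoints. The invariant
is that every vertex of `Q` not yet reached is at distance at least `k` from `S`; it makes the
new path have length at least `k`, and `2k`-separation of `Q` preserves it: a remaining vertex
`r` is at distance at least `2k - d(x, q)` and, by the choice of `q`, at least `d(x, q)` from any
vertex `x` of the new path.
-/

open SimpleGraph Set

namespace SimpleGraph

variable {V : Type*} {G : SimpleGraph V}

lemma Connected.dist_add_dist_of_mem_support (hG : G.Connected) {u v x : V} {p : G.Walk u v}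
    (hp : p.length = G.dist u v) (hx : x ∈ p.support) :
    G.dist u x + G.dist x v = G.dist u v := by
  classical
  have hsplit := congrArg Walk.length (p.take_spec hx)
  rw [Walk.length_append] at hsplit
  have := dist_le (p.takeUntil x hx)
  have := dist_le (p.dropUntil x hx)
  have := hG.dist_triangle (u := u) (v := x) (w := v)
  omega

lemma exists_isPath_between_nearest [Finite V] (hG : G.Connected) {A R : Set V}
    (hA : A.Nonempty) (hR : R.Nonempty) :
    ∃ u ∈ A, ∃ q ∈ R, ∃ p : G.Walk u q, p.IsPath ∧ p.length = G.dist u q ∧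
      ∀ a ∈ A, ∀ r ∈ R, G.dist u q ≤ G.dist a r := by
  obtain ⟨⟨u, q⟩, ⟨hu, hq⟩, hmin⟩ :=
    exists_min_image (A ×ˢ R) (fun z => G.dist z.1 z.2) (toFinite _) (hA.prod hR)
  obtain ⟨p, hp, hlen⟩ := hG.exists_path_of_dist u q
  exact ⟨u, hu, q, hq, p, hp, hlen, fun a ha r hr => hmin (a, r) ⟨ha, hr⟩⟩

lemma eq_of_mem_support_of_nearest_left (hG : G.Connected) {A R : Set V} {u q x : V}
    {p : G.Walk u q} (hp : p.length = G.dist u q)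
    (hmin : ∀ a ∈ A, ∀ r ∈ R, G.dist u q ≤ G.dist a r) (hq : q ∈ R)
    (hx : x ∈ p.support) (hxA : x ∈ A) : x = u := by
  have := hG.dist_add_dist_of_mem_support hp hx
  have := hmin x hxA q hq
  exact (hG.dist_eq_zero_iff.mp (by omega)).symm

lemma eq_of_mem_support_of_nearest_right (hG : G.Connected) {A R : Set V} {u q x : V}
    {p : G.Walk u q} (hp : p.length = G.dist u q)
    (hmin : ∀ a ∈ A, ∀ r ∈ R, G.dist u q ≤ G.dist a r) (hu : u ∈ A)
    (hx : x ∈ p.support) (hxR : x ∈ R) : x = q := by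
  have := hG.dist_add_dist_of_mem_support hp hx
  have := hmin u hu x hxR
  exact hG.dist_eq_zero_iff.mp (by omega)

lemma le_dist_of_mem_support_of_nearest (hG : G.Connected) {A R : Set V} {k : ℕ} {u q r x : V}
    {p : G.Walk u q} (hp : p.length = G.dist u q)
    (hmin : ∀ a ∈ A, ∀ r ∈ R, G.dist u q ≤ G.dist a r) (hu : u ∈ A) (hr : r ∈ R)
    (hrq : 2 * k ≤ G.dist r q) (hx : x ∈ p.support) : k ≤ G.dist r x := by
  have := hG.dist_add_dist_of_mem_support hp hx
  have := hmin u hu r hr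
  have := hG.dist_triangle (u := u) (v := x) (w := r)
  have := hG.dist_triangle (u := r) (v := x) (w := q)
  rw [dist_comm (u := x) (v := r)] at *
  omega

lemma ncard_neighborSet_sup_toSubgraph_eq_one {S : G.Subgraph} {u q : V} {p : G.Walk u q}
    (hp : p.IsPath) (huq : u ≠ q) (hq : q ∉ S.verts) :
    ((S ⊔ p.toSubgraph).neighborSet q).ncard = 1 := by
  have hS : S.neighborSet q = ∅ :=
    eq_empty_of_forall_notMem fun w hw => hq (S.edge_vert hw)
  rw [Subgraph.neighborSet_sup, hS, empty_union,
    hp.neighborSet_toSubgraph_endpoint (Walk.not_nil_of_ne huq), ncard_singleton]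

variable (G) in
def FarApart (k : ℕ) (R A : Set V) : Prop := ∀ r ∈ R, ∀ a ∈ A, k ≤ G.dist r a

def Subgraph.IsBarePathExtension (k : ℕ) (S S' : G.Subgraph) (q : V) : Prop :=
  ∃ (u : V) (p : G.Walk u q), p.IsPath ∧ k ≤ p.length ∧ u ∈ S.verts ∧
    (∀ x ∈ p.support, x ≠ u → x ∉ S.verts) ∧ S' = S ⊔ p.toSubgraph ∧
    (S'.neighborSet q).ncard = 1

namespace Subgraph.IsBarePathExtension

variable {k : ℕ} {S S' : G.Subgraph} {q : V}

lemma le (h : S.IsBarePathExtension k S' q) : S ≤ S' := by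
  obtain ⟨_, _, -, -, -, -, rfl, -⟩ := h
  exact le_sup_left

lemma connected (h : S.IsBarePathExtension k S' q) (hS : S.Connected) : S'.Connected := by
  obtain ⟨u, p, -, -, hu, -, rfl, -⟩ := h
  exact Subgraph.connected_sup hS.preconnected p.toSubgraph_connected.preconnected
    ⟨u, hu, p.start_mem_verts_toSubgraph⟩

end Subgraph.IsBarePathExtension

variable {k : ℕ} {Q : Set V}

lemma exists_isBarePathExtension [Finite V] (hG : G.Connected)
    (hQ : Q.Pairwise fun u v => 2 * k ≤ G.dist u v) {S : G.Subgraph} (hS : S.verts.Nonempty)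
    (hfar : G.FarApart k (Q \ S.verts) S.verts) (hne : (Q \ S.verts).Nonempty) :
    ∃ q ∈ Q \ S.verts, ∃ S' : G.Subgraph, S.IsBarePathExtension k S' q ∧
      G.FarApart k (Q \ S'.verts) S'.verts ∧ Q ∩ S'.verts = insert q (Q ∩ S.verts) := by
  obtain ⟨u, hu, q, hq, p, hp, hlen, hmin⟩ := exists_isPath_between_nearest hG hS hne
  have huq : u ≠ q := by rintro rfl; exact hq.2 hu
  have hverts : (S ⊔ p.toSubgraph).verts = S.verts ∪ {x | x ∈ p.support} := by
    ext; simp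
  refine ⟨q, hq, S ⊔ p.toSubgraph, ⟨u, p, hp, ?_, hu, ?_, rfl,
    ncard_neighborSet_sup_toSubgraph_eq_one hp huq hq.2⟩, ?_, ?_⟩
  · rw [hlen, dist_comm]
    exact hfar q hq u hu
  · exact fun x hx hxu hxS => hxu (eq_of_mem_support_of_nearest_left hG hlen hmin hq hx hxS)
  · rintro r ⟨hrQ, hrS'⟩ x hx
    rw [hverts, mem_union, not_or] at hrS'
    rw [hverts] at hx
    rcases hx with hx | hx
    · exact hfar r ⟨hrQ, hrS'.1⟩ x hx
    · have hrq : r ≠ q := by rintro rfl; exact hrS'.2 p.end_mem_support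
      exact le_dist_of_mem_support_of_nearest hG hlen hmin hu ⟨hrQ, hrS'.1⟩
        (hQ hrQ hq.1 hrq) hx
  · ext x
    rw [hverts]
    constructor
    · rintro ⟨hxQ, hxS | hx⟩
      · exact Or.inr ⟨hxQ, hxS⟩
      · by_cases hxS : x ∈ S.verts
        · exact Or.inr ⟨hxQ, hxS⟩
        · exact Or.inl (eq_of_mem_support_of_nearest_right hG hlen hmin hu hx ⟨hxQ, hxS⟩)
    · rintro (rfl | ⟨hxQ, hxS⟩)
      · exact ⟨hq.1, Or.inr p.end_mem_support⟩
      · exact ⟨hxQ, Or.inl hxS⟩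

lemma exists_initial_path [Finite V] (hG : G.Connected)
    (hQ : Q.Pairwise fun u v => 2 * k ≤ G.dist u v) (t : V) (hne : Q.Nonempty) :
    ∃ q₀, ∃ S₀ : G.Subgraph, S₀.Connected ∧ t ∈ S₀.verts ∧ Q ∩ S₀.verts = {q₀} ∧
      G.FarApart k (Q \ S₀.verts) S₀.verts := by
  obtain ⟨t, rfl, q₀, hq₀, p, hp, hlen, hmin⟩ :=
    exists_isPath_between_nearest hG (singleton_nonempty t) hne
  refine ⟨q₀, p.toSubgraph, p.toSubgraph_connected, p.start_mem_verts_toSubgraph, ?_, ?_⟩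
  · ext x
    simp only [mem_inter_iff, Walk.mem_verts_toSubgraph, mem_singleton_iff]
    constructor
    · rintro ⟨hxQ, hx⟩
      exact eq_of_mem_support_of_nearest_right hG hlen hmin rfl hx hxQ
    · rintro rfl
      exact ⟨hq₀, p.end_mem_support⟩
  · rintro r ⟨hrQ, hrp⟩ x hx
    have hrq : r ≠ q₀ := by rintro rfl; exact hrp p.end_mem_verts_toSubgraph
    exact le_dist_of_mem_support_of_nearest hG hlen hmin rfl hrQ (hQ hrQ hq₀ hrq)
      (p.mem_verts_toSubgraph.mp hx)

lemma exists_greedy_sequence {l : ℕ} (hQ : Q.ncard = l) {q₀ : V} {S₀ : G.Subgraph}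
    (hS₀ : S₀.Connected) (hQS₀ : Q ∩ S₀.verts = {q₀})
    (hfar₀ : G.FarApart k (Q \ S₀.verts) S₀.verts)
    (step : ∀ S : G.Subgraph, S.Connected → G.FarApart k (Q \ S.verts) S.verts →
      (Q \ S.verts).Nonempty → ∃ q ∈ Q \ S.verts, ∃ S' : G.Subgraph,
        S.IsBarePathExtension k S' q ∧ G.FarApart k (Q \ S'.verts) S'.verts ∧
          Q ∩ S'.verts = insert q (Q ∩ S.verts)) :
    ∃ (q : ℕ → V) (S : ℕ → G.Subgraph), q 0 = q₀ ∧ S 0 = S₀ ∧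
      (∀ i < l, (S i).Connected ∧ Q ∩ (S i).verts = q '' Iic i ∧ InjOn q (Iic i)) ∧
      ∀ j, j + 1 < l → (S j).IsBarePathExtension k (S (j + 1)) (q (j + 1)) := by
  have : Nonempty V := ⟨q₀⟩
  choose! nextQ hnextQ nextS hnext using step
  obtain ⟨S, hS0, hSsucc⟩ : ∃ S : ℕ → G.Subgraph, S 0 = S₀ ∧ ∀ j, S (j + 1) = nextS (S j) :=
    ⟨fun j => nextS^[j] S₀, rfl, fun j => Function.iterate_succ_apply' ..⟩
  obtain ⟨q, hq0, hqsucc⟩ : ∃ q : ℕ → V, q 0 = q₀ ∧ ∀ j, q (j + 1) = nextQ (S j) :=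
    ⟨fun | 0 => q₀ | j + 1 => nextQ (S j), rfl, fun _ => rfl⟩
  have hIic : ∀ j, Iic (j + 1) = insert (j + 1) (Iic j) := fun j => Order.Iic_succ j
  have hnonempty (j : ℕ) (hj : j + 1 < l) (hQS : Q ∩ (S j).verts = q '' Iic j) :
      (Q \ (S j).verts).Nonempty := by
    rw [nonempty_iff_ne_empty, Ne, sdiff_eq_empty, ← inter_eq_left, hQS]
    intro h
    have := h ▸ ncard_image_le (f := q) (finite_Iic j)
    rw [ncard_Iic_nat] at this
    omega
  have key : ∀ i < l, (S i).Connected ∧ G.FarApart k (Q \ (S i).verts) (S i).verts ∧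
      Q ∩ (S i).verts = q '' Iic i ∧ InjOn q (Iic i) := by
    intro i hi
    induction i with
    | zero =>
      have hIic0 : Iic (0 : ℕ) = {0} := Iic_bot
      simp [hS0, hq0, hS₀, hfar₀, hQS₀, hIic0]
    | succ j ih =>
      obtain ⟨hconn, hfar, hQS, hinj⟩ := ih (by omega)
      have hmem := hnextQ (S j) hconn hfar (hnonempty j hi hQS)
      obtain ⟨hext, hfar', hQS'⟩ := hnext (S j) hconn hfar (hnonempty j hi hQS)
      refine ⟨hSsucc j ▸ hext.connected hconn, hSsucc j ▸ hfar', ?_, ?_⟩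
      · rw [hSsucc, hQS', hQS, hIic, image_insert_eq, hqsucc]
      · rw [hIic, injOn_insert (by simp), hqsucc, ← hQS]
        exact ⟨hinj, fun h => hmem.2 h.2⟩
  refine ⟨q, S, hq0, hS0, fun i hi => ⟨(key i hi).1, (key i hi).2.2⟩, fun j hj => ?_⟩
  obtain ⟨hconn, hfar, hQS, -⟩ := key j (by omega)
  rw [hSsucc, hqsucc]
  exact (hnext (S j) hconn hfar (hnonempty j hj hQS)).1

end SimpleGraph

theorem statement_4_general {V : Type*} [Fintype V] (k l : ℕ) (hl : 0 < l)
    (T : SimpleGraph V) (hT : T.IsTree) (t : V)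
    (Q : Set V) (hQcard : Q.ncard = l)
    (hQsep : Q.Pairwise fun u v => 2 * k ≤ T.dist u v) :
    ∃ (q : ℕ → V) (S : ℕ → T.Subgraph),
      Set.InjOn q (Set.Iio l) ∧
      q '' (Set.Iio l) = Q ∧
      (∀ i, i + 1 < l → S i ≤ S (i + 1)) ∧
      (∀ i < l, (S i).Connected) ∧
      t ∈ (S 0).verts ∧ q 0 ∈ (S 0).verts ∧
      (∀ i < l, Q ∩ (S i).verts = q '' (Set.Iic i)) ∧
      (∀ i, 0 < i → i < l →
        ∃ (u : V) (p : T.Walk u (q i)),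
          p.IsPath ∧ k ≤ p.length ∧
          u ∈ (S (i - 1)).verts ∧
          (∀ x ∈ p.support, x ≠ u → x ∉ (S (i - 1)).verts) ∧
          S i = S (i - 1) ⊔ p.toSubgraph ∧
          ((S i).neighborSet (q i)).ncard = 1) := by
  have hT := hT.connected
  obtain ⟨q₀, S₀, hS₀, ht, hQS₀, hfar₀⟩ :=
    exists_initial_path hT hQsep t (nonempty_of_ncard_ne_zero (by omega))
  obtain ⟨q, S, hq0, hS0, hinv, hext⟩ := exists_greedy_sequence hQcard hS₀ hQS₀ hfar₀
    fun S hS hfar hne => exists_isBarePathExtension hT hQsep hS.nonempty hfar hne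
  obtain ⟨m, rfl⟩ := Nat.exists_eq_add_one.mpr hl
  obtain ⟨-, hQSm, hinj⟩ := hinv m (by omega)
  have hIio : Iio (m + 1) = Iic m := Order.Iio_succ m
  refine ⟨q, S, hIio ▸ hinj, ?_, fun i hi => (hext i hi).le, fun i hi => (hinv i hi).1,
    hS0 ▸ ht, ?_, fun i hi => (hinv i hi).2.1, ?_⟩
  · rw [hIio, ← hQSm]
    refine eq_of_subset_of_ncard_le inter_subset_left ?_ (toFinite _)
    rw [hQSm, hinj.ncard_image, ncard_Iic_nat, hQcard]
  · have hq₀ : q₀ ∈ Q ∩ S₀.verts := by rw [hQS₀]; rfl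
    rw [hS0, hq0]
    exact hq₀.2
  · rintro (_ | j) hj hjl
    · omega
    · exact hext j hjl

/-- Let `k, l` be positive integers, let `T` be a tree containing a vertex `t`, and let
`Q ⊆ V(T)` with `|Q| = l` be a `2k`-separated set in `T`.  Then there is an ordering
`q 0, …, q (l-1)` of `Q` and a nested sequence of subtrees `S 0 ⊆ S 1 ⊆ ⋯ ⊆ S (l-1)`
of `T` such that `t, q 0 ∈ V(S 0)`, `Q ∩ V(S i) = {q 0, …, q i}` for each `i < l`, and
for each `0 < i < l` the subtree `S i` is obtained from `S (i-1)` by adding a bare path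
of length at least `k`: a path of length at least `k` with one endpoint `u` in
`V(S (i-1))`, internally vertex-disjoint from `S (i-1)`, whose other endpoint is `q i`,
where `q i` is a leaf of `S i`. -/
theorem statement_4 {V : Type*} [Fintype V] (k l : ℕ) (hk : 0 < k) (hl : 0 < l)
    (T : SimpleGraph V) (hT : T.IsTree) (t : V)
    (Q : Set V) (hQcard : Q.ncard = l)
    (hQsep : Q.Pairwise fun u v => 2 * k ≤ T.dist u v) :
    ∃ (q : ℕ → V) (S : ℕ → T.Subgraph),
      Set.InjOn q (Set.Iio l) ∧
      q '' (Set.Iio l) = Q ∧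
      (∀ i, i + 1 < l → S i ≤ S (i + 1)) ∧
      (∀ i < l, (S i).Connected) ∧
      t ∈ (S 0).verts ∧ q 0 ∈ (S 0).verts ∧
      (∀ i < l, Q ∩ (S i).verts = q '' (Set.Iic i)) ∧
      (∀ i, 0 < i → i < l →
        ∃ (u : V) (p : T.Walk u (q i)),
          p.IsPath ∧ k ≤ p.length ∧
          u ∈ (S (i - 1)).verts ∧
          (∀ x ∈ p.support, x ≠ u → x ∉ (S (i - 1)).verts) ∧
          S i = S (i - 1) ⊔ p.toSubgraph ∧
          ((S i).neighborSet (q i)).ncard = 1) :=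
  statement_4_general k l hl T hT t Q hQcard hQsep
end

section
/- For every tree S and every subset Q ⊆ V(S) there exist two subtrees S₁ and S₂ which divide S and satisfy |Q ∩ V(S₁)| ≥ |Q|/3 and |Q ∩ V(S₂)| ≥ |Q|/3. -/
/-!
Take a vertex `v` minimising the total distance to `Q`. Every branch of the tree at `v` (a
component of `S - v`) then contains at most half of `Q`, so the branches can be split into two
groups each of which, together with `v`, contains at least a third of `Q`. The two resulting
subtrees meet exactly in `v`.
-/

/-- Two subtrees (connected subgraphs) `A` and `B` *divide* the tree `S` if together
they cover `S` and they intersect in exactly one vertex. -/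
def Divides {V : Type*} {S : SimpleGraph V} (A B : S.Subgraph) : Prop :=
  A.Connected ∧ B.Connected ∧ A ⊔ B = ⊤ ∧ ∃ v, A.verts ∩ B.verts = {v}

namespace Finset

/-- Take `T` minimal with `n ≤ 3 (ε + w(T))`; unless a single weight already reaches `n / 3`,
dropping any element of `T` loses less than `n / 3`, so `w(T) < 2n / 3`. -/
theorem exists_balanced_split {α : Type*} [DecidableEq α] (N : Finset α) (w : α → ℕ) (ε n : ℕ)
    (htot : ε + ∑ u ∈ N, w u = n) (hhalf : ∀ u ∈ N, 2 * w u ≤ n) :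
    ∃ T ⊆ N, n ≤ 3 * (ε + ∑ u ∈ T, w u) ∧ n ≤ 3 * (ε + ∑ u ∈ N \ T, w u) := by
  suffices ∃ T ⊆ N, n ≤ 3 * (ε + ∑ u ∈ T, w u) ∧ 3 * ∑ u ∈ T, w u ≤ 2 * n by
    obtain ⟨T, hTN, hT, hT'⟩ := this
    have := sum_sdiff hTN (f := w)
    exact ⟨T, hTN, hT, by omega⟩
  by_cases hbig : ∃ u ∈ N, n ≤ 3 * w u
  · obtain ⟨u, hu, hwu⟩ := hbig
    have := hhalf u hu
    exact ⟨{u}, singleton_subset_iff.mpr hu, by simp; omega, by simp; omega⟩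
  push Not at hbig
  obtain ⟨T, hTP, hmin⟩ := (N.powerset.filter fun T => n ≤ 3 * (ε + ∑ u ∈ T, w u)).exists_min_image
    (fun T => ∑ u ∈ T, w u + T.card) ⟨N, by simp; omega⟩
  simp only [mem_filter, mem_powerset] at hTP hmin
  refine ⟨T, hTP.1, hTP.2, ?_⟩
  obtain rfl | ⟨u, hu⟩ := T.eq_empty_or_nonempty
  · simp
  have hsum := add_sum_erase T w hu
  have hcard := card_erase_add_one hu
  have hdrop : ¬ n ≤ 3 * (ε + ∑ x ∈ T.erase u, w x) := fun h => by
    have := hmin _ ⟨(erase_subset u T).trans hTP.1, h⟩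
    omega
  have := hbig u (hTP.1 hu)
  omega

end Finset

namespace SimpleGraph

variable {V : Type*} {S : SimpleGraph V} {u u' v x y : V}

/-- For a neighbour `u` of `v` in a tree: the vertex set of the component of `S - v` at `u`. -/
def branch (S : SimpleGraph V) (v u : V) : Set V := {x | S.dist x u < S.dist x v}

lemma mem_branch : x ∈ S.branch v u ↔ S.dist x u < S.dist x v := Iff.rfl

lemma self_notMem_branch : v ∉ S.branch v u := by simp [mem_branch]

lemma Adj.mem_branch (h : S.Adj v u) : u ∈ S.branch v u := by
  rw [SimpleGraph.mem_branch, dist_self, dist_comm, dist_eq_one_iff_adj.mpr h]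
  exact one_pos

lemma IsTree.dist_eq_add_one_of_mem_branch (hS : S.IsTree) (h : S.Adj v u)
    (hx : x ∈ S.branch v u) : S.dist x v = S.dist x u + 1 := by
  have := hS.dist_eq_dist_add_one_of_adj x h
  rw [mem_branch] at hx
  omega

lemma IsTree.dist_eq_add_one_of_notMem_branch (hS : S.IsTree) (h : S.Adj v u)
    (hx : x ∉ S.branch v u) : S.dist x u = S.dist x v + 1 := by
  have := hS.dist_eq_dist_add_one_of_adj x h
  rw [mem_branch] at hx
  omega

lemma Connected.exists_mem_branch (hc : S.Connected) (hx : x ≠ v) :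
    ∃ u, S.Adj v u ∧ x ∈ S.branch v u := by
  obtain ⟨p, -, hp⟩ := (hc v x).exists_path_of_dist
  cases p with
  | nil => exact absurd rfl hx
  | @cons _ u _ h q =>
    refine ⟨u, h, ?_⟩
    have : S.dist u x ≤ q.length := S.dist_le q
    rw [mem_branch, dist_comm, dist_comm (u := x)]
    simp only [Walk.length_cons] at hp
    omega

lemma Connected.mem_branch_of_mem_support (hc : S.Connected) {p : S.Walk x u}
    (hp : p.length = S.dist x u) (hx : x ∈ S.branch v u) (hy : y ∈ p.support) :
    y ∈ S.branch v u := by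
  classical
  have hsplit := congrArg Walk.length (p.take_spec hy)
  rw [Walk.length_append] at hsplit
  have h₁ : S.dist x y ≤ (p.takeUntil y hy).length := S.dist_le _
  have h₂ : S.dist y u ≤ (p.dropUntil y hy).length := S.dist_le _
  have h₃ : S.dist x v ≤ S.dist x y + S.dist y v := hc.dist_triangle
  rw [mem_branch] at hx ⊢
  omega

lemma Connected.exists_walk_support_subset_insert_branch (hc : S.Connected) (h : S.Adj v u)
    (hx : x ∈ S.branch v u) : ∃ p : S.Walk x v, ∀ y ∈ p.support, y ∈ insert v (S.branch v u) := by
  obtain ⟨p, -, hp⟩ := (hc x u).exists_path_of_dist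
  refine ⟨p.concat h.symm, fun y hy => ?_⟩
  rw [Walk.support_concat, List.mem_append, List.mem_singleton] at hy
  rcases hy with hy | rfl
  · exact Or.inr (hc.mem_branch_of_mem_support hp hx hy)
  · exact Or.inl rfl

/-- Both neighbours `u`, `u'` are the last vertex before `v` on the unique path from `x` to `v`. -/
lemma IsTree.eq_of_mem_branch_of_mem_branch (hS : S.IsTree) (hu : S.Adj v u) (hu' : S.Adj v u')
    (hx : x ∈ S.branch v u) (hx' : x ∈ S.branch v u') : u = u' := by
  obtain ⟨p, hp, -⟩ := (hS.connected x v).exists_path_of_dist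
  have key : ∀ {w}, S.Adj v w → x ∈ S.branch v w → w = p.penultimate := fun {w} hw hxw => by
    obtain ⟨q, hq, hqlen⟩ := (hS.connected x w).exists_path_of_dist
    have hv : v ∉ q.support := fun hv =>
      self_notMem_branch (hS.connected.mem_branch_of_mem_support hqlen hxw hv)
    exact hS.isAcyclic.eq_penultimate_of_adj_end hp hw
      (hS.isAcyclic.mem_support_of_ne_mem_support_of_adj_of_isPath hp hq hw hv)
  rw [key hu hx, key hu' hx']

lemma Connected.mem_branch_of_adj_of_dist_lt (hc : S.Connected) (hx : x ∈ S.branch v u)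
    (hxy : S.Adj x y) (hlt : S.dist x v < S.dist y v) : y ∈ S.branch v u := by
  have h₁ : S.dist y u ≤ S.dist y x + S.dist x u := hc.dist_triangle
  have h₂ : S.dist y x = 1 := dist_eq_one_iff_adj.mpr hxy.symm
  rw [mem_branch] at hx ⊢
  omega

lemma IsTree.mem_branch_of_adj (hS : S.IsTree) (hu : S.Adj v u) (hx : x ∈ S.branch v u)
    (hxy : S.Adj x y) (hy : y ≠ v) : y ∈ S.branch v u := by
  have hd := hS.dist_eq_dist_add_one_of_adj v hxy
  rw [dist_comm (u := v) (v := x), dist_comm (u := v) (v := y)] at hd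
  rcases hd with hyx | hxy'
  · obtain ⟨u', hu', hyu'⟩ := hS.connected.exists_mem_branch hy
    have hxu' := hS.connected.mem_branch_of_adj_of_dist_lt hyu' hxy.symm (by omega)
    rwa [hS.eq_of_mem_branch_of_mem_branch hu hu' hx hxu']
  · exact hS.connected.mem_branch_of_adj_of_dist_lt hx hxy (by omega)

def sector (S : SimpleGraph V) (v : V) (T : Set V) : Set V :=
  insert v {x | ∃ u ∈ T, S.Adj v u ∧ x ∈ S.branch v u}

variable {T T' : Set V}

lemma mem_sector : x ∈ S.sector v T ↔ x = v ∨ ∃ u ∈ T, S.Adj v u ∧ x ∈ S.branch v u := Iff.rfl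

lemma insert_branch_subset_sector (hu : u ∈ T) (h : S.Adj v u) :
    insert v (S.branch v u) ⊆ S.sector v T := by
  rintro x (rfl | hx)
  exacts [Or.inl rfl, Or.inr ⟨u, hu, h, hx⟩]

lemma sector_union : S.sector v T ∪ S.sector v T' = S.sector v (T ∪ T') := by
  ext x
  simp only [Set.mem_union, mem_sector]
  grind

lemma Connected.sector_univ (hc : S.Connected) : S.sector v Set.univ = Set.univ := by
  refine Set.eq_univ_of_forall fun x => ?_
  by_cases hx : x = v
  · exact Or.inl hx
  · obtain ⟨u, h, hxu⟩ := hc.exists_mem_branch hx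
    exact Or.inr ⟨u, trivial, h, hxu⟩

lemma Connected.sector_union_compl (hc : S.Connected) :
    S.sector v T ∪ S.sector v Tᶜ = Set.univ := by
  rw [sector_union, Set.union_compl_self, hc.sector_univ]

lemma IsTree.sector_inter_sector_compl (hS : S.IsTree) :
    S.sector v T ∩ S.sector v Tᶜ = {v} := by
  refine Set.eq_singleton_iff_unique_mem.mpr ⟨⟨Or.inl rfl, Or.inl rfl⟩, ?_⟩
  rintro x ⟨hx | ⟨u, hu, h, hxu⟩, hx' | ⟨u', hu', h', hxu'⟩⟩
  · exact hx
  · exact hx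
  · exact hx'
  · exact absurd (hS.eq_of_mem_branch_of_mem_branch h h' hxu hxu' ▸ hu) hu'

lemma IsTree.exists_insert_branch_of_adj (hS : S.IsTree) (hxy : S.Adj x y) :
    ∃ u, S.Adj v u ∧ x ∈ insert v (S.branch v u) ∧ y ∈ insert v (S.branch v u) := by
  by_cases hx : x = v
  · subst hx
    exact ⟨y, hxy, Or.inl rfl, Or.inr hxy.mem_branch⟩
  by_cases hy : y = v
  · subst hy
    exact ⟨x, hxy.symm, Or.inr hxy.symm.mem_branch, Or.inl rfl⟩
  obtain ⟨u, h, hxu⟩ := hS.connected.exists_mem_branch hx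
  exact ⟨u, h, Or.inr hxu, Or.inr (hS.mem_branch_of_adj h hxu hxy hy)⟩

lemma IsTree.adj_mem_sector_or_mem_sector_compl (hS : S.IsTree) (hxy : S.Adj x y) :
    (x ∈ S.sector v T ∧ y ∈ S.sector v T) ∨ (x ∈ S.sector v Tᶜ ∧ y ∈ S.sector v Tᶜ) := by
  obtain ⟨u, h, hx, hy⟩ := hS.exists_insert_branch_of_adj (v := v) hxy
  by_cases hu : u ∈ T
  · exact Or.inl ⟨insert_branch_subset_sector hu h hx, insert_branch_subset_sector hu h hy⟩
  · exact Or.inr ⟨insert_branch_subset_sector (T := Tᶜ) hu h hx,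
      insert_branch_subset_sector (T := Tᶜ) hu h hy⟩

lemma connected_induce_of_forall_exists_walk {G : SimpleGraph V} {s : Set V} (hv : v ∈ s)
    (h : ∀ x ∈ s, ∃ p : G.Walk x v, ∀ y ∈ p.support, y ∈ s) :
    ((⊤ : G.Subgraph).induce s).Connected := by
  rw [← connected_induce_iff]
  refine G.induce_connected_of_patches v hv fun {x} hx => ?_
  obtain ⟨p, hp⟩ := h x hx
  exact ⟨{y | y ∈ p.support}, hp, p.end_mem_support, p.start_mem_support,
    p.connected_induce_support.preconnected _ _⟩

lemma Connected.connected_induce_sector (hc : S.Connected) :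
    ((⊤ : S.Subgraph).induce (S.sector v T)).Connected := by
  refine connected_induce_of_forall_exists_walk (Or.inl rfl) ?_
  rintro x (rfl | ⟨u, hu, h, hxu⟩)
  · exact ⟨Walk.nil, by simp [mem_sector]⟩
  · obtain ⟨p, hp⟩ := hc.exists_walk_support_subset_insert_branch h hxu
    exact ⟨p, fun y hy => insert_branch_subset_sector hu h (hp y hy)⟩

lemma Subgraph.induce_sup_induce_eq_top {G : SimpleGraph V} {s t : Set V}
    (hst : s ∪ t = Set.univ)
    (hadj : ∀ ⦃x y⦄, G.Adj x y → (x ∈ s ∧ y ∈ s) ∨ (x ∈ t ∧ y ∈ t)) :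
    (⊤ : G.Subgraph).induce s ⊔ (⊤ : G.Subgraph).induce t = ⊤ := by
  ext x y
  · simp [hst]
  · simp only [Subgraph.sup_adj, Subgraph.induce_adj, Subgraph.top_adj]
    have := @hadj x y
    tauto

lemma IsTree.ncard_inter_sector (hS : S.IsTree) {Q : Set V} (hQ : Q.Finite) {N : Finset V}
    (hN : ∀ u, u ∈ N ↔ S.Adj v u) (T : Set V) [DecidablePred (· ∈ T)] :
    (Q ∩ S.sector v T).ncard = (Q ∩ {v}).ncard + ∑ u ∈ N with u ∈ T, (Q ∩ S.branch v u).ncard := by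
  have hdecomp : Q ∩ S.sector v T =
      (Q ∩ {v}) ∪ ⋃ u ∈ (↑(N.filter (· ∈ T)) : Set V), Q ∩ S.branch v u := by
    ext x
    simp only [mem_sector, Set.mem_inter_iff, Set.mem_union, Set.mem_singleton_iff,
      Set.mem_iUnion, Finset.coe_filter, Set.mem_ofPred_eq, hN, exists_prop]
    constructor
    · rintro ⟨hxQ, rfl | ⟨u, hu, h, hxu⟩⟩
      exacts [Or.inl ⟨hxQ, rfl⟩, Or.inr ⟨u, ⟨h, hu⟩, hxQ, hxu⟩]
    · rintro (⟨hxQ, rfl⟩ | ⟨u, ⟨h, hu⟩, hxQ, hxu⟩)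
      exacts [⟨hxQ, Or.inl rfl⟩, ⟨hxQ, Or.inr ⟨u, hu, h, hxu⟩⟩]
  have hdisj : Disjoint (Q ∩ {v}) (⋃ u ∈ (↑(N.filter (· ∈ T)) : Set V), Q ∩ S.branch v u) := by
    simp only [Set.disjoint_iUnion_right]
    exact fun u _ => Set.disjoint_left.mpr fun x hx hxu => self_notMem_branch (hx.2 ▸ hxu.2)
  have hpair : (↑(N.filter (· ∈ T)) : Set V).PairwiseDisjoint (fun u => Q ∩ S.branch v u) := by
    intro a ha b hb hab
    simp only [Finset.coe_filter, Set.mem_ofPred_eq, hN] at ha hb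
    exact Set.disjoint_left.mpr fun x hxa hxb =>
      hab (hS.eq_of_mem_branch_of_mem_branch ha.1 hb.1 hxa.2 hxb.2)
  rw [hdecomp, Set.ncard_union_eq hdisj (hQ.inter_of_left _)
      (hQ.subset (Set.iUnion₂_subset fun _ _ => Set.inter_subset_left)),
    (Finset.finite_toSet _).ncard_biUnion (fun _ _ => hQ.inter_of_left _) hpair,
    finsum_mem_coe_finset]

/-- A vertex `v` minimising the total distance to `Q` works: moving to a neighbour `u` brings the
points of `Q` in `S.branch v u` one step closer and all other points of `Q` one step farther. -/
lemma IsTree.exists_two_mul_ncard_inter_branch_le (hS : S.IsTree) {Q : Set V} (hQ : Q.Finite) :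
    ∃ v, ∀ u, S.Adj v u → 2 * (Q ∩ S.branch v u).ncard ≤ Q.ncard := by
  classical
  have := hS.connected.nonempty
  set F := hQ.toFinset
  let f : V → ℕ := fun v => ∑ q ∈ F, S.dist q v
  refine ⟨Function.argmin f, fun u h => ?_⟩
  set v := Function.argmin f
  have hstep : ∑ q ∈ F, (S.dist q u + if q ∈ S.branch v u then 1 else 0) =
      ∑ q ∈ F, (S.dist q v + if q ∉ S.branch v u then 1 else 0) := by
    refine Finset.sum_congr rfl fun q _ => ?_
    split_ifs with hq
    · exact (hS.dist_eq_add_one_of_mem_branch h hq).symm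
    · exact hS.dist_eq_add_one_of_notMem_branch h hq
  rw [Finset.sum_add_distrib, Finset.sum_add_distrib, ← Finset.card_filter,
    ← Finset.card_filter] at hstep
  have hmin : ∑ q ∈ F, S.dist q v ≤ ∑ q ∈ F, S.dist q u := Function.argmin_le f u
  have hsplit := Finset.card_filter_add_card_filter_not (s := F) (· ∈ S.branch v u)
  have hbranch : (Q ∩ S.branch v u).ncard = (F.filter (· ∈ S.branch v u)).card := by
    rw [← Set.ncard_coe_finset, Finset.coe_filter]
    congr 1
    ext x
    simp [F]
  have hF : Q.ncard = F.card := Set.ncard_eq_toFinset_card Q hQ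
  omega

end SimpleGraph


namespace SimpleGraph

variable {V : Type*} {S : SimpleGraph V}

lemma IsTree.exists_sector_split [S.LocallyFinite] (hS : S.IsTree) {Q : Set V} (hQ : Q.Finite) :
    ∃ v T, Q.ncard ≤ 3 * (Q ∩ S.sector v T).ncard ∧ Q.ncard ≤ 3 * (Q ∩ S.sector v Tᶜ).ncard := by
  classical
  obtain ⟨v, hv⟩ := hS.exists_two_mul_ncard_inter_branch_le hQ
  have hN : ∀ u, u ∈ S.neighborFinset v ↔ S.Adj v u := S.mem_neighborFinset v
  have hcount := hS.ncard_inter_sector hQ hN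
  have htot : (Q ∩ {v}).ncard + ∑ u ∈ S.neighborFinset v, (Q ∩ S.branch v u).ncard = Q.ncard := by
    simpa [hS.connected.sector_univ] using (hcount Set.univ).symm
  obtain ⟨T, hTN, hT, hTc⟩ :=
    Finset.exists_balanced_split _ _ _ _ htot fun u hu => hv u ((hN u).mp hu)
  refine ⟨v, T, ?_, ?_⟩
  · simpa only [hcount, Finset.mem_coe, Finset.filter_mem_eq_inter,
      Finset.inter_eq_right.mpr hTN] using hT
  · simpa only [hcount, Set.mem_compl_iff, Finset.mem_coe, Finset.filter_notMem_eq_sdiff]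
      using hTc

lemma IsTree.divides_induce_sector (hS : S.IsTree) (v : V) (T : Set V) :
    Divides ((⊤ : S.Subgraph).induce (S.sector v T)) ((⊤ : S.Subgraph).induce (S.sector v Tᶜ)) :=
  ⟨hS.connected.connected_induce_sector, hS.connected.connected_induce_sector,
    Subgraph.induce_sup_induce_eq_top hS.connected.sector_union_compl
      fun _ _ => hS.adj_mem_sector_or_mem_sector_compl,
    v, hS.sector_inter_sector_compl⟩

end SimpleGraph

/-- For every tree `S` and every subset `Q ⊆ V(S)` there exist two subtrees `S₁`, `S₂`
which divide `S` and satisfy `|Q ∩ V(S₁)| ≥ |Q|/3` and `|Q ∩ V(S₂)| ≥ |Q|/3`. -/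
theorem statement_5 {V : Type*} [Fintype V] (S : SimpleGraph V) (hS : S.IsTree)
    (Q : Set V) :
    ∃ A B : S.Subgraph, Divides A B ∧
      (Q.ncard : ℝ) / 3 ≤ (Q ∩ A.verts).ncard ∧
      (Q.ncard : ℝ) / 3 ≤ (Q ∩ B.verts).ncard := by
  classical
  obtain ⟨v, T, hA, hB⟩ := hS.exists_sector_split Q.toFinite
  refine ⟨_, _, hS.divides_induce_sector v T, ?_, ?_⟩
  · rw [SimpleGraph.Subgraph.induce_verts, div_le_iff₀ three_pos, mul_comm]
    exact_mod_cast hA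
  · rw [SimpleGraph.Subgraph.induce_verts, div_le_iff₀ three_pos, mul_comm]
    exact_mod_cast hB
end
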